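/- arXiv:math/0511422 — 4 statements merged into one kernel-verified Lean document; each statement's English description precedes it below -/
import Mathlib

section
/- If G(x) and C(x) are formal power series with G(x) = exp(Σ_{k≥1} C(x^k)/k), C(0) = 0, and C has nonnegative integer coefficients, then G has nonnegative integer coefficients; moreover [x^n]G counts multisets of objects whose sizes sum to n when [x^m]C counts objects of size m. -/
/-- The formal power series `Σ_{k≥1} C(x^k)/k`, where `C` has zero constant
coefficient; the `n`-th coefficient is `Σ_{k ∣ n} [x^{n/k}]C / k`. -/
noncomputable def divLogSum (C : PowerSeries ℚ) : PowerSeries ℚ :=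
  PowerSeries.mk fun n => ∑ k ∈ n.divisors, PowerSeries.coeff (n / k) C / k

/-- The exponential `exp F` of a formal power series `F` with zero constant
term, defined coefficientwise by `[x^n] exp F = Σ_j [x^n] F^j / j!`. -/
noncomputable def expPS (F : PowerSeries ℚ) : PowerSeries ℚ :=
  PowerSeries.mk fun n =>
    ∑ j ∈ Finset.range (n + 1), PowerSeries.coeff n (F ^ j) / (Nat.factorial j)


open PowerSeries Finset in
lemma coeff_pow_eq_zero {F : PowerSeries ℚ} (h0 : constantCoeff F = 0)
    {m i : ℕ} (h : m < i) : coeff m (F ^ i) = 0 := by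
  induction i generalizing m with
  | zero => omega
  | succ i ih =>
    rw [pow_succ, coeff_mul]
    apply Finset.sum_eq_zero
    rintro ⟨p, q⟩ hpq
    rw [Finset.HasAntidiagonal.mem_antidiagonal] at hpq
    rcases Nat.eq_zero_or_pos q with hq | hq
    · subst hq
      rw [coeff_zero_eq_constantCoeff, h0, mul_zero]
    · have : p < i := by omega
      rw [ih this, zero_mul]

open PowerSeries Finset in
lemma expPS_coeff_eq {F : PowerSeries ℚ} (h0 : constantCoeff F = 0)
    {n m : ℕ} (h : n < m) :
    coeff n (expPS F) = ∑ j ∈ range m, coeff n (F ^ j) / (Nat.factorial j) := by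
  rw [expPS, coeff_mk]
  apply Finset.sum_subset
  · intro j hj; rw [mem_range] at *; omega
  · intro j _ hj
    rw [mem_range, not_lt] at hj
    rw [coeff_pow_eq_zero h0 (by omega), zero_div]

open PowerSeries in
lemma expPS_coeff_zero {F : PowerSeries ℚ} (h0 : constantCoeff F = 0) :
    coeff 0 (expPS F) = 1 := by
  rw [expPS_coeff_eq h0 (show (0:ℕ) < 1 by norm_num)]
  simp

open PowerSeries Finset in
lemma expPS_recurrence {F : PowerSeries ℚ} (h0 : constantCoeff F = 0)
    {n : ℕ} (hn : 1 ≤ n) :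
    (n : ℚ) * coeff n (expPS F) =
      ∑ p ∈ range n, (((n - p : ℕ) : ℚ) * coeff (n - p) F) * coeff p (expPS F) := by
  have key : ∀ j : ℕ, (n : ℚ) * coeff n (F ^ j) =
      (j : ℚ) * ∑ pq ∈ Finset.HasAntidiagonal.antidiagonal (n - 1),
        coeff pq.1 (F ^ (j - 1)) * (coeff (pq.2 + 1) F * (pq.2 + 1)) := by
    intro j
    have hd : coeff (n - 1) (PowerSeries.derivative ℚ (F ^ j)) = (n : ℚ) * coeff n (F ^ j) := by
      rw [PowerSeries.coeff_derivative, Nat.sub_add_cancel hn, Nat.cast_sub hn]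
      ring
    rw [← hd, Derivation.leibniz_pow, smul_eq_mul, map_nsmul, nsmul_eq_mul, coeff_mul]
    congr 1
    apply Finset.sum_congr rfl
    rintro ⟨p, q⟩ _
    rw [PowerSeries.coeff_derivative]
  -- expand g n
  rw [expPS_coeff_eq h0 (Nat.lt_succ_self n), Finset.mul_sum]
  have step1 : ∀ j ∈ range (n + 1),
      (n : ℚ) * (coeff n (F ^ j) / (Nat.factorial j)) =
      (j : ℚ) / (Nat.factorial j) * ∑ pq ∈ Finset.HasAntidiagonal.antidiagonal (n - 1),
        coeff pq.1 (F ^ (j - 1)) * (coeff (pq.2 + 1) F * (pq.2 + 1)) := by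
    intro j _
    rw [div_mul_eq_mul_div, ← key j]
    ring
  rw [Finset.sum_congr rfl step1, Finset.sum_range_succ']
  simp only [Nat.cast_zero, zero_div, zero_mul, add_zero, Nat.add_sub_cancel]
  have step2 : ∀ i ∈ range n,
      ((i + 1 : ℕ) : ℚ) / (Nat.factorial (i + 1)) * ∑ pq ∈ Finset.HasAntidiagonal.antidiagonal (n - 1),
        coeff pq.1 (F ^ i) * (coeff (pq.2 + 1) F * (pq.2 + 1)) =
      ∑ pq ∈ Finset.HasAntidiagonal.antidiagonal (n - 1),
        (coeff pq.1 (F ^ i) / (Nat.factorial i)) * (coeff (pq.2 + 1) F * (pq.2 + 1)) := by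
    intro i _
    rw [Finset.mul_sum]
    apply Finset.sum_congr rfl
    intro pq _
    rw [Nat.factorial_succ]
    have : (Nat.factorial i : ℚ) ≠ 0 := Nat.cast_ne_zero.mpr (Nat.factorial_ne_zero i)
    push_cast
    field_simp
  rw [Finset.sum_congr rfl step2, Finset.sum_comm]
  have step3 : ∀ pq ∈ Finset.HasAntidiagonal.antidiagonal (n - 1),
      ∑ i ∈ range n, (coeff pq.1 (F ^ i) / (Nat.factorial i)) * (coeff (pq.2 + 1) F * (pq.2 + 1)) =
      (coeff (pq.2 + 1) F * (pq.2 + 1)) * coeff pq.1 (expPS F) := by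
    rintro ⟨p, q⟩ hpq
    rw [Finset.HasAntidiagonal.mem_antidiagonal] at hpq
    rw [← Finset.sum_mul, mul_comm, expPS_coeff_eq h0 (show p < n by omega)]
  rw [Finset.sum_congr rfl step3, Finset.Nat.sum_antidiagonal_eq_sum_range_succ_mk,
    show (n-1).succ = n by omega]
  apply Finset.sum_congr rfl
  intro p hp
  rw [Finset.mem_range] at hp
  have h1 : n - 1 - p + 1 = n - p := by omega
  rw [h1]
  have h2 : ((n - 1 - p : ℕ) : ℚ) + 1 = ((n - p : ℕ) : ℚ) := by
    rw [← Nat.cast_add_one, h1]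
  rw [h2]
  ring

open PowerSeries Finset in
lemma divLogSum_constantCoeff (C : PowerSeries ℚ) : constantCoeff (divLogSum C) = 0 := by
  rw [← coeff_zero_eq_constantCoeff, divLogSum, coeff_mk]
  simp

open PowerSeries Finset in
lemma mul_coeff_divLogSum (C : PowerSeries ℚ) (c : ℕ → ℕ) (hc : ∀ n, coeff n C = c n)
    (k : ℕ) : (k : ℚ) * coeff k (divLogSum C) = ((∑ d ∈ k.divisors, d * c d : ℕ) : ℚ) := by
  rw [divLogSum, coeff_mk, Finset.mul_sum]
  rw [← Nat.sum_div_divisors k (fun d => d * c d)]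
  push_cast
  apply Finset.sum_congr rfl
  intro j hj
  rw [Nat.mem_divisors] at hj
  have hj0 : (j : ℚ) ≠ 0 := Nat.cast_ne_zero.mpr (by rintro rfl; exact hj.2 (zero_dvd_iff.mp hj.1))
  rw [hc, Nat.cast_div hj.1 (Nat.cast_ne_zero.mpr (by rintro rfl; exact hj.2 (zero_dvd_iff.mp hj.1)))]
  field_simp


lemma nat_card_sigma {ι : Type*} [Fintype ι] {f : ι → Type*} [∀ i, Finite (f i)] :
    Nat.card (Σ i, f i) = ∑ i, Nat.card (f i) := by
  letI : ∀ i, Fintype (f i) := fun i => Fintype.ofFinite _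
  simp [Nat.card_eq_fintype_card, Fintype.card_sigma]

lemma nat_card_fiber {α : Type*} [Finite α] {ι : Type*} [Fintype ι] (f : α → ι) :
    Nat.card α = ∑ i, Nat.card {a : α // f a = i} := by
  rw [← nat_card_sigma]
  exact (Nat.card_congr (Equiv.sigmaFiberEquiv f)).symm

abbrev Obj (c : ℕ → ℕ) := Σ m : ℕ, Fin (c m)

variable {c : ℕ → ℕ}

lemma obj_size_pos (hc0 : c 0 = 0) (o : Obj c) : 1 ≤ o.1 := by
  rcases o with ⟨m, i⟩
  rcases Nat.eq_zero_or_pos m with rfl | h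
  · rw [hc0] at i; exact i.elim0
  · exact h

-- the subtype of multisets of objects of total size n
abbrev Tset (c : ℕ → ℕ) (n : ℕ) := {M : Multiset (Obj c) // (M.map Sigma.fst).sum = n}

lemma sum_count_mul (M : Multiset (Obj c)) :
    ∑ o ∈ M.toFinset, M.count o * o.1 = (M.map Sigma.fst).sum := by
  rw [Finset.sum_multiset_map_count]
  simp [smul_eq_mul]

lemma count_le (hc0 : c 0 = 0) {M : Multiset (Obj c)} {n : ℕ}
    (hM : (M.map Sigma.fst).sum = n) (o : Obj c) : M.count o ≤ n := by
  rcases Nat.eq_zero_or_pos (M.count o) with h | h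
  · omega
  · have ho : o ∈ M.toFinset := Multiset.mem_toFinset.mpr (Multiset.count_pos.mp h)
    have := Finset.single_le_sum (f := fun o : Obj c => M.count o * o.1)
      (fun _ _ => Nat.zero_le _) ho
    rw [sum_count_mul, hM] at this
    calc M.count o ≤ M.count o * o.1 := Nat.le_mul_of_pos_right _ (obj_size_pos hc0 o)
      _ ≤ n := this

lemma size_le {M : Multiset (Obj c)} {n : ℕ}
    (hM : (M.map Sigma.fst).sum = n) {o : Obj c} (ho : o ∈ M) : o.1 ≤ n := by
  have : o.1 ∈ M.map Sigma.fst := Multiset.mem_map_of_mem _ ho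
  have := Multiset.single_le_sum (fun x _ => Nat.zero_le x) _ this
  omega

lemma tFinite (hc0 : c 0 = 0) (n : ℕ) : Finite (Tset c n) := by
  apply Finite.of_injective
    (f := fun M : Tset c n =>
      fun o : Σ m : Fin (n+1), Fin (c m) =>
        (⟨M.1.count ⟨o.1, o.2⟩, Nat.lt_succ_of_le (count_le hc0 M.2 _)⟩ : Fin (n+1)))
  intro M M' h
  apply Subtype.ext
  ext o
  rcases Nat.lt_or_ge o.1 (n+1) with hlt | hge
  · have := congrFun h ⟨⟨o.1, hlt⟩, o.2⟩
    simpa [Fin.mk.injEq] using this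
  · rw [Multiset.count_eq_zero_of_notMem, Multiset.count_eq_zero_of_notMem]
    · intro hmem; have := size_le M'.2 hmem; omega
    · intro hmem; have := size_le M.2 hmem; omega

lemma card_T_zero (hc0 : c 0 = 0) : Nat.card (Tset c 0) = 1 := by
  have : Unique (Tset c 0) := by
    refine ⟨⟨⟨0, by simp⟩⟩, ?_⟩
    rintro ⟨M, hM⟩
    apply Subtype.ext
    simp only
    apply Multiset.eq_zero_of_forall_notMem
    intro o hmem
    have h1 := size_le hM hmem
    have h2 := obj_size_pos hc0 o
    omega
  exact Nat.card_unique

def Wset (M : Multiset (Obj c)) : Type :=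
  {z : Obj c × ℕ × ℕ // z.2.1 < M.count z.1 ∧ z.2.2 < z.1.1}

def wEquiv (M : Multiset (Obj c)) :
    Wset M ≃ Σ o : M.toFinset, Fin (M.count o.1) × Fin o.1.1 where
  toFun z := ⟨⟨z.1.1, Multiset.mem_toFinset.mpr (Multiset.count_pos.mp
      (Nat.lt_of_le_of_lt (Nat.zero_le _) z.2.1))⟩,
    ⟨z.1.2.1, z.2.1⟩, ⟨z.1.2.2, z.2.2⟩⟩
  invFun y := ⟨(y.1.1, y.2.1.1, y.2.2.1), y.2.1.2, y.2.2.2⟩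
  left_inv _ := rfl
  right_inv _ := rfl

instance wFinite (M : Multiset (Obj c)) : Finite (Wset M) :=
  Finite.of_equiv _ (wEquiv M).symm

lemma card_W (M : Multiset (Obj c)) :
    Nat.card (Wset M) = ∑ o ∈ M.toFinset, M.count o * o.1 := by
  rw [Nat.card_congr (wEquiv M), nat_card_sigma]
  rw [← Finset.sum_coe_sort M.toFinset (fun o => M.count o * o.1)]
  apply Finset.sum_congr rfl
  intro o _
  rw [Nat.card_eq_fintype_card, Fintype.card_prod, Fintype.card_fin, Fintype.card_fin]

def Lset (c : ℕ → ℕ) (n : ℕ) : Type :=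
  {x : Multiset (Obj c) × Obj c × ℕ × ℕ //
    (x.1.map Sigma.fst).sum = n ∧ x.2.2.1 < x.1.count x.2.1 ∧ x.2.2.2 < x.2.1.1}

def lEquiv (n : ℕ) : Lset c n ≃ Σ M : Tset c n, Wset M.1 where
  toFun x := ⟨⟨x.1.1, x.2.1⟩, ⟨x.1.2, x.2.2⟩⟩
  invFun y := ⟨(y.1.1, y.2.1), y.1.2, y.2.2⟩
  left_inv _ := rfl
  right_inv _ := rfl

lemma lFinite (hc0 : c 0 = 0) (n : ℕ) : Finite (Lset c n) := by
  haveI := tFinite hc0 n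
  exact Finite.of_equiv _ (lEquiv n).symm

lemma card_L (hc0 : c 0 = 0) (n : ℕ) :
    Nat.card (Lset c n) = Nat.card (Tset c n) * n := by
  haveI := tFinite hc0 n
  haveI : Fintype (Tset c n) := Fintype.ofFinite _
  rw [Nat.card_congr (lEquiv n), nat_card_sigma]
  calc ∑ i : Tset c n, Nat.card (Wset i.1) = ∑ _i : Tset c n, n := by
        apply Finset.sum_congr rfl
        intro M _
        rw [card_W, sum_count_mul, M.2]
    _ = Nat.card (Tset c n) * n := by
        rw [Finset.sum_const, smul_eq_mul, Finset.card_univ, Nat.card_eq_fintype_card]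

def Rset (c : ℕ → ℕ) (n : ℕ) : Type :=
  {y : Multiset (Obj c) × Obj c × ℕ × ℕ //
    (y.1.map Sigma.fst).sum + (y.2.2.1 + 1) * y.2.1.1 = n ∧ y.2.2.2 < y.2.1.1}

lemma sum_add_replicate (M : Multiset (Obj c)) (o : Obj c) (j : ℕ) :
    ((M + Multiset.replicate j o).map Sigma.fst).sum = (M.map Sigma.fst).sum + j * o.1 := by
  rw [Multiset.map_add, Multiset.sum_add, Multiset.map_replicate, Multiset.sum_replicate,
    smul_eq_mul]

def lrEquiv (n : ℕ) : Lset c n ≃ Rset c n where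
  toFun := fun ⟨(M, o, q, r), hx⟩ => ⟨(M - Multiset.replicate (q+1) o, o, q, r), by
    dsimp only at *
    obtain ⟨h1, h2, h3⟩ := hx
    have hrep : Multiset.replicate (q+1) o ≤ M := Multiset.le_count_iff_replicate_le.mp h2
    refine ⟨?_, h3⟩
    have hM : M - Multiset.replicate (q+1) o + Multiset.replicate (q+1) o = M :=
      tsub_add_cancel_of_le hrep
    have := sum_add_replicate (M - Multiset.replicate (q+1) o) o (q+1)
    rw [hM, h1] at this
    omega⟩
  invFun := fun ⟨(M', o, q, r), hy⟩ => ⟨(M' + Multiset.replicate (q+1) o, o, q, r), by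
    dsimp only at *
    obtain ⟨h1, h2⟩ := hy
    refine ⟨?_, ?_, h2⟩
    · rw [sum_add_replicate]; exact h1
    · rw [Multiset.count_add, Multiset.count_replicate_self]; omega⟩
  left_inv := fun ⟨(M, o, q, r), hx⟩ => by
    apply Subtype.ext
    simp only
    have hrep : Multiset.replicate (q+1) o ≤ M := Multiset.le_count_iff_replicate_le.mp hx.2.1
    rw [tsub_add_cancel_of_le hrep]
  right_inv := fun ⟨(M', o, q, r), hy⟩ => by
    apply Subtype.ext
    simp only
    rw [add_tsub_cancel_right]

def f1 (hc0 : c 0 = 0) (n : ℕ) (y : Rset c n) : Fin n :=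
  ⟨(y.1.1.map Sigma.fst).sum, by
    obtain ⟨⟨M', o, q, r⟩, h1, h2⟩ := y
    simp only [Prod.fst, Prod.snd] at h1 h2 ⊢
    have ho := obj_size_pos hc0 o
    have : 1 ≤ (q + 1) * o.1 := Nat.mul_pos (Nat.succ_pos q) ho
    omega⟩

def f2 (hc0 : c 0 = 0) (n : ℕ) (p : Fin n) (z : {y : Rset c n // f1 hc0 n y = p}) :
    ↥((n - (p : ℕ)).divisors) :=
  ⟨z.1.1.2.1.1, by
    obtain ⟨⟨⟨M', o, q, r⟩, h1, h2⟩, hp⟩ := z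
    simp only [Prod.fst, Prod.snd] at h1 h2 ⊢
    have hsum : (M'.map Sigma.fst).sum = (p : ℕ) := congrArg Fin.val hp
    have ho := obj_size_pos hc0 o
    have hpn : (p : ℕ) < n := p.isLt
    have h4 : n - (p : ℕ) = (q + 1) * o.1 := by omega
    rw [Nat.mem_divisors]
    constructor
    · rw [h4]; exact Dvd.intro_left _ rfl
    · have : 1 ≤ (q + 1) * o.1 := Nat.mul_pos (Nat.succ_pos q) ho
      omega⟩

def fibEquiv (hc0 : c 0 = 0) (n : ℕ) (p : Fin n) (d : ↥((n - (p : ℕ)).divisors)) :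
    {z : {y : Rset c n // f1 hc0 n y = p} // f2 hc0 n p z = d} ≃
      Tset c (p : ℕ) × Fin (c (d : ℕ)) × Fin (d : ℕ) where
  toFun z :=
    ⟨⟨z.1.1.1.1, congrArg Fin.val z.1.2⟩,
     ⟨(z.1.1.1.2.1.2 : ℕ), by
        have hval : z.1.1.1.2.1.1 = (d : ℕ) := congrArg Subtype.val z.2
        rw [← hval]; exact z.1.1.1.2.1.2.isLt⟩,
     ⟨z.1.1.1.2.2.2, by
        have hval : z.1.1.1.2.1.1 = (d : ℕ) := congrArg Subtype.val z.2
        rw [← hval]; exact z.1.1.2.2⟩⟩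
  invFun w :=
    ⟨⟨⟨(w.1.1, ⟨(d : ℕ), w.2.1⟩, (n - (p : ℕ)) / (d : ℕ) - 1, (w.2.2 : ℕ)), by
        have hd := d.2
        rw [Nat.mem_divisors] at hd
        have hd0 : 0 < (d : ℕ) := Nat.pos_of_dvd_of_pos hd.1 (Nat.pos_of_ne_zero hd.2)
        have hj : 1 ≤ (n - (p : ℕ)) / (d : ℕ) :=
          Nat.one_le_div_iff hd0 |>.mpr (Nat.le_of_dvd (Nat.pos_of_ne_zero hd.2) hd.1)
        have hjd : ((n - (p : ℕ)) / (d : ℕ)) * (d : ℕ) = n - (p : ℕ) :=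
          Nat.div_mul_cancel hd.1
        refine ⟨?_, w.2.2.isLt⟩
        dsimp only
        rw [w.1.2]
        have hpn : (p : ℕ) < n := p.isLt
        have heq : (n - (p : ℕ)) / (d : ℕ) - 1 + 1 = (n - (p : ℕ)) / (d : ℕ) := by omega
        rw [heq, hjd]
        omega⟩, by
      apply Fin.ext
      exact w.1.2⟩, by
      apply Subtype.ext
      rfl⟩
  left_inv z := by
    obtain ⟨D, hdmem⟩ := d
    obtain ⟨⟨⟨⟨M', o, q, r⟩, h1, h2⟩, hp⟩, hd⟩ := z
    have hval : o.1 = D := congrArg Subtype.val hd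
    apply Subtype.ext
    apply Subtype.ext
    apply Subtype.ext
    obtain ⟨m, i⟩ := o
    dsimp only at hval
    subst hval
    have hsum : (M'.map Sigma.fst).sum = (p : ℕ) := congrArg Fin.val hp
    have hpn : (p : ℕ) < n := p.isLt
    have h4 : n - (p : ℕ) = (q + 1) * m := by
      simp only [Prod.fst, Prod.snd] at h1
      omega
    have hd0 : 0 < m := by
      rw [Nat.mem_divisors] at hdmem
      exact Nat.pos_of_dvd_of_pos hdmem.1 (Nat.pos_of_ne_zero hdmem.2)
    have hq : (n - (p : ℕ)) / m - 1 = q := by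
      rw [h4, Nat.mul_div_cancel _ hd0]
      omega
    simp [hq]
  right_inv w := rfl

lemma card_fib (hc0 : c 0 = 0) (n : ℕ) (p : Fin n) (d : ↥((n - (p : ℕ)).divisors)) :
    Nat.card {z : {y : Rset c n // f1 hc0 n y = p} // f2 hc0 n p z = d} =
      (d : ℕ) * c (d : ℕ) * Nat.card (Tset c (p : ℕ)) := by
  haveI := tFinite hc0 (p : ℕ)
  rw [Nat.card_congr (fibEquiv hc0 n p d)]
  simp only [Nat.card_prod, Nat.card_eq_fintype_card (α := Fin (c (d : ℕ))),
    Nat.card_eq_fintype_card (α := Fin (d : ℕ)), Fintype.card_fin]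
  ring

lemma card_R (hc0 : c 0 = 0) (n : ℕ) :
    Nat.card (Rset c n) =
      ∑ p ∈ Finset.range n, (∑ d ∈ (n - p).divisors, d * c d) * Nat.card (Tset c p) := by
  haveI := lFinite hc0 n
  haveI : Finite (Rset c n) := Finite.of_equiv _ (lrEquiv n)
  rw [nat_card_fiber (f1 hc0 n)]
  have hp : ∀ p : Fin n, Nat.card {y : Rset c n // f1 hc0 n y = p} =
      (∑ d ∈ (n - (p : ℕ)).divisors, d * c d) * Nat.card (Tset c (p : ℕ)) := by
    intro p
    rw [nat_card_fiber (f2 hc0 n p)]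
    rw [Finset.sum_congr rfl (fun d _ => card_fib hc0 n p d)]
    rw [Finset.sum_coe_sort ((n - (p : ℕ)).divisors)
      (fun d => d * c d * Nat.card (Tset c (p : ℕ)))]
    rw [← Finset.sum_mul]
  rw [Finset.sum_congr rfl (fun p _ => hp p)]
  exact Fin.sum_univ_eq_sum_range
    (fun p => (∑ d ∈ (n - p).divisors, d * c d) * Nat.card (Tset c p)) n

lemma comb_rec (hc0 : c 0 = 0) (n : ℕ) :
    Nat.card (Tset c n) * n =
      ∑ p ∈ Finset.range n, (∑ d ∈ (n - p).divisors, d * c d) * Nat.card (Tset c p) := by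
  rw [← card_L hc0 n, Nat.card_congr (lrEquiv n), card_R hc0 n]


open PowerSeries in
/-- Euler transform / multiset construction: if `C(x)` has nonnegative integer
coefficients `c n`, `C(0) = 0`, and `G(x) = exp(Σ_{k≥1} C(x^k)/k)`, then the
coefficients of `G` are nonnegative integers; namely `[x^n]G` is the number of
multisets of objects (where there are `c m` objects of size `m`) whose sizes
sum to `n`. -/
theorem euler_transform_counts_multisets (C G : PowerSeries ℚ) (c : ℕ → ℕ)
    (hc : ∀ n, PowerSeries.coeff n C = c n) (hc0 : c 0 = 0)
    (hG : G = expPS (divLogSum C)) :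
    ∀ n : ℕ, PowerSeries.coeff n G =
      Nat.card {M : Multiset (Σ m : ℕ, Fin (c m)) // (M.map Sigma.fst).sum = n} := by
  subst hG
  have hF0 : constantCoeff (divLogSum C) = 0 := divLogSum_constantCoeff C
  intro n
  induction n using Nat.strong_induction_on with
  | _ n ih =>
    show coeff n (expPS (divLogSum C)) = (Nat.card (Tset c n) : ℚ)
    rcases Nat.eq_zero_or_pos n with rfl | hn
    · rw [expPS_coeff_zero hF0, card_T_zero hc0]
      norm_num
    · have hrec := expPS_recurrence hF0 hn
      have hterm : ∀ p ∈ Finset.range n,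
          (((n - p : ℕ) : ℚ) * coeff (n - p) (divLogSum C)) * coeff p (expPS (divLogSum C))
          = ((∑ d ∈ (n - p).divisors, d * c d : ℕ) : ℚ) * (Nat.card (Tset c p) : ℚ) := by
        intro p hp
        rw [Finset.mem_range] at hp
        rw [mul_coeff_divLogSum C c hc (n - p), ih p hp]
      rw [Finset.sum_congr rfl hterm] at hrec
      have hcast : (∑ p ∈ Finset.range n,
          ((∑ d ∈ (n - p).divisors, d * c d : ℕ) : ℚ) * (Nat.card (Tset c p) : ℚ))
          = (Nat.card (Tset c n) : ℚ) * (n : ℚ) := by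
        have h := congrArg (fun k : ℕ => (k : ℚ)) (comb_rec (c := c) hc0 n)
        push_cast at h ⊢
        rw [← h]
      rw [hcast] at hrec
      have hn0 : (n : ℚ) ≠ 0 := Nat.cast_ne_zero.mpr (by omega)
      exact mul_left_cancel₀ hn0 (hrec.trans (mul_comm _ _))
end

section
/- A two-connected outerplanar graph on n ≥ 3 vertices has a unique Hamiltonian cycle. -/
/-- A finite graph is outerplanar iff it admits a one-page book embedding:
the vertices can be placed injectively on a line (equivalently, a circle) so
that no two edges cross. -/
def IsOuterplanar {V : Type*} (G : SimpleGraph V) : Prop :=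
  ∃ p : V → ℕ, Function.Injective p ∧
    ∀ a b c d : V, G.Adj a b → G.Adj c d → ¬(p a < p c ∧ p c < p b ∧ p b < p d)

/-- A graph is two-connected if it has at least 3 vertices and removing any
single vertex leaves it connected. -/
def TwoConnected {V : Type*} (G : SimpleGraph V) : Prop :=
  3 ≤ Nat.card V ∧ ∀ v : V, ((⊤ : G.Subgraph).deleteVerts {v}).coe.Connected

open SimpleGraph Walk

lemma crossWalk {V : Type*} {H : SimpleGraph V} : ∀ {s t : V} (w : H.Walk s t) (P : V → Prop),
    P s → ¬ P t → ∃ (u x : V), H.Adj u x ∧ P u ∧ ¬ P x ∧ x ∈ w.support ∧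
      ∃ wp : H.Walk s u, (∀ y ∈ wp.support, P y) ∧ wp.support ⊆ w.support := by
  intro s t w
  induction w with
  | nil => intro P hs ht; exact absurd hs ht
  | @cons s b t h w ih =>
    intro P hs ht
    by_cases hb : P b
    · obtain ⟨u, x, hadj, hu, hx, hxmem, wp, hwp, hsub⟩ := ih P hb ht
      refine ⟨u, x, hadj, hu, hx, by simp [hxmem], Walk.cons h wp, ?_, ?_⟩
      · intro y hy
        rw [support_cons] at hy
        rcases List.mem_cons.1 hy with hy' | hy'
        · exact hy' ▸ hs
        · exact hwp y hy'
      · intro y hy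
        rw [support_cons] at hy ⊢
        rcases List.mem_cons.1 hy with hy' | hy'
        · simp [hy']
        · exact List.mem_cons_of_mem _ (hsub hy')
    · exact ⟨s, b, h, hs, hb, by simp, Walk.nil, by simp [hs], by simp⟩

lemma path_concat_decomp {V : Type*} {G : SimpleGraph V} {b : V} :
    ∀ {u a : V} (t : G.Walk u a), t.IsPath → a ≠ b → s(a, b) ∈ t.edges →
      ∃ (t' : G.Walk u b) (h2 : G.Adj b a), t = t'.concat h2 := by
  intro u a t
  induction t with
  | nil => simp
  | @cons u v a h rest ih =>
    intro hp hab he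
    rw [Walk.cons_isPath_iff] at hp
    rw [Walk.edges_cons, List.mem_cons] at he
    rcases he with he | he
    · rw [Sym2.eq_iff] at he
      rcases he with ⟨ha, hb⟩ | ⟨ha, hb⟩
      · exact absurd (ha ▸ rest.end_mem_support) hp.2
      · subst hb
        have hnil : rest.copy ha.symm rfl = Walk.nil := by
          rw [← Walk.isPath_iff_eq_nil, Walk.isPath_copy]
          exact hp.1
        have hrest : rest = Walk.nil.copy ha rfl := by
          rw [← hnil]; simp
        subst ha
        refine ⟨Walk.nil, h, ?_⟩
        rw [hrest]
        simp [Walk.concat_nil]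
    · obtain ⟨t', h2, ht'⟩ := ih hp.1 hab he
      exact ⟨Walk.cons h t', h2, by rw [ht', Walk.concat_cons]⟩

lemma chain_const {V : Type*} (R : V → V → Prop) (P Q : V → Prop)
    (hstep : ∀ u v, R u v → Q u → Q v → (P u ↔ P v)) :
    ∀ (l : List V), l.Chain' R → (∀ w ∈ l, Q w) → ∀ m ∈ l, ∀ z ∈ l, (P m ↔ P z) := by
  intro l
  induction l with
  | nil => intro _ _ m hm; simp at hm
  | cons w rest ih =>
    intro hchain hQ
    have key : ∀ u ∈ w :: rest, (P w ↔ P u) := by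
      clear ih
      induction rest generalizing w with
      | nil => intro u hu; simp at hu; rw [hu]
      | cons x rest ih2 =>
        intro u hu
        rw [List.Chain', List.isChain_cons_cons] at hchain
        have hwx : P w ↔ P x :=
          hstep w x hchain.1 (hQ w (by simp)) (hQ x (by simp))
        rcases List.mem_cons.1 hu with h | h
        · rw [h]
        · exact hwx.trans (ih2 x hchain.2 (fun y hy => hQ y (List.mem_cons_of_mem _ hy)) u h)
    intro m hm z hz
    exact (key m hm).symm.trans (key z hz)

lemma walk_of_chain {V : Type*} {G : SimpleGraph V} :
    ∀ (l : List V) (u v : V), List.Chain G.Adj u l →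
      (u :: l).getLast (List.cons_ne_nil _ _) = v →
      ∃ w : G.Walk u v, w.support = u :: l ∧
        w.edges = List.zipWith (fun a b => s(a, b)) (u :: l) l := by
  intro l
  induction l with
  | nil =>
    intro u v _ hlast
    simp at hlast
    subst hlast
    exact ⟨Walk.nil, by simp, by simp⟩
  | cons x l' ih =>
    intro u v hchain hlast
    rw [List.Chain, List.isChain_cons_cons] at hchain
    rw [List.getLast_cons (List.cons_ne_nil x l')] at hlast
    obtain ⟨w', hs, he⟩ := ih x v hchain.2 hlast
    refine ⟨Walk.cons hchain.1 w', by simp [hs], ?_⟩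
    simp only [Walk.edges_cons, he]
    rfl

lemma exists_third {V : Type} [Fintype V] [DecidableEq V] (hcard : 3 ≤ Fintype.card V)
    (a b : V) : ∃ z : V, z ≠ a ∧ z ≠ b := by
  by_contra h
  push_neg at h
  have hsub : (Finset.univ : Finset V) ⊆ {a, b} := by
    intro z _
    simp only [Finset.mem_insert, Finset.mem_singleton]
    by_cases hz : z = a
    · exact Or.inl hz
    · exact Or.inr (h z hz)
  have := Finset.card_le_card hsub
  have h2 : ({a, b} : Finset V).card ≤ 2 :=
    (Finset.card_insert_le _ _).trans (by simp)
  rw [Finset.card_univ] at this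
  omega

lemma walk_avoiding {V : Type} {G : SimpleGraph V}
    (hconn : ∀ v : V, ((⊤ : G.Subgraph).deleteVerts {v}).coe.Connected)
    (x s t : V) (hs : s ≠ x) (ht : t ≠ x) :
    Nonempty (((⊤ : G.Subgraph).deleteVerts {x}).coe.Walk
      ⟨s, by simp [hs]⟩ ⟨t, by simp [ht]⟩) :=
  (hconn x).preconnected _ _

lemma coe_adj_val {V : Type} {G : SimpleGraph V} {x : V}
    {u w : ↑(((⊤ : G.Subgraph).deleteVerts {x}).verts)}
    (h : ((⊤ : G.Subgraph).deleteVerts {x}).coe.Adj u w) : G.Adj u.val w.val := by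
  have h' : ((⊤ : G.Subgraph).deleteVerts {x}).Adj u.val w.val := h
  exact h'.adj_sub

lemma vert_ne {V : Type} {G : SimpleGraph V} {x : V}
    (u : ↑(((⊤ : G.Subgraph).deleteVerts {x}).verts)) : u.val ≠ x := by
  have := u.property
  simp only [SimpleGraph.Subgraph.deleteVerts_verts, SimpleGraph.Subgraph.verts_top,
    Set.mem_diff, Set.mem_singleton_iff] at this
  exact this.2

lemma min_max_adj {V : Type} [Fintype V] [DecidableEq V] [LinearOrder V] {G : SimpleGraph V}
    (hnc : ∀ a b c d : V, G.Adj a b → G.Adj c d → a < c → c < b → b < d → False)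
    (hcard : 3 ≤ Fintype.card V)
    (hconn : ∀ v : V, ((⊤ : G.Subgraph).deleteVerts {v}).coe.Connected)
    {a b : V} (ha : ∀ v, a ≤ v) (hb : ∀ v, v ≤ b) : G.Adj a b := by
  classical
  by_contra hnadj
  have hab : a < b := by
    rcases lt_or_eq_of_le (ha b) with h | h
    · exact h
    · exfalso
      obtain ⟨z, hz, _⟩ := exists_third hcard a a
      exact hz (le_antisymm (h ▸ hb z) (ha z))
  -- b has a neighbour
  have hNne : (Finset.univ.filter (fun v => G.Adj b v)).Nonempty := by
    obtain ⟨u₀, hu₀b, _⟩ := exists_third hcard b b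
    obtain ⟨t₀, ht₀u, ht₀b⟩ := exists_third hcard u₀ b
    obtain ⟨wk⟩ := walk_avoiding hconn u₀ b t₀ (Ne.symm hu₀b) ht₀u
    obtain ⟨u, x, hadj, hu, -, -, -⟩ :=
      crossWalk wk (fun z => z.val = b) rfl ht₀b
    have : G.Adj b x.val := hu ▸ coe_adj_val hadj
    exact ⟨_, Finset.mem_filter.2 ⟨Finset.mem_univ _, this⟩⟩
  set c₀ := (Finset.univ.filter (fun v => G.Adj b v)).min' hNne with hc₀
  have hbc₀ : G.Adj b c₀ := by
    have := Finset.min'_mem (Finset.univ.filter (fun v => G.Adj b v)) hNne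
    exact (Finset.mem_filter.1 this).2
  have hc₀min : ∀ v, G.Adj b v → c₀ ≤ v := fun v hv =>
    Finset.min'_le _ _ (Finset.mem_filter.2 ⟨Finset.mem_univ _, hv⟩)
  have hac₀ : a < c₀ := by
    rcases lt_or_eq_of_le (ha c₀) with h | h
    · exact h
    · exact absurd (h ▸ hbc₀).symm hnadj
  have hc₀b : c₀ < b := lt_of_le_of_ne (hb c₀) hbc₀.ne'
  obtain ⟨wk⟩ := walk_avoiding hconn c₀ a b (ne_of_lt hac₀) (ne_of_gt hc₀b)
  obtain ⟨u, w, hadj, hu, hw, -, -⟩ :=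
    crossWalk wk (fun z => z.val < c₀) hac₀ (by simp; exact le_of_lt hc₀b)
  have hGuw : G.Adj u.val w.val := coe_adj_val hadj
  have hwc₀ : c₀ < w.val := lt_of_le_of_ne (not_lt.1 hw) (Ne.symm (vert_ne w))
  by_cases hwb : w.val = b
  · exact absurd (hc₀min u.val (hwb ▸ hGuw.symm)) (not_le.2 hu)
  · exact hnc u.val w.val c₀ b hGuw hbc₀.symm hu hwc₀ (lt_of_le_of_ne (hb w.val) hwb)

lemma consec_adj {V : Type} [Fintype V] [DecidableEq V] [LinearOrder V] {G : SimpleGraph V}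
    (p : V → ℕ) (hlt : ∀ u v : V, u < v ↔ p u < p v)
    (hnc : ∀ a b c d : V, G.Adj a b → G.Adj c d → a < c → c < b → b < d → False)
    (hcard : 3 ≤ Fintype.card V)
    (hconn : ∀ v : V, ((⊤ : G.Subgraph).deleteVerts {v}).coe.Connected)
    {a b : V} (hab : a < b) (hbet : ∀ m : V, ¬(a < m ∧ m < b)) : G.Adj a b := by
  classical
  set F : Finset (V × V) :=
    Finset.univ.filter (fun q => G.Adj q.1 q.2 ∧ q.1 ≤ a ∧ b ≤ q.2) with hF
  have hmemF : ∀ q : V × V, q ∈ F ↔ G.Adj q.1 q.2 ∧ q.1 ≤ a ∧ b ≤ q.2 := by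
    intro q; simp [hF]
  have hFne : F.Nonempty := by
    obtain ⟨u₀, hu₀a, hu₀b⟩ := exists_third hcard a b
    obtain ⟨wk⟩ := walk_avoiding hconn u₀ a b (Ne.symm hu₀a) (Ne.symm hu₀b)
    obtain ⟨u, x, hadj, hu, hx, -, -⟩ :=
      crossWalk wk (fun z => z.val ≤ a) le_rfl (by simp [not_le.2 hab])
    have hbx : b ≤ x.val := by
      rcases not_and_or.1 (hbet x.val) with h | h
      · exact absurd (not_lt.1 h) hx
      · exact not_lt.1 h
    exact ⟨(u.val, x.val), (hmemF _).2 ⟨coe_adj_val hadj, hu, hbx⟩⟩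
  obtain ⟨q, hqF, hqmin⟩ := F.exists_min_image (fun q => p q.2 - p q.1) hFne
  obtain ⟨hAdjxy, hxa, hby⟩ := (hmemF q).1 hqF
  set x := q.1
  set y := q.2
  have hxy : x < y := lt_of_le_of_lt hxa (lt_of_lt_of_le hab hby)
  rcases lt_or_eq_of_le hxa with hxa' | hxa'
  · -- x < a : find a smaller spanning pair, contradiction
    exfalso
    have hay : a ≠ x := ne_of_gt hxa'
    have hyx : y ≠ x := ne_of_gt hxy
    obtain ⟨wk⟩ := walk_avoiding hconn x a y hay hyx
    obtain ⟨u, w, hadj, hu, hw, -, wp, hwp, hwpsub⟩ :=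
      crossWalk wk (fun z => x < z.val ∧ z.val < y)
        ⟨hxa', lt_of_lt_of_le hab hby⟩ (by simp)
    have hGuw : G.Adj u.val w.val := coe_adj_val hadj
    -- locate w
    rcases not_and_or.1 hw with hw1 | hw1
    · -- w.val ≤ x, so w.val < x since ≠
      have hwx : w.val < x := lt_of_le_of_ne (not_lt.1 hw1) (vert_ne w)
      exact hnc w.val u.val x y hGuw.symm hAdjxy hwx hu.1 hu.2
    · -- y ≤ w.val
      rcases lt_or_eq_of_le (not_lt.1 hw1) with hyw | hyw
      · exact hnc x y u.val w.val hAdjxy hGuw hu.1 hu.2 hyw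
      · -- w.val = y : edge (u, y) with x < u < y
        have hGuy : G.Adj u.val y := hyw ▸ hGuw
        rcases not_and_or.1 (hbet u.val) with h1 | h1
        · -- u.val ≤ a : smaller spanning pair (u, y)
          have h1' : u.val ≤ a := not_lt.1 h1
          have := hqmin (u.val, y) ((hmemF _).2 ⟨hGuy, h1', hby⟩)
          have e1 : p x < p u.val := (hlt _ _).1 hu.1
          have e2 : p u.val < p y := (hlt _ _).1 hu.2
          simp only at this
          omega
        · -- b ≤ u.val : prefix walk crosses the gap inside (x,y)
          have h1' : b ≤ u.val := not_lt.1 h1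
          obtain ⟨s', t', hadj2, hs', ht', ht'mem, wp2, hwp2, hwp2sub⟩ :=
            crossWalk wp (fun z => z.val ≤ a) le_rfl (by simp [not_le.2 (lt_of_lt_of_le hab h1')])
          have hs'in : x < s'.val ∧ s'.val < y := hwp s' (hwp2sub (wp2.end_mem_support))
          have ht'in : x < t'.val ∧ t'.val < y := hwp t' ht'mem
          have hbt' : b ≤ t'.val := by
            rcases not_and_or.1 (hbet t'.val) with h | h
            · exact absurd (not_lt.1 h) ht'
            · exact not_lt.1 h
          have := hqmin (s'.val, t'.val) ((hmemF _).2 ⟨coe_adj_val hadj2, hs', hbt'⟩)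
          have e1 : p x < p s'.val := (hlt _ _).1 hs'in.1
          have e2 : p t'.val < p y := (hlt _ _).1 ht'in.2
          have e3 : p s'.val < p t'.val := (hlt _ _).1 (lt_of_le_of_lt hs' (lt_of_lt_of_le hab hbt'))
          simp only at this
          omega
  · -- x = a; now consider y
    rcases lt_or_eq_of_le hby with hby' | hby'
    · -- b < y : symmetric argument, delete y, walk from b to x
      exfalso
      have hbne : b ≠ y := ne_of_lt hby'
      have hxne : x ≠ y := ne_of_lt hxy
      obtain ⟨wk⟩ := walk_avoiding hconn y b x hbne hxne
      obtain ⟨u, w, hadj, hu, hw, -, wp, hwp, hwpsub⟩ :=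
        crossWalk wk (fun z => x < z.val ∧ z.val < y)
          ⟨lt_of_le_of_lt hxa hab, hby'⟩ (by simp)
      have hGuw : G.Adj u.val w.val := coe_adj_val hadj
      rcases not_and_or.1 hw with hw1 | hw1
      · -- w.val ≤ x
        rcases lt_or_eq_of_le (not_lt.1 hw1) with hwx | hwx
        · exact hnc w.val u.val x y hGuw.symm hAdjxy hwx hu.1 hu.2
        · -- w.val = x : edge (u, x) with x < u < y
          have hGux : G.Adj u.val x := hwx ▸ hGuw
          rcases not_and_or.1 (hbet u.val) with h1 | h1
          · -- u.val ≤ a : prefix walk crosses gap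
            have h1' : u.val ≤ a := not_lt.1 h1
            obtain ⟨s', t', hadj2, hs', ht', ht'mem, wp2, hwp2, hwp2sub⟩ :=
              crossWalk wp (fun z => b ≤ z.val) le_rfl (by simp [lt_of_le_of_lt h1' hab])
            have hs'in : x < s'.val ∧ s'.val < y := hwp s' (hwp2sub (wp2.end_mem_support))
            have ht'in : x < t'.val ∧ t'.val < y := hwp t' ht'mem
            have hat' : t'.val ≤ a := by
              rcases not_and_or.1 (hbet t'.val) with h | h
              · exact not_lt.1 h
              · exact absurd (not_le.1 ht') (not_lt.2 (not_lt.1 h))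
            have := hqmin (t'.val, s'.val) ((hmemF _).2 ⟨(coe_adj_val hadj2).symm, hat', hs'⟩)
            have e1 : p x < p t'.val := (hlt _ _).1 ht'in.1
            have e2 : p s'.val < p y := (hlt _ _).1 hs'in.2
            have e3 : p t'.val < p s'.val := (hlt _ _).1 (lt_of_le_of_lt hat' (lt_of_lt_of_le hab hs'))
            simp only at this
            omega
          · -- b ≤ u.val : smaller spanning pair (x, u)
            have h1' : b ≤ u.val := not_lt.1 h1
            have := hqmin (x, u.val) ((hmemF _).2 ⟨hGux.symm, hxa, h1'⟩)
            have e1 : p u.val < p y := (hlt _ _).1 hu.2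
            have e2 : p x < p u.val := (hlt _ _).1 hu.1
            simp only at this
            omega
      · -- y ≤ w.val, so y < w.val since ≠ y
        have hyw : y < w.val := lt_of_le_of_ne (not_lt.1 hw1) (Ne.symm (vert_ne w))
        exact hnc x y u.val w.val hAdjxy hGuw hu.1 hu.2 hyw
    · -- x = a, y = b
      rw [← hxa', hby']
      exact hAdjxy

lemma support_getLast {V : Type*} {G : SimpleGraph V} {u v : V} (q : G.Walk u v) :
    q.support.getLast (q.support_ne_nil) = v := by
  induction q with
  | nil => simp
  | cons h w ih => simpa [Walk.support_cons, List.getLast_cons w.support_ne_nil] using ih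

lemma ham_rotate {V : Type} [DecidableEq V] {G : SimpleGraph V} {v u : V} {c : G.Walk v v}
    (hc : c.IsHamiltonianCycle) (hu : u ∈ c.support) : (c.rotate u hu).IsHamiltonianCycle := by
  rw [Walk.isHamiltonianCycle_iff_isCycle_and_support_count_tail_eq_one] at *
  refine ⟨hc.1.rotate hu, fun a => ?_⟩
  rw [List.Perm.count_eq ((c.support_rotate u hu).perm)]
  exact hc.2 a

lemma ham_split {V : Type} [DecidableEq V] {G : SimpleGraph V} {a b : V} (c' : G.Walk a a)
    (hc : c'.IsHamiltonianCycle) (hne : a ≠ b) (he : s(a, b) ∈ c'.edges) :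
    ∃ q : G.Walk b a, q.IsPath ∧ (∀ w, w ∈ q.support) := by
  cases c' with
  | nil => simp at he
  | @cons _ v₁ _ h t =>
    have hcyc := hc.isCycle
    rw [Walk.cons_isCycle_iff] at hcyc
    obtain ⟨htpath, hent⟩ := hcyc
    have hsupall : ∀ w, w ∈ t.support := by
      intro w
      have := hc.mem_support w
      rw [Walk.support_cons] at this
      rcases List.mem_cons.1 this with h1 | h1
      · rw [h1]; exact h1 ▸ t.end_mem_support
      · exact h1
    rw [Walk.edges_cons, List.mem_cons] at he
    rcases he with he | he
    · -- first edge: b = v₁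
      rw [Sym2.eq_iff] at he
      rcases he with ⟨-, hb⟩ | ⟨ha, hb⟩
      · subst hb
        exact ⟨t, htpath, hsupall⟩
      · exact absurd hb.symm hne
    · -- last edge case
      obtain ⟨t', h2, ht'⟩ := path_concat_decomp t htpath hne he
      have hsupp : t.support = t'.support ++ [a] := by
        rw [ht', Walk.support_concat]
      have htnodup : t.support.Nodup := htpath.support_nodup
      rw [hsupp] at htnodup
      have hnd := List.nodup_append'.1 htnodup
      have hanot : a ∉ t'.support := by
        intro hmem
        exact (List.disjoint_left.1 hnd.2.2) hmem (by simp)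
      have hconspath : (Walk.cons h t').IsPath := by
        rw [Walk.cons_isPath_iff]
        exact ⟨Walk.IsPath.mk' hnd.1, hanot⟩
      refine ⟨(Walk.cons h t').reverse, hconspath.reverse, ?_⟩
      intro w
      rw [Walk.support_reverse, List.mem_reverse, Walk.support_cons]
      have := hsupall w
      rw [hsupp, List.mem_append] at this
      rcases this with h1 | h1
      · exact List.mem_cons_of_mem _ h1
      · simp at h1
        simp [h1]

lemma ham_edge_char {V : Type} [Fintype V] [DecidableEq V] [LinearOrder V] {G : SimpleGraph V}
    (hnc : ∀ a b c d : V, G.Adj a b → G.Adj c d → a < c → c < b → b < d → False)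
    {v : V} {c : G.Walk v v} (hc : c.IsHamiltonianCycle)
    {x y : V} (hxy : x < y) (he : s(x, y) ∈ c.edges) :
    (∀ m : V, ¬(x < m ∧ m < y)) ∨ (∀ z : V, x ≤ z ∧ z ≤ y) := by
  by_contra hcon
  push_neg at hcon
  obtain ⟨⟨m, hm1, hm2⟩, z, hz⟩ := hcon
  have hAdjxy : G.Adj x y := c.edges_subset_edgeSet he
  have hzout : z < x ∨ y < z := by
    rcases lt_or_ge z x with h | h
    · exact Or.inl h
    · exact Or.inr (hz h)
  -- rotate the cycle to x and split off the edge s(x,y)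
  have hx : x ∈ c.support := hc.mem_support x
  have hc' := ham_rotate hc hx
  have he' : s(x, y) ∈ (c.rotate x hx).edges := (c.rotate_edges x hx).perm.mem_iff.2 he
  obtain ⟨q, hqpath, hqall⟩ := ham_split (c.rotate x hx) hc' (ne_of_lt hxy) he'
  -- q : G.Walk y x, a spanning path; its interior avoids x and y
  set l := q.support with hl
  have hchain : l.Chain' G.Adj := q.isChain_adj_support
  have hnodup : l.Nodup := hqpath.support_nodup
  have hhead : l = y :: l.tail := q.support_eq_cons
  have hlast : l.getLast (q.support_ne_nil) = x := support_getLast q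
  have htailne : l.tail ≠ [] := by
    intro h0
    have hxl : x ∈ l := hqall x
    rw [hhead, h0] at hxl
    simp at hxl
    exact (ne_of_lt hxy) hxl
  obtain ⟨c0, cs, hcons⟩ := List.exists_cons_of_ne_nil htailne
  have h0 : l.getLast? = some x := by
    rw [List.getLast?_eq_getLast_of_ne_nil q.support_ne_nil, hlast]
  have h1 : l.tail.getLast? = some x := by
    rw [hhead, hcons, List.getLast?_cons_cons] at h0
    rw [hcons]
    exact h0
  have htaileq : l.tail.dropLast ++ [x] = l.tail :=
    List.dropLast_append_getLast? x h1
  set li := l.tail.dropLast with hli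
  have hynotin : y ∉ l.tail := by
    have := hnodup
    rw [hhead] at this
    exact (List.nodup_cons.1 this).1
  have hxnotin : x ∉ li := by
    have htn : l.tail.Nodup := by
      have := hnodup; rw [hhead] at this; exact (List.nodup_cons.1 this).2
    rw [← htaileq] at htn
    have := List.nodup_append'.1 htn
    intro hmem
    exact (List.disjoint_left.1 this.2.2) hmem (by simp)
  have hmemli : ∀ w : V, w ≠ x → w ≠ y → w ∈ li := by
    intro w hwx hwy
    have : w ∈ l := hqall w
    rw [hhead] at this
    rcases List.mem_cons.1 this with h1 | h1
    · exact absurd h1 hwy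
    · rw [← htaileq] at h1
      rcases List.mem_append.1 h1 with h2 | h2
      · exact h2
      · simp at h2; exact absurd h2 hwx
  have hQ : ∀ w ∈ li, w ≠ x ∧ w ≠ y := by
    intro w hw
    constructor
    · intro h0; exact hxnotin (h0 ▸ hw)
    · intro h0
      apply hynotin
      exact List.dropLast_subset _ (h0 ▸ hw)
  have hchainli : li.Chain' G.Adj :=
    (hchain.tail).prefix (List.dropLast_prefix _)
  have hkey := chain_const G.Adj (fun w => x < w ∧ w < y) (fun w => w ≠ x ∧ w ≠ y)
    ?_ li hchainli hQ m (hmemli m (ne_of_gt hm1) (ne_of_lt hm2))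
    z (by
      rcases hzout with h | h
      · exact hmemli z (ne_of_lt h) (ne_of_lt (lt_trans h hxy))
      · exact hmemli z (ne_of_gt (lt_trans hxy h)) (ne_of_gt h))
  · rcases hzout with h | h
    · exact absurd (hkey.1 ⟨hm1, hm2⟩).1 (not_lt.2 (le_of_lt h))
    · exact absurd (hkey.1 ⟨hm1, hm2⟩).2 (not_lt.2 (le_of_lt h))
  · -- the step condition
    intro u w hadj hQu hQw
    constructor
    · rintro ⟨hu1, hu2⟩
      by_contra hw
      rcases not_and_or.1 hw with h0 | h0
      · have hwx : w < x := lt_of_le_of_ne (not_lt.1 h0) hQw.1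
        exact hnc w u x y hadj.symm hAdjxy hwx hu1 hu2
      · have hyw : y < w := lt_of_le_of_ne (not_lt.1 h0) (Ne.symm hQw.2)
        exact hnc x y u w hAdjxy hadj hu1 hu2 hyw
    · rintro ⟨hw1, hw2⟩
      by_contra hu
      rcases not_and_or.1 hu with h0 | h0
      · have hux : u < x := lt_of_le_of_ne (not_lt.1 h0) hQu.1
        exact hnc u w x y hadj hAdjxy hux hw1 hw2
      · have hyu : y < u := lt_of_le_of_ne (not_lt.1 h0) (Ne.symm hQu.2)
        exact hnc x y w u hAdjxy hadj.symm hw1 hw2 hyu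

lemma build_cycle {V : Type} [Fintype V] [DecidableEq V] [LinearOrder V] {G : SimpleGraph V}
    (p : V → ℕ) (hlt : ∀ u v : V, u < v ↔ p u < p v)
    (hnc : ∀ a b c d : V, G.Adj a b → G.Adj c d → a < c → c < b → b < d → False)
    (hcard : 3 ≤ Fintype.card V)
    (hconn : ∀ v : V, ((⊤ : G.Subgraph).deleteVerts {v}).coe.Connected) :
    ∃ (v : V) (c0 : G.Walk v v), c0.IsHamiltonianCycle ∧
      ∀ x y : V, G.Adj x y → x < y →
        ((∀ m : V, ¬(x < m ∧ m < y)) ∨ (∀ z : V, x ≤ z ∧ z ≤ y)) → s(x, y) ∈ c0.edges := by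
  classical
  set L := Finset.univ.sort (α := V) (· ≤ ·) with hLdef
  have hLsort : L.Pairwise (· < ·) := (Finset.sortedLT_sort _).pairwise
  have hLpair := List.pairwise_iff_getElem.1 hLsort
  have hLnodup : L.Nodup := Finset.sort_nodup Finset.univ (· ≤ ·)
  have hLmem : ∀ v : V, v ∈ L := fun v => (Finset.mem_sort (· ≤ ·)).2 (Finset.mem_univ v)
  have hLlen : L.length = Fintype.card V := by
    rw [hLdef, Finset.length_sort, Finset.card_univ]
  have hlen3 : 3 ≤ L.length := hLlen ▸ hcard
  have hLne : L ≠ [] := by intro h; rw [h] at hlen3; simp at hlen3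
  have hidx : ∀ v : V, ∃ (i : ℕ) (hi : i < L.length), L[i] = v := by
    intro v
    obtain ⟨i, hi, h⟩ := List.getElem_of_mem (hLmem v)
    exact ⟨i, hi, h⟩
  have hchain : L.Chain' G.Adj := by
    rw [List.Chain', List.isChain_iff_getElem]
    intro i hi
    apply consec_adj p hlt hnc hcard hconn
    · exact hLpair i (i + 1) (by omega) (by omega) (by omega)
    · intro m hm
      obtain ⟨j, hj, hjm⟩ := hidx m
      subst hjm
      have h1 : i < j := by
        by_contra h0
        push_neg at h0
        rcases lt_or_eq_of_le h0 with h2 | h2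
        · exact absurd (hLpair j i hj (by omega) h2) (not_lt.2 (le_of_lt hm.1))
        · subst h2; exact lt_irrefl _ hm.1
      have h2 : j < i + 1 := by
        by_contra h0
        push_neg at h0
        rcases lt_or_eq_of_le h0 with h2 | h2
        · exact absurd (hLpair (i+1) j (by omega) hj h2) (not_lt.2 (le_of_lt hm.2))
        · subst h2; exact lt_irrefl _ hm.2
      omega
  obtain ⟨v₁, Lt, hLcons⟩ := List.exists_cons_of_ne_nil hLne
  have hchain2 : List.Chain G.Adj v₁ Lt := by rw [hLcons] at hchain; exact hchain
  set vmax := L.getLast hLne with hvmaxdef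
  have hlast' : (v₁ :: Lt).getLast (List.cons_ne_nil _ _) = vmax := by
    rw [hvmaxdef]; congr 1; exact hLcons.symm
  obtain ⟨w, hwsup, hwedges⟩ := walk_of_chain Lt v₁ vmax hchain2 hlast'
  have hwsupL : w.support = L := by rw [hwsup, hLcons]
  have hv₁0 : ∀ (h : 0 < L.length), L[0] = v₁ := by intro h; simp [hLcons]
  have hminL : ∀ v : V, v₁ ≤ v := by
    intro v
    obtain ⟨j, hj, hjv⟩ := hidx v
    rcases Nat.eq_zero_or_pos j with h0 | h0
    · subst h0; rw [← hjv, hv₁0 (by omega)]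
    · exact le_of_lt ((hv₁0 (by omega)) ▸ hjv ▸ hLpair 0 j (by omega) hj h0)
  have hvmaxget : ∀ (h : L.length - 1 < L.length), L[L.length - 1] = vmax := by
    intro h; rw [hvmaxdef, List.getLast_eq_getElem]
  have hmaxL : ∀ v : V, v ≤ vmax := by
    intro v
    obtain ⟨j, hj, hjv⟩ := hidx v
    rcases Nat.lt_or_ge j (L.length - 1) with h0 | h0
    · exact le_of_lt (hjv ▸ (hvmaxget (by omega)) ▸ hLpair j (L.length - 1) hj (by omega) h0)
    · have : j = L.length - 1 := by omega
      subst this; rw [← hjv, hvmaxget (by omega)]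
  have hadjminmax : G.Adj v₁ vmax := min_max_adj hnc hcard hconn hminL hmaxL
  have hne1 : v₁ ≠ vmax := hadjminmax.ne
  set c0 : G.Walk v₁ v₁ := w.concat hadjminmax.symm with hc0def
  have hc0sup : c0.support = L ++ [v₁] := by
    rw [hc0def, Walk.support_concat, hwsupL]
  have hc0edges : c0.edges = w.edges ++ [s(vmax, v₁)] := by
    rw [hc0def, Walk.edges_concat, List.concat_eq_append]
  have hwpath : w.IsPath := Walk.IsPath.mk' (hwsupL ▸ hLnodup)
  have hnotmem : s(vmax, v₁) ∉ w.edges := by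
    intro hmm
    obtain ⟨t', h2, ht'⟩ := path_concat_decomp w hwpath (Ne.symm hne1) hmm
    have ht'sup : w.support = t'.support ++ [vmax] := by
      rw [ht', Walk.support_concat]
    have ht'path : t'.IsPath := by
      apply Walk.IsPath.mk'
      have := hwpath.support_nodup
      rw [ht'sup] at this
      exact (List.nodup_append.1 this).1
    have ht'nil : t' = Walk.nil := Walk.isPath_iff_eq_nil.1 ht'path
    rw [ht'nil] at ht'sup
    have : w.support.length = 2 := by rw [ht'sup]; simp
    rw [hwsupL] at this
    omega
  have hLtne : v₁ ∉ Lt := by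
    have := hLnodup; rw [hLcons] at this; exact (List.nodup_cons.1 this).1
  have hLtnodup : Lt.Nodup := by
    have := hLnodup; rw [hLcons] at this; exact (List.nodup_cons.1 this).2
  have hc0tail : c0.support.tail = Lt ++ [v₁] := by
    rw [hc0sup, hLcons]; rfl
  have hcyc : c0.IsCycle := by
    refine ⟨⟨⟨?_⟩, Walk.concat_ne_nil _ _⟩, ?_⟩
    · rw [hc0edges]
      rw [List.nodup_append']
      exact ⟨hwpath.isTrail.edges_nodup, List.nodup_singleton _,
        by intro e he' he2; simp at he2; exact hnotmem (he2 ▸ he')⟩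
    · rw [hc0tail, List.nodup_append']
      refine ⟨hLtnodup, List.nodup_singleton _, ?_⟩
      intro e he' he2
      simp at he2
      exact hLtne (he2 ▸ he')
  have hham : c0.IsHamiltonianCycle := by
    rw [Walk.isHamiltonianCycle_iff_isCycle_and_support_count_tail_eq_one]
    refine ⟨hcyc, fun a => ?_⟩
    rw [hc0tail, List.count_append]
    by_cases ha : a = v₁
    · subst ha
      rw [List.count_eq_zero_of_not_mem hLtne]
      simp
    · have haLt : a ∈ Lt := by
        have := hLmem a
        rw [hLcons] at this
        rcases List.mem_cons.1 this with h1 | h1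
        · exact absurd h1 ha
        · exact h1
      rw [List.count_eq_one_of_mem hLtnodup haLt]
      simp [ha, Ne.symm ha]
  refine ⟨v₁, c0, hham, ?_⟩
  intro x y hadj hxy hcase
  rcases hcase with hbet | hext
  · -- consecutive
    obtain ⟨i, hi, hix⟩ := hidx x
    obtain ⟨j, hj, hjy⟩ := hidx y
    have hij : i < j := by
      by_contra h0
      push_neg at h0
      rcases lt_or_eq_of_le h0 with h2 | h2
      · exact absurd (hix ▸ hjy ▸ hLpair j i hj hi h2) (not_lt.2 (le_of_lt hxy))
      · subst h2; rw [hix] at hjy; exact (ne_of_lt hxy) (hjy.symm ▸ rfl)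
    have hji : j = i + 1 := by
      by_contra h0
      have h2 : i + 1 < j := by omega
      have hz := hLpair i (i+1) hi (by omega) (by omega)
      have hz2 := hLpair (i+1) j (by omega) hj h2
      exact hbet L[i+1] ⟨hix ▸ hz, hjy ▸ hz2⟩
    subst hji
    have hilen : i < (List.zipWith (fun a b => s(a, b)) L L.tail).length := by
      rw [List.length_zipWith, List.length_tail]
      omega
    have hmem : s(x, y) ∈ List.zipWith (fun a b => s(a, b)) L L.tail := by
      have : (List.zipWith (fun a b => s(a, b)) L L.tail)[i] = s(x, y) := by
        rw [List.getElem_zipWith, List.getElem_tail, hix, hjy]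
      exact this ▸ List.getElem_mem hilen
    have hLt_tail : L.tail = Lt := by rw [hLcons]; rfl
    rw [hc0edges, hwedges]
    apply List.mem_append_left
    rw [← hLcons, ← hLt_tail] at *
    exact hmem
  · -- extreme pair
    have hxv : x = v₁ := le_antisymm (hext v₁).1 (hminL x)
    have hyv : y = vmax := le_antisymm (hmaxL y) (hext vmax).2
    rw [hc0edges]
    apply List.mem_append_right
    rw [hxv, hyv, Sym2.eq_swap]
    simp

/-- A two-connected outerplanar graph (on `n ≥ 3` vertices) has a unique
Hamiltonian cycle: a Hamiltonian cycle exists, and any two Hamiltonian cycles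
have the same edge set. -/
theorem twoConnected_outerplanar_unique_hamiltonian_cycle
    {V : Type} [Fintype V] [DecidableEq V] (G : SimpleGraph V)
    (hop : IsOuterplanar G) (h2c : TwoConnected G) :
    (∃ (v : V) (c : G.Walk v v), c.IsHamiltonianCycle) ∧
    ∀ (v w : V) (c : G.Walk v v) (d : G.Walk w w),
      c.IsHamiltonianCycle → d.IsHamiltonianCycle →
        c.edges.toFinset = d.edges.toFinset := by
  classical
  obtain ⟨p, hinj, hncp⟩ := hop
  obtain ⟨hcard', hconn⟩ := h2c
  have hcard : 3 ≤ Fintype.card V := by rwa [Nat.card_eq_fintype_card] at hcard'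
  letI : LinearOrder V := LinearOrder.lift' p hinj
  have hlt : ∀ u v : V, u < v ↔ p u < p v := fun u v => Iff.rfl
  have hnc : ∀ a b c d : V, G.Adj a b → G.Adj c d → a < c → c < b → b < d → False := by
    intro a b c d h1 h2 l1 l2 l3
    exact hncp a b c d h1 h2 ⟨(hlt _ _).1 l1, (hlt _ _).1 l2, (hlt _ _).1 l3⟩
  obtain ⟨v0, c0, hc0, hc0mem⟩ := build_cycle p hlt hnc hcard hconn
  refine ⟨⟨v0, c0, hc0⟩, ?_⟩
  intro v w c d hc hd
  suffices H : ∀ (u : V) (e : G.Walk u u), e.IsHamiltonianCycle →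
      e.edges.toFinset = c0.edges.toFinset by
    rw [H v c hc, H w d hd]
  intro u e he
  apply Finset.eq_of_subset_of_card_le
  · intro ed hed
    rw [List.mem_toFinset] at hed ⊢
    induction ed with
    | _ x y =>
      have hadj : G.Adj x y := e.edges_subset_edgeSet hed
      rcases lt_trichotomy x y with hxy | hxy | hxy
      · exact hc0mem x y hadj hxy (ham_edge_char hnc he hxy hed)
      · exact absurd hxy hadj.ne
      · rw [Sym2.eq_swap] at hed ⊢
        exact hc0mem y x hadj.symm hxy (ham_edge_char hnc he hxy hed)
  · have h1 : e.edges.toFinset.card = Fintype.card V := by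
      rw [List.toFinset_card_of_nodup he.isCycle.edges_nodup, Walk.length_edges,
        he.length_eq]
    have h2 : c0.edges.toFinset.card ≤ Fintype.card V := by
      calc c0.edges.toFinset.card ≤ c0.edges.length := List.toFinset_card_le _
        _ = c0.length := c0.length_edges
        _ = Fintype.card V := hc0.length_eq
    omega
end

section
/- A graph is outerplanar if and only if it contains neither K₄ nor K_{2,3} as a minor. -/
open Classical

/-- `H` is a minor of `G`: there are pairwise disjoint nonempty connected
branch sets in `G`, one for each vertex of `H`, with an edge of `G` between
the branch sets of any two adjacent vertices of `H`. -/
def IsMinorOf {W V : Type*} (H : SimpleGraph W) (G : SimpleGraph V) : Prop :=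
  ∃ B : W → Set V,
    (∀ w, (B w).Nonempty) ∧
    (Pairwise fun w w' => Disjoint (B w) (B w')) ∧
    (∀ w, (G.induce (B w)).Connected) ∧
    ∀ w w', H.Adj w w' → ∃ a ∈ B w, ∃ b ∈ B w', G.Adj a b

namespace OPF

variable {V : Type*} {W : Type*}

/-- Non-crossing of an ordering on a vertex subset. -/
def NCon (G : SimpleGraph V) (S : Set V) (p : V → ℕ) : Prop :=
  ∀ a b c d : V, a ∈ S → b ∈ S → c ∈ S → d ∈ S → G.Adj a b → G.Adj c d →
    ¬(p a < p c ∧ p c < p b ∧ p b < p d)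

/-- Outerplanarity on a vertex subset. -/
def OPon (G : SimpleGraph V) (S : Set V) : Prop :=
  ∃ p : V → ℕ, Set.InjOn p S ∧ NCon G S p

/-- Reachability within a set. -/
def RW (G : SimpleGraph V) (S : Set V) : V → V → Prop :=
  Relation.ReflTransGen (fun u v => G.Adj u v ∧ u ∈ S ∧ v ∈ S)

/-- A set is `RW`-connected. -/
def RWC (G : SimpleGraph V) (S : Set V) : Prop :=
  ∀ a ∈ S, ∀ b ∈ S, RW G S a b

/-- Minor on a vertex subset, phrased via `RW`. -/
def MinorOn (H : SimpleGraph W) (G : SimpleGraph V) (S : Set V) : Prop :=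
  ∃ B : W → Set V,
    (∀ w, B w ⊆ S) ∧
    (∀ w, (B w).Nonempty) ∧
    (Pairwise fun w w' => Disjoint (B w) (B w')) ∧
    (∀ w, RWC G (B w)) ∧
    ∀ w w', H.Adj w w' → ∃ a ∈ B w, ∃ b ∈ B w', G.Adj a b

variable {G : SimpleGraph V} {S T : Set V} {p : V → ℕ}

lemma RW.mono (hST : S ⊆ T) {a b : V} (h : RW G S a b) : RW G T a b := by
  induction h with
  | refl => exact Relation.ReflTransGen.refl
  | tail _ h ih => exact ih.tail ⟨h.1, hST h.2.1, hST h.2.2⟩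

lemma RW.symm {a b : V} (h : RW G S a b) : RW G S b a :=
  (@Relation.ReflTransGen.symmetric _ _ ⟨fun _ _ h => ⟨h.1.symm, h.2.2, h.2.1⟩⟩).symm _ _ h

lemma RW.trans {a b c : V} (h : RW G S a b) (h' : RW G S b c) : RW G S a c :=
  Relation.ReflTransGen.trans h h'

lemma RW.single {a b : V} (h : G.Adj a b) (ha : a ∈ S) (hb : b ∈ S) : RW G S a b :=
  Relation.ReflTransGen.single ⟨h, ha, hb⟩

lemma RW.mem_right {a b : V} (hab : a ≠ b) (h : RW G S a b) : b ∈ S := by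
  induction h with
  | refl => exact absurd rfl hab
  | tail _ h _ => exact h.2.2

lemma rw_of_walk : ∀ {x y : ↥S}, (G.induce S).Walk x y → RW G S x.1 y.1 := by
  intro x y w
  induction w with
  | nil => exact Relation.ReflTransGen.refl
  | @cons u v _ huv _ ih =>
    exact Relation.ReflTransGen.head ⟨huv, u.2, v.2⟩ ih

/-- Bridge: induced-subgraph connectivity equals RW-connectivity. -/
lemma connected_iff_RWC (hS : S.Nonempty) :
    (G.induce S).Connected ↔ RWC G S := by
  constructor
  · intro h a ha b hb
    obtain ⟨w⟩ := h.preconnected ⟨a, ha⟩ ⟨b, hb⟩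
    exact rw_of_walk w
  · intro h
    haveI hne : Nonempty ↥S := ⟨⟨hS.choose, hS.choose_spec⟩⟩
    refine SimpleGraph.Connected.mk ?_
    rintro ⟨a, ha⟩ ⟨b, hb⟩
    have h2 := h a ha b hb
    clear h
    induction h2 with
    | refl => exact SimpleGraph.Reachable.refl _
    | @tail b c _ hstep ih =>
      exact (ih hstep.2.1).trans
        (SimpleGraph.Adj.reachable (by exact hstep.1 : (G.induce S).Adj ⟨b, hstep.2.1⟩ ⟨c, hstep.2.2⟩))


lemma straddle {a b : V} {q : ℕ} (h : RW G S a b) (hq : ∀ s ∈ S, p s ≠ q)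
    (ha : p a < q) (hb : q < p b) :
    ∃ u v, G.Adj u v ∧ u ∈ S ∧ v ∈ S ∧ p u < q ∧ q < p v ∧ RW G S a u ∧ RW G S v b := by
  induction h using Relation.ReflTransGen.head_induction_on with
  | refl => omega
  | @head a' c hstep htail ih =>
    by_cases hc : p c < q
    · obtain ⟨u, v, h1, h2, h3, h4, h5, h6, h7⟩ := ih hc
      exact ⟨u, v, h1, h2, h3, h4, h5, Relation.ReflTransGen.head hstep h6, h7⟩
    · have : q < p c := lt_of_le_of_ne (not_lt.mp hc) (Ne.symm (hq c hstep.2.2))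
      exact ⟨a', c, hstep.1, hstep.2.1, hstep.2.2, ha, this,
        Relation.ReflTransGen.refl, htail⟩

lemma escape {w1 w2 : V} {A B : ℕ} (h : RW G S w1 w2)
    (hqA : ∀ s ∈ S, p s ≠ A) (hqB : ∀ s ∈ S, p s ≠ B)
    (h1 : A < p w1 ∧ p w1 < B) (h2 : ¬(A < p w2 ∧ p w2 < B)) :
    ∃ u v, G.Adj u v ∧ u ∈ S ∧ v ∈ S ∧ A < p u ∧ p u < B ∧ (p v < A ∨ B < p v) := by
  induction h using Relation.ReflTransGen.head_induction_on with
  | refl => exact absurd h1 h2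
  | @head a' c hstep htail ih =>
    by_cases hc : A < p c ∧ p c < B
    · exact ih hc
    · have hA := hqA c hstep.2.2
      have hB := hqB c hstep.2.2
      exact ⟨a', c, hstep.1, hstep.2.1, hstep.2.2, h1.1, h1.2, by omega⟩

variable {S0 : Set V}

/-- No connected set disjoint from a chord's endpoints can have points
strictly inside and strictly outside the chord interval. -/
lemma chordConf (hnc : NCon G S0 p) (hS : S ⊆ S0) {x y w1 w2 : V}
    (hxy : G.Adj x y) (hx0 : x ∈ S0) (hy0 : y ∈ S0)
    (hx : ∀ s ∈ S, p s ≠ p x) (hy : ∀ s ∈ S, p s ≠ p y)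
    (hpxy : p x < p y) (h : RW G S w1 w2)
    (h1 : p x < p w1 ∧ p w1 < p y) : p x < p w2 ∧ p w2 < p y := by
  by_contra h2
  obtain ⟨u, v, huv, hu, hv, q1, q2, q3⟩ := escape h hx hy h1 h2
  cases q3 with
  | inl q3 =>
    exact hnc v u x y (hS hv) (hS hu) hx0 hy0 huv.symm hxy ⟨q3, q1, by omega⟩
  | inr q3 =>
    exact hnc x y u v hx0 hy0 (hS hu) (hS hv) hxy huv ⟨q1, q2, q3⟩

/-- The key planarity lemma: two disjoint connected sets cannot interleave. -/
lemma interleave (hnc : NCon G S0 p) (hinj : Set.InjOn p S0)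
    {U Ws : Set V} (hU : U ⊆ S0) (hW : Ws ⊆ S0) (hUW : Disjoint U Ws)
    {u1 u2 w1 w2 : V} (hu : RW G U u1 u2) (hw : RW G Ws w1 w2)
    (hu1 : u1 ∈ U) (hu2 : u2 ∈ U) (hw1 : w1 ∈ Ws) (hw2 : w2 ∈ Ws)
    (o1 : p u1 < p w1) (o2 : p w1 < p u2) (o3 : p u2 < p w2) : False := by
  have hne : ∀ {s t : V}, s ∈ U → t ∈ Ws → p s ≠ p t := by
    intro s t hs ht he
    have : s = t := hinj (hU hs) (hW ht) he
    exact (hUW.ne_of_mem hs ht) this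
  have hqU : ∀ s ∈ U, p s ≠ p w1 := fun s hs => hne hs hw1
  obtain ⟨a, b, hab, haU, hbU, hpa, hpb, hra, -⟩ := straddle hu hqU o1 o2
  have hWa : ∀ s ∈ Ws, p s ≠ p a := fun s hs => (hne haU hs).symm
  have hWb : ∀ s ∈ Ws, p s ≠ p b := fun s hs => (hne hbU hs).symm
  have hw2in : p a < p w2 ∧ p w2 < p b :=
    chordConf hnc hW hab (hU haU) (hU hbU) hWa hWb (by omega) hw ⟨hpa, hpb⟩
  have hqW : ∀ s ∈ Ws, p s ≠ p u2 := fun s hs => (hne hu2 hs).symm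
  obtain ⟨c, d, hcd, hcW, hdW, hpc, hpd, hrc, -⟩ := straddle hw hqW o2 o3
  have hcin : p a < p c ∧ p c < p b :=
    chordConf hnc hW hab (hU haU) (hU hbU) hWa hWb (by omega) hrc ⟨hpa, hpb⟩
  have hUc : ∀ s ∈ U, p s ≠ p c := fun s hs => hne hs hcW
  have hUd : ∀ s ∈ U, p s ≠ p d := fun s hs => hne hs hdW
  have : p c < p a ∧ p a < p d :=
    chordConf hnc hU hcd (hW hcW) (hW hdW) hUc hUd (by omega)
      (hu.symm.trans hra) ⟨hpc, hpd⟩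
  omega

/-- A minor of a graph outerplanar on `S` is outerplanar. -/
lemma minorOn_isOuterplanar {H : SimpleGraph W} (hm : MinorOn H G S) (hop : OPon G S) :
    IsOuterplanar H := by
  obtain ⟨p, hinj, hnc⟩ := hop
  obtain ⟨B, hBS, hBne, hBdisj, hBrw, hBadj⟩ := hm
  have himg : ∀ w, (p '' B w).Nonempty := fun w => (hBne w).image p
  set m : W → ℕ := fun w => sInf (p '' B w) with hm
  have hatt : ∀ w, ∃ v ∈ B w, p v = m w := by
    intro w
    have := Nat.sInf_mem (himg w)
    obtain ⟨v, hv, hpv⟩ := this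
    exact ⟨v, hv, hpv⟩
  refine ⟨m, ?_, ?_⟩
  · intro w w' he
    by_contra hne
    obtain ⟨v, hv, hpv⟩ := hatt w
    obtain ⟨v', hv', hpv'⟩ := hatt w'
    have : v = v' := hinj (hBS w hv) (hBS w' hv') (by omega)
    exact (hBdisj hne).ne_of_mem hv hv' this
  · intro w1 w2 w3 w4 h12 h34 hpat
    obtain ⟨hp1, hp2, hp3⟩ := hpat
    have hne13 : w1 ≠ w3 := fun h => by subst h; omega
    have hne14 : w1 ≠ w4 := fun h => by subst h; omega
    have hne23 : w2 ≠ w3 := fun h => by subst h; omega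
    have hne24 : w2 ≠ w4 := fun h => by subst h; omega
    obtain ⟨u1, hu1, hpu1⟩ := hatt w1
    obtain ⟨u2, hu2, hpu2⟩ := hatt w2
    obtain ⟨v1, hv1, hpv1⟩ := hatt w3
    obtain ⟨v2, hv2, hpv2⟩ := hatt w4
    obtain ⟨a, ha, b, hb, hab⟩ := hBadj w1 w2 h12
    obtain ⟨c, hc, d, hd, hcd⟩ := hBadj w3 w4 h34
    set U : Set V := B w1 ∪ B w2 with hU
    set Ws : Set V := B w3 ∪ B w4 with hWs
    have hUS : U ⊆ S := Set.union_subset (hBS w1) (hBS w2)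
    have hWsS : Ws ⊆ S := Set.union_subset (hBS w3) (hBS w4)
    have hdisj : Disjoint U Ws := by
      rw [Set.disjoint_union_left]
      constructor <;> rw [Set.disjoint_union_right]
      · exact ⟨hBdisj hne13, hBdisj hne14⟩
      · exact ⟨hBdisj hne23, hBdisj hne24⟩
    have hrwU : RW G U u1 u2 :=
      (((hBrw w1 u1 hu1 a ha).mono Set.subset_union_left).tail
        ⟨hab, Or.inl ha, Or.inr hb⟩).trans
        ((hBrw w2 b hb u2 hu2).mono Set.subset_union_right)
    have hrwW : RW G Ws v1 v2 :=
      (((hBrw w3 v1 hv1 c hc).mono Set.subset_union_left).tail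
        ⟨hcd, Or.inl hc, Or.inr hd⟩).trans
        ((hBrw w4 d hd v2 hv2).mono Set.subset_union_right)
    exact interleave hnc hinj hUS hWsS hdisj hrwU hrwW (Or.inl hu1) (Or.inr hu2)
      (Or.inl hv1) (Or.inr hv2) (by omega) (by omega) (by omega)

lemma not_op_K4 : ¬ IsOuterplanar (⊤ : SimpleGraph (Fin 4)) := by
  rintro ⟨p, hinj, hnc⟩
  have hcard : (Finset.univ.image p).card = 4 := by
    rw [Finset.card_image_of_injective _ hinj]; simp
  set f := (Finset.univ.image p).orderIsoOfFin hcard with hf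
  have hmem : ∀ i : Fin 4, ∃ w : Fin 4, p w = (f i : ℕ) := by
    intro i
    have := (f i).2
    rw [Finset.mem_image] at this
    obtain ⟨w, -, hw⟩ := this
    exact ⟨w, hw⟩
  obtain ⟨w0, h0⟩ := hmem 0
  obtain ⟨w1, h1⟩ := hmem 1
  obtain ⟨w2, h2⟩ := hmem 2
  obtain ⟨w3, h3⟩ := hmem 3
  have hlt : ∀ i j : Fin 4, i < j → (f i : ℕ) < (f j : ℕ) := by
    intro i j hij
    exact_mod_cast f.strictMono hij
  have l01 := hlt 0 1 (by decide)
  have l12 := hlt 1 2 (by decide)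
  have l23 := hlt 2 3 (by decide)
  have a02 : (⊤ : SimpleGraph (Fin 4)).Adj w0 w2 := by
    simp only [SimpleGraph.top_adj]
    intro h; rw [h] at h0; omega
  have a13 : (⊤ : SimpleGraph (Fin 4)).Adj w1 w3 := by
    simp only [SimpleGraph.top_adj]
    intro h; rw [h] at h1; omega
  exact hnc w0 w2 w1 w3 a02 a13 (by omega)

lemma not_op_K23 : ¬ IsOuterplanar (completeBipartiteGraph (Fin 2) (Fin 3)) := by
  rintro ⟨p, hinj, hnc⟩
  have adj : ∀ (i : Fin 2) (j : Fin 3),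
      (completeBipartiteGraph (Fin 2) (Fin 3)).Adj (Sum.inl i) (Sum.inr j) := by
    intro i j; simp
  have hyinj : Function.Injective (fun j : Fin 3 => p (Sum.inr j)) := by
    intro a b h
    have : (Sum.inr a : Fin 2 ⊕ Fin 3) = Sum.inr b := hinj h
    simpa using this
  have hcard : (Finset.univ.image (fun j : Fin 3 => p (Sum.inr j))).card = 3 := by
    rw [Finset.card_image_of_injective _ hyinj]; simp
  set f := (Finset.univ.image (fun j : Fin 3 => p (Sum.inr j))).orderIsoOfFin hcard
  have hmem : ∀ i : Fin 3, ∃ w : Fin 3, p (Sum.inr w) = (f i : ℕ) := by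
    intro i
    have := (f i).2
    rw [Finset.mem_image] at this
    obtain ⟨w, -, hw⟩ := this
    exact ⟨w, hw⟩
  obtain ⟨Y0, hY0⟩ := hmem 0
  obtain ⟨Y1, hY1⟩ := hmem 1
  obtain ⟨Y2, hY2⟩ := hmem 2
  have hlt : ∀ i j : Fin 3, i < j → (f i : ℕ) < (f j : ℕ) := by
    intro i j hij
    exact_mod_cast f.strictMono hij
  have l01 := hlt 0 1 (by decide)
  have l12 := hlt 1 2 (by decide)
  -- x-vertices
  have hxne : p (Sum.inl (0 : Fin 2)) ≠ p (Sum.inl 1) := by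
    intro h; have := hinj h; simp at this
  have hxy : ∀ (i : Fin 2) (j : Fin 3), p (Sum.inl i) ≠ p (Sum.inr j) := by
    intro i j h; have := hinj h; simp at this
  obtain ⟨X0, X1, hX⟩ : ∃ X0 X1 : Fin 2, p (Sum.inl X0) < p (Sum.inl X1) := by
    rcases lt_or_gt_of_ne hxne with h | h
    · exact ⟨0, 1, h⟩
    · exact ⟨1, 0, h⟩
  set x := p (Sum.inl X0)
  set x' := p (Sum.inl X1)
  have n0 := hxy X0 Y0; have n1 := hxy X0 Y1; have n2 := hxy X0 Y2
  have m0 := hxy X1 Y0; have m1 := hxy X1 Y1; have m2 := hxy X1 Y2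
  rw [hY0] at n0 m0; rw [hY1] at n1 m1; rw [hY2] at n2 m2
  rcases lt_or_gt_of_ne n1 with hc | hc
  · -- x < b
    rcases lt_or_gt_of_ne m1 with hd | hd
    · -- x' < b : pattern x < x' < b < c, edges (X0,Y1) (X1,Y2)
      refine hnc _ _ _ _ (adj X0 Y1) (adj X1 Y2) ?_
      rw [hY1, hY2]; omega
    · -- x < b < x'
      rcases lt_or_gt_of_ne n0 with ha | ha
      · -- x < a : pattern x < a < b < x', edges (X0, Y1) (Y0, X1)
        refine hnc _ _ _ _ (adj X0 Y1) ((adj X1 Y0).symm) ?_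
        rw [hY0, hY1]; omega
      · -- a < x
        rcases lt_or_gt_of_ne m2 with he | he
        · -- x' < c : pattern a < x < x' < c, edges (Y0, X1) (X0, Y2)
          refine hnc _ _ _ _ ((adj X1 Y0).symm) (adj X0 Y2) ?_
          rw [hY0, hY2]; omega
        · -- c < x' : pattern x < b < c < x', edges (X0, Y2) (Y1, X1)
          refine hnc _ _ _ _ (adj X0 Y2) ((adj X1 Y1).symm) ?_
          rw [hY1, hY2]; omega
  · -- b < x : pattern a < b < x < x', edges (Y0, X0) (Y1, X1)
    refine hnc _ _ _ _ ((adj X0 Y0).symm) ((adj X1 Y1).symm) ?_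
    rw [hY0, hY1]; omega

section Rot

/-- Rotation of an ordering. -/
def rotp (t M : ℕ) (p : V → ℕ) : V → ℕ := fun v =>
  if t ≤ p v then p v - t else p v + (M + 1 - t)

/-- Reflection of an ordering. -/
def reflp (M : ℕ) (p : V → ℕ) : V → ℕ := fun v => M - p v

variable {M t : ℕ}

lemma rotp_injOn (hM : ∀ v ∈ S, p v ≤ M) (ht : t ≤ M)
    (hinj : Set.InjOn p S) : Set.InjOn (rotp t M p) S := by
  intro u hu v hv h
  have h1 := hM u hu
  have h2 := hM v hv
  apply hinj hu hv
  unfold rotp at h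
  split_ifs at h <;> omega

lemma rotp_nc (hM : ∀ v ∈ S, p v ≤ M) (ht : t ≤ M)
    (hnc : NCon G S p) : NCon G S (rotp t M p) := by
  intro a b c d ha hb hc hd hab hcd hpat
  have i1 := hnc a b c d ha hb hc hd hab hcd
  have i2 := hnc d c a b hd hc ha hb hcd.symm hab
  have i3 := hnc b a d c hb ha hd hc hab.symm hcd.symm
  have i4 := hnc c d b a hc hd hb ha hcd hab.symm
  have m1 := hM a ha
  have m2 := hM b hb
  have m3 := hM c hc
  have m4 := hM d hd
  unfold rotp at hpat
  split_ifs at hpat <;> omega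

lemma reflp_injOn (hM : ∀ v ∈ S, p v ≤ M) (hinj : Set.InjOn p S) :
    Set.InjOn (reflp M p) S := by
  intro u hu v hv h
  have h1 := hM u hu
  have h2 := hM v hv
  apply hinj hu hv
  unfold reflp at h
  omega

lemma reflp_nc (hM : ∀ v ∈ S, p v ≤ M) (hnc : NCon G S p) : NCon G S (reflp M p) := by
  intro a b c d ha hb hc hd hab hcd hpat
  have i1 := hnc d c b a hd hc hb ha hcd.symm hab.symm
  have m1 := hM a ha
  have m2 := hM b hb
  have m3 := hM c hc
  have m4 := hM d hd
  unfold reflp at hpat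
  omega

end Rot

section Minors

variable {H : SimpleGraph W}

lemma MinorOn.mono {S' : Set V} (hS : S' ⊆ S) (h : MinorOn H G S') : MinorOn H G S := by
  obtain ⟨B, h1, h2, h3, h4, h5⟩ := h
  exact ⟨B, fun w => (h1 w).trans hS, h2, h3, h4, h5⟩

lemma isMinorOf_of_minorOn (h : MinorOn H G Set.univ) : IsMinorOf H G := by
  obtain ⟨B, _, h2, h3, h4, h5⟩ := h
  exact ⟨B, h2, h3, fun w => (connected_iff_RWC (h2 w)).mpr (h4 w), h5⟩

lemma minorOn_of_isMinorOf (h : IsMinorOf H G) : MinorOn H G Set.univ := by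
  obtain ⟨B, h2, h3, h4, h5⟩ := h
  exact ⟨B, fun w => Set.subset_univ _, h2, h3,
    fun w => (connected_iff_RWC (h2 w)).mp (h4 w), h5⟩

/-- Graph with one (possibly virtual) extra edge. -/
def addE (G : SimpleGraph V) (x y : V) : SimpleGraph V where
  Adj a b := G.Adj a b ∨ (a ≠ b ∧ ((a = x ∧ b = y) ∨ (a = y ∧ b = x)))
  symm := by
    constructor
    intro a b h
    rcases h with h | ⟨hne, h | h⟩
    · exact Or.inl h.symm
    · exact Or.inr ⟨hne.symm, Or.inr ⟨h.2, h.1⟩⟩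
    · exact Or.inr ⟨hne.symm, Or.inl ⟨h.2, h.1⟩⟩
  loopless := by
    constructor
    intro a h
    rcases h with h | ⟨hne, -⟩
    · exact G.loopless.irrefl a h
    · exact hne rfl

lemma addE_le {x y : V} : G ≤ addE G x y := fun _ _ h => Or.inl h

/-- Lifting a minor through a virtual edge, realized by a connected set `T`
attached to both endpoints. -/
lemma minorOn_addE {x y : V} {A T : Set V} (hA : A ⊆ S) (hT : T ⊆ S)
    (hTA : Disjoint T A) (hTC : RWC G T)
    {t1 t2 : V} (ht1 : t1 ∈ T) (ht2 : t2 ∈ T)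
    (he1 : G.Adj t1 x) (he2 : G.Adj t2 y)
    (h : MinorOn H (addE G x y) A) : MinorOn H G S := by
  obtain ⟨B, h1, h2, h3, h4, h5⟩ := h
  classical
  set B' : W → Set V := fun w => B w ∪ (if x ∈ B w then T else ∅) with hB'
  have hBsub : ∀ w, B w ⊆ B' w := fun w => Set.subset_union_left
  have hTsub : ∀ w, x ∈ B w → T ⊆ B' w := by
    intro w hx
    rw [hB']
    simp only [if_pos hx]
    exact Set.subset_union_right
  have hxy_rw : ∀ w, x ∈ B w → y ∈ B w → RW G (B' w) x y := by
    intro w hx hy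
    refine Relation.ReflTransGen.head ⟨he1.symm, hBsub w hx, hTsub w hx ht1⟩ ?_
    refine Relation.ReflTransGen.tail ?_ ⟨he2, hTsub w hx ht2, hBsub w hy⟩
    exact (hTC t1 ht1 t2 ht2).mono (hTsub w hx)
  have htrans : ∀ w, ∀ {a b}, RW (addE G x y) (B w) a b → RW G (B' w) a b := by
    intro w a b hr
    induction hr with
    | refl => exact Relation.ReflTransGen.refl
    | tail _ hstep ih =>
      rcases hstep.1 with hadj | ⟨-, ⟨rfl, rfl⟩ | ⟨rfl, rfl⟩⟩
      · exact ih.tail ⟨hadj, hBsub w hstep.2.1, hBsub w hstep.2.2⟩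
      · exact ih.trans (hxy_rw w hstep.2.1 hstep.2.2)
      · exact ih.trans ((hxy_rw w hstep.2.2 hstep.2.1).symm)
  refine ⟨B', ?_, ?_, ?_, ?_, ?_⟩
  · intro w
    rw [hB']
    refine Set.union_subset ((h1 w).trans hA) ?_
    split_ifs
    · exact hT
    · exact Set.empty_subset _
  · intro w
    exact (h2 w).mono (hBsub w)
  · intro w w' hne
    have hd := h3 hne
    have hd' : Disjoint T (B w') := hTA.mono_right (h1 w')
    have hd'' : Disjoint (B w) T := (hTA.mono_right (h1 w)).symm
    rw [hB']
    simp only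
    rcases Classical.em (x ∈ B w) with hx | hx
    · have hx' : x ∉ B w' := fun h => (hd.ne_of_mem hx h) rfl
      simp only [if_pos hx, if_neg hx', Set.union_empty]
      rw [Set.disjoint_union_left]
      exact ⟨hd, hd'⟩
    · simp only [if_neg hx, Set.union_empty]
      rcases Classical.em (x ∈ B w') with hx' | hx'
      · simp only [if_pos hx']
        rw [Set.disjoint_union_right]
        exact ⟨hd, hd''⟩
      · simp only [if_neg hx', Set.union_empty]
        exact hd
  · intro w a ha b hb
    have key : ∀ c ∈ B' w, c ∈ B w ∨ (x ∈ B w ∧ c ∈ T) := by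
      intro c hc
      rw [hB'] at hc
      rcases hc with hc | hc
      · exact Or.inl hc
      · split_ifs at hc with hx
        · exact Or.inr ⟨hx, hc⟩
        · exact absurd hc (Set.notMem_empty c)
    rcases key a ha with haB | ⟨hx, haT⟩ <;> rcases key b hb with hbB | ⟨hx', hbT⟩
    · exact htrans w (h4 w a haB b hbB)
    · exact (htrans w (h4 w a haB x hx')).trans
        (((hTC t1 ht1 b hbT).mono (hTsub w hx')).head
          ⟨he1.symm, hBsub w hx', hTsub w hx' ht1⟩)
    · exact ((((hTC a haT t1 ht1).mono (hTsub w hx)).tail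
          ⟨he1, hTsub w hx ht1, hBsub w hx⟩)).trans (htrans w (h4 w x hx b hbB))
    · exact (hTC a haT b hbT).mono (hTsub w hx)
  · intro w w' hadj
    obtain ⟨a, ha, b, hb, hab⟩ := h5 w w' hadj
    rcases hab with hab | ⟨-, ⟨rfl, rfl⟩ | ⟨rfl, rfl⟩⟩
    · exact ⟨a, hBsub w ha, b, hBsub w' hb, hab⟩
    · exact ⟨t2, hTsub w ha ht2, _, hBsub w' hb, he2⟩
    · exact ⟨a, hBsub w ha, t2, hTsub w' hb ht2, he2.symm⟩

end Minors

section Converse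

/-- A separation of order ≤ 1 of the part of `G` on `S`. -/
def Sep1 (G : SimpleGraph V) (S : Set V) : Prop :=
  ∃ A B : Set V, A ∪ B = S ∧ (A ∩ B).Subsingleton ∧
    (∀ a ∈ A \ B, ∀ b ∈ B \ A, ¬G.Adj a b) ∧ A ≠ S ∧ B ≠ S

/-- A separation of order 2 of the part of `G` on `S`. -/
def Sep2 (G : SimpleGraph V) (S : Set V) : Prop :=
  ∃ A B : Set V, ∃ x y : V, x ≠ y ∧ A ∪ B = S ∧ A ∩ B = {x, y} ∧
    (∀ a ∈ A \ B, ∀ b ∈ B \ A, ¬G.Adj a b) ∧ A ≠ S ∧ B ≠ S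

variable [Fintype V]

/-- From any non-crossing ordering, get one where a prescribed vertex is first. -/
lemma exists_first {G : SimpleGraph V} {S : Set V} (hop : ∃ p, Set.InjOn p S ∧ NCon G S p)
    {c : V} (hc : c ∈ S) :
    ∃ q, Set.InjOn q S ∧ NCon G S q ∧ q c = 0 ∧ ∀ v ∈ S, v ≠ c → 0 < q v := by
  obtain ⟨p, hinj, hnc⟩ := hop
  set M := Finset.univ.sup p with hM
  have hMb : ∀ v ∈ S, p v ≤ M := fun v _ => Finset.le_sup (Finset.mem_univ v)
  have ht : p c ≤ M := hMb c hc
  refine ⟨rotp (p c) M p, rotp_injOn hMb ht hinj, rotp_nc hMb ht hnc, ?_, ?_⟩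
  · unfold rotp; simp
  · intro v hv hvc
    have : p v ≠ p c := fun h => hvc (hinj hv hc h)
    have := hMb v hv
    unfold rotp
    split_ifs <;> omega

lemma op_small {G : SimpleGraph V} {S : Set V} (h : S.ncard ≤ 3) : OPon G S := by
  refine ⟨fun v => (Fintype.equivFin V v : ℕ), fun u _ v _ huv => ?_, ?_⟩
  · exact (Fintype.equivFin V).injective (Fin.val_injective huv)
  · intro a b c d ha hb hc hd hab hcd ⟨h1, h2, h3⟩
    have inj : Function.Injective (fun v => (Fintype.equivFin V v : ℕ)) :=
      fun u v huv => (Fintype.equivFin V).injective (Fin.val_injective huv)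
    have hsub : ({a, c, b, d} : Finset V) ⊆ S.toFinset := by
      intro z hz
      simp only [Finset.mem_insert, Finset.mem_singleton] at hz
      rw [Set.mem_toFinset]
      rcases hz with rfl | rfl | rfl | rfl <;> assumption
    have hcard4 : ({a, c, b, d} : Finset V).card = 4 := by
      rw [Finset.card_insert_of_notMem, Finset.card_insert_of_notMem,
        Finset.card_insert_of_notMem, Finset.card_singleton]
      · simp only [Finset.mem_singleton]
        intro h'; subst h'; omega
      · simp only [Finset.mem_insert, Finset.mem_singleton]
        rintro (h' | h') <;> (subst h'; omega)
      · simp only [Finset.mem_insert, Finset.mem_singleton]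
        rintro (h' | h' | h') <;> (subst h'; omega)
    have := Finset.card_le_card hsub
    rw [hcard4] at this
    rw [Set.ncard_eq_toFinset_card'] at h
    omega

lemma glue_disjoint {G : SimpleGraph V} {A B : Set V} (hAB : Disjoint A B)
    (hnoedge : ∀ a ∈ A, ∀ b ∈ B, ¬G.Adj a b)
    (hA : OPon G A) (hB : OPon G B) : OPon G (A ∪ B) := by
  obtain ⟨pA, hiA, hnA⟩ := hA
  obtain ⟨pB, hiB, hnB⟩ := hB
  set N := Finset.univ.sup pA + 1 with hN
  have hNb : ∀ v, pA v < N := fun v => by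
    have : pA v ≤ Finset.univ.sup pA := Finset.le_sup (Finset.mem_univ v)
    omega
  classical
  set p : V → ℕ := fun v => if v ∈ A then pA v else N + pB v with hp
  have hval : ∀ v, (v ∈ A ∧ p v = pA v) ∨ (v ∉ A ∧ p v = N + pB v) := by
    intro v; by_cases h : v ∈ A
    · exact Or.inl ⟨h, by simp [hp, h]⟩
    · exact Or.inr ⟨h, by simp [hp, h]⟩
  refine ⟨p, ?_, ?_⟩
  · intro u hu v hv huv
    rcases hval u with ⟨huA, hue⟩ | ⟨huA, hue⟩ <;> rcases hval v with ⟨hvA, hve⟩ | ⟨hvA, hve⟩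
    · exact hiA huA hvA (by omega)
    · exact absurd (hNb u) (by omega)
    · exact absurd (hNb v) (by omega)
    · have huB : u ∈ B := hu.resolve_left huA
      have hvB : v ∈ B := hv.resolve_left hvA
      exact hiB huB hvB (by omega)
  · intro a b c d ha hb hc hd hab hcd hpat
    -- sides of edges
    have hside : ∀ {u v : V}, u ∈ A ∪ B → v ∈ A ∪ B → G.Adj u v →
        (u ∈ A ∧ v ∈ A) ∨ (u ∈ B ∧ v ∈ B) := by
      intro u v hu hv huv
      rcases hu with hu | hu <;> rcases hv with hv | hv
      · exact Or.inl ⟨hu, hv⟩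
      · exact absurd huv (hnoedge u hu v hv)
      · exact absurd huv.symm (hnoedge v hv u hu)
      · exact Or.inr ⟨hu, hv⟩
    rcases hside ha hb hab with ⟨ha', hb'⟩ | ⟨ha', hb'⟩ <;>
      rcases hside hc hd hcd with ⟨hc', hd'⟩ | ⟨hc', hd'⟩
    · have e1 : p a = pA a := by simp [hp, ha']
      have e2 : p b = pA b := by simp [hp, hb']
      have e3 : p c = pA c := by simp [hp, hc']
      have e4 : p d = pA d := by simp [hp, hd']
      exact hnA a b c d ha' hb' hc' hd' hab hcd (by omega)
    · have e2 : p b = pA b := by simp [hp, hb']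
      have e3 : p c = N + pB c := by simp [hp, (Set.disjoint_right.mp hAB hc')]
      have := hNb b
      omega
    · have e1 : p a = N + pB a := by simp [hp, (Set.disjoint_right.mp hAB ha')]
      have e3 : p c = pA c := by simp [hp, hc']
      have := hNb c
      omega
    · have e1 : p a = N + pB a := by simp [hp, (Set.disjoint_right.mp hAB ha')]
      have e2 : p b = N + pB b := by simp [hp, (Set.disjoint_right.mp hAB hb')]
      have e3 : p c = N + pB c := by simp [hp, (Set.disjoint_right.mp hAB hc')]
      have e4 : p d = N + pB d := by simp [hp, (Set.disjoint_right.mp hAB hd')]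
      exact hnB a b c d ha' hb' hc' hd' hab hcd (by omega)

lemma glue_cut {G : SimpleGraph V} {A B : Set V} {c : V} (hABc : A ∩ B = {c})
    (hnoedge : ∀ a ∈ A \ B, ∀ b ∈ B \ A, ¬G.Adj a b)
    (hA : OPon G A) (hB : OPon G B) : OPon G (A ∪ B) := by
  have hcA : c ∈ A := by
    have : c ∈ A ∩ B := by rw [hABc]; rfl
    exact this.1
  have hcB : c ∈ B := by
    have : c ∈ A ∩ B := by rw [hABc]; rfl
    exact this.2
  obtain ⟨pA, hiA, hnA, hA0, hApos⟩ := exists_first hA hcA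
  obtain ⟨pB, hiB, hnB, hB0, hBpos⟩ := exists_first hB hcB
  set N := Finset.univ.sup pA + 1 with hN
  have hNb : ∀ v, pA v < N := fun v => by
    have : pA v ≤ Finset.univ.sup pA := Finset.le_sup (Finset.mem_univ v)
    omega
  classical
  set p : V → ℕ := fun v => if v ∈ A then pA v else N + pB v with hp
  have hval : ∀ v, (v ∈ A ∧ p v = pA v) ∨ (v ∉ A ∧ p v = N + pB v) := by
    intro v; by_cases h : v ∈ A
    · exact Or.inl ⟨h, by simp [hp, h]⟩
    · exact Or.inr ⟨h, by simp [hp, h]⟩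
  have hOB : ∀ u ∈ B, ∀ v ∈ B, p u < p v → pB u < pB v := by
    intro u hu v hv huv
    rcases hval u with ⟨huA, hue⟩ | ⟨huA, hue⟩ <;> rcases hval v with ⟨hvA, hve⟩ | ⟨hvA, hve⟩
    · have h1 : u = c := by have : u ∈ A ∩ B := ⟨huA, hu⟩; rwa [hABc] at this
      have h2 : v = c := by have : v ∈ A ∩ B := ⟨hvA, hv⟩; rwa [hABc] at this
      subst h1; subst h2; omega
    · have h1 : u = c := by have : u ∈ A ∩ B := ⟨huA, hu⟩; rwa [hABc] at this
      subst h1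
      rw [hB0]
      refine hBpos v hv ?_
      intro h; subst h; exact hvA hcA
    · exact absurd (hNb v) (by omega)
    · omega
  refine ⟨p, ?_, ?_⟩
  · intro u hu v hv huv
    rcases hval u with ⟨huA, hue⟩ | ⟨huA, hue⟩ <;> rcases hval v with ⟨hvA, hve⟩ | ⟨hvA, hve⟩
    · exact hiA huA hvA (by omega)
    · exact absurd (hNb u) (by omega)
    · exact absurd (hNb v) (by omega)
    · exact hiB (hu.resolve_left huA) (hv.resolve_left hvA) (by omega)
  · intro a b c' d ha hb hc hd hab hcd hpat
    have hside : ∀ {u v : V}, u ∈ A ∪ B → v ∈ A ∪ B → G.Adj u v →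
        (u ∈ A ∧ v ∈ A) ∨ (u ∈ B ∧ v ∈ B) := by
      intro u v hu hv huv
      by_cases huA : u ∈ A <;> by_cases hvA : v ∈ A
      · exact Or.inl ⟨huA, hvA⟩
      · have hvB : v ∈ B := hv.resolve_left hvA
        by_cases huB : u ∈ B
        · exact Or.inr ⟨huB, hvB⟩
        · exact absurd huv (hnoedge u ⟨huA, huB⟩ v ⟨hvB, hvA⟩)
      · have huB : u ∈ B := hu.resolve_left huA
        by_cases hvB : v ∈ B
        · exact Or.inr ⟨huB, hvB⟩
        · exact absurd huv.symm (hnoedge v ⟨hvA, hvB⟩ u ⟨huB, huA⟩)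
      · exact Or.inr ⟨hu.resolve_left huA, hv.resolve_left hvA⟩
    rcases hside ha hb hab with ⟨ha', hb'⟩ | ⟨ha', hb'⟩ <;>
      rcases hside hc hd hcd with ⟨hc', hd'⟩ | ⟨hc', hd'⟩
    · have e1 : p a = pA a := by simp [hp, ha']
      have e2 : p b = pA b := by simp [hp, hb']
      have e3 : p c' = pA c' := by simp [hp, hc']
      have e4 : p d = pA d := by simp [hp, hd']
      exact hnA a b c' d ha' hb' hc' hd' hab hcd (by omega)
    · obtain ⟨h1, h2, h3⟩ := hpat
      rcases hval c' with ⟨hcA', hce⟩ | ⟨hcA', hce⟩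
      · have : c' = c := by have : c' ∈ A ∩ B := ⟨hcA', hc'⟩; rwa [hABc] at this
        subst this
        rw [hce, hA0] at h1
        omega
      · have e2 : p b = pA b := by simp [hp, hb']
        have := hNb b
        omega
    · obtain ⟨h1, h2, h3⟩ := hpat
      have e3 : p c' = pA c' := by simp [hp, hc']
      have e4 : p d = pA d := by simp [hp, hd']
      rcases hval b with ⟨hbA, hbe⟩ | ⟨hbA, hbe⟩
      · have : b = c := by have : b ∈ A ∩ B := ⟨hbA, hb'⟩; rwa [hABc] at this
        subst this
        rw [hbe, hA0] at h2
        omega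
      · have := hNb d
        omega
    · exact hnB a b c' d ha' hb' hc' hd' hab hcd
        ⟨hOB a ha' c' hc' hpat.1, hOB c' hc' b hb' hpat.2.1, hOB b hb' d hd' hpat.2.2⟩

/-- Normalisation: either a good-form ordering (x first, y last) exists, or the
chord `x y` has vertices on both sides. -/
lemma normAux {G' : SimpleGraph V} {S : Set V} {x y : V} (hxS : x ∈ S) (hyS : y ∈ S)
    (hxy : x ≠ y) (hop : ∃ p, Set.InjOn p S ∧ NCon G' S p) :
    (∃ p, Set.InjOn p S ∧ NCon G' S p ∧ (∀ v ∈ S, p x ≤ p v) ∧ (∀ v ∈ S, p v ≤ p y)) ∨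
    (∃ p, Set.InjOn p S ∧ NCon G' S p ∧ p x < p y ∧
      (∃ u ∈ S, u ≠ x ∧ u ≠ y ∧ p x < p u ∧ p u < p y) ∧
      (∃ u ∈ S, u ≠ x ∧ u ≠ y ∧ (p u < p x ∨ p y < p u))) := by
  suffices main : ∀ p : V → ℕ, Set.InjOn p S → NCon G' S p → p x < p y →
      (∃ p, Set.InjOn p S ∧ NCon G' S p ∧ (∀ v ∈ S, p x ≤ p v) ∧ (∀ v ∈ S, p v ≤ p y)) ∨
      (∃ p, Set.InjOn p S ∧ NCon G' S p ∧ p x < p y ∧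
        (∃ u ∈ S, u ≠ x ∧ u ≠ y ∧ p x < p u ∧ p u < p y) ∧
        (∃ u ∈ S, u ≠ x ∧ u ≠ y ∧ (p u < p x ∨ p y < p u))) by
    obtain ⟨p, hinj, hnc⟩ := hop
    rcases lt_trichotomy (p x) (p y) with h | h | h
    · exact main p hinj hnc h
    · exact absurd (hinj hxS hyS h) hxy
    · set M := Finset.univ.sup p with hM
      have hMb : ∀ v ∈ S, p v ≤ M := fun v _ => Finset.le_sup (Finset.mem_univ v)
      refine main (reflp M p) (reflp_injOn hMb hinj) (reflp_nc hMb hnc) ?_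
      have h1 := hMb x hxS
      have h2 := hMb y hyS
      unfold reflp
      omega
  intro p hinj hnc hxy'
  by_cases hin : ∃ u ∈ S, u ≠ x ∧ u ≠ y ∧ p x < p u ∧ p u < p y
  · by_cases hout : ∃ u ∈ S, u ≠ x ∧ u ≠ y ∧ (p u < p x ∨ p y < p u)
    · exact Or.inr ⟨p, hinj, hnc, hxy', hin, hout⟩
    · left
      push_neg at hout
      refine ⟨p, hinj, hnc, ?_, ?_⟩ <;> intro v hv
      · rcases eq_or_ne v x with rfl | hvx
        · exact le_refl _
        · rcases eq_or_ne v y with rfl | hvy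
          · exact le_of_lt hxy'
          · have h1 := (hout v hv hvx hvy).1
            omega
      · rcases eq_or_ne v x with rfl | hvx
        · exact le_of_lt hxy'
        · rcases eq_or_ne v y with rfl | hvy
          · exact le_refl _
          · have h1 := (hout v hv hvx hvy).2
            omega
  · left
    push_neg at hin
    set M := Finset.univ.sup p with hM
    have hMb : ∀ v ∈ S, p v ≤ M := fun v _ => Finset.le_sup (Finset.mem_univ v)
    have hty : p y ≤ M := hMb y hyS
    set q := rotp (p y) M p with hq
    have hqinj := rotp_injOn hMb hty hinj
    have hqnc := rotp_nc hMb hty hnc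
    have hqy : q y = 0 := by unfold q; unfold rotp; simp
    have hqx : q x = p x + (M + 1 - p y) := by
      unfold q; unfold rotp
      rw [if_neg (by omega)]
    have hqv : ∀ v ∈ S, v ≠ x → v ≠ y → 0 < q v ∧ q v < q x := by
      intro v hv hvx hvy
      have h1 : ¬(p x < p v ∧ p v < p y) :=
        fun hh => absurd (hin v hv hvx hvy hh.1) (not_le.mpr hh.2)
      have h2 : p v ≠ p x := fun h => hvx (hinj hv hxS h)
      have h3 : p v ≠ p y := fun h => hvy (hinj hv hyS h)
      have h4 := hMb v hv
      have h5 := hMb x hxS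
      rw [hqx]
      unfold q; unfold rotp
      split_ifs <;> omega
    have hqxpos : 0 < q x := by omega
    set M2 := Finset.univ.sup q with hM2
    have hM2b : ∀ v ∈ S, q v ≤ M2 := fun v _ => Finset.le_sup (Finset.mem_univ v)
    refine ⟨reflp M2 q, reflp_injOn hM2b hqinj, reflp_nc hM2b hqnc, ?_, ?_⟩ <;> intro v hv
    · have h1 := hM2b v hv
      have h2 := hM2b x hxS
      rcases eq_or_ne v x with rfl | hvx
      · exact le_refl _
      · rcases eq_or_ne v y with rfl | hvy
        · unfold reflp; omega
        · have := hqv v hv hvx hvy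
          unfold reflp; omega
    · have h1 := hM2b v hv
      have h2 := hM2b y hyS
      rcases eq_or_ne v y with rfl | hvy
      · exact le_refl _
      · have h3 : 0 < q v := by
          rcases eq_or_ne v x with rfl | hvx
          · exact hqxpos
          · exact (hqv v hv hvx hvy).1
        unfold reflp; omega

lemma glue_c {G : SimpleGraph V} {A B : Set V} {x y : V} (hxy : x ≠ y)
    (hABxy : A ∩ B = {x, y})
    (hnoedge : ∀ a ∈ A \ B, ∀ b ∈ B \ A, ¬G.Adj a b)
    (hA : ∃ pa, Set.InjOn pa A ∧ NCon (addE G x y) A pa ∧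
      (∀ v ∈ A, pa x ≤ pa v) ∧ (∀ v ∈ A, pa v ≤ pa y))
    (hB : ∃ pb, Set.InjOn pb B ∧ NCon (addE G x y) B pb ∧
      (∀ v ∈ B, pb x ≤ pb v) ∧ (∀ v ∈ B, pb v ≤ pb y)) :
    OPon G (A ∪ B) := by
  obtain ⟨pA, hiA, hnA, hAf, hAl⟩ := hA
  obtain ⟨pB, hiB, hnB, hBf, hBl⟩ := hB
  have hxA : x ∈ A := by
    have : x ∈ A ∩ B := by rw [hABxy]; exact Or.inl rfl
    exact this.1
  have hyA : y ∈ A := by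
    have : y ∈ A ∩ B := by rw [hABxy]; exact Or.inr rfl
    exact this.1
  have hxB : x ∈ B := by
    have : x ∈ A ∩ B := by rw [hABxy]; exact Or.inl rfl
    exact this.2
  have hyB : y ∈ B := by
    have : y ∈ A ∩ B := by rw [hABxy]; exact Or.inr rfl
    exact this.2
  have hAonly : ∀ v ∈ A, v ≠ x → v ≠ y → v ∉ B := by
    intro v hv hvx hvy hvB
    have : v ∈ A ∩ B := ⟨hv, hvB⟩
    rw [hABxy] at this
    rcases this with h | h
    · exact hvx h
    · exact hvy h
  have hAfs : ∀ v ∈ A, v ≠ x → pA x < pA v := by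
    intro v hv hvx
    exact lt_of_le_of_ne (hAf v hv) fun h => hvx (hiA hxA hv h).symm
  have hAls : ∀ v ∈ A, v ≠ y → pA v < pA y := by
    intro v hv hvy
    exact lt_of_le_of_ne (hAl v hv) fun h => hvy (hiA hv hyA h)
  have hBfs : ∀ v ∈ B, v ≠ x → pB x < pB v := by
    intro v hv hvx
    exact lt_of_le_of_ne (hBf v hv) fun h => hvx (hiB hxB hv h).symm
  have hBls : ∀ v ∈ B, v ≠ y → pB v < pB y := by
    intro v hv hvy
    exact lt_of_le_of_ne (hBl v hv) fun h => hvy (hiB hv hyB h)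
  classical
  set K := Finset.univ.sup pB + 2 with hK
  have hKb : ∀ v, pB v + 1 < K := fun v => by
    have : pB v ≤ Finset.univ.sup pB := Finset.le_sup (Finset.mem_univ v)
    omega
  set MA := Finset.univ.sup pA with hMA
  have hMAb : ∀ v, pA v ≤ MA := fun v => Finset.le_sup (Finset.mem_univ v)
  set p : V → ℕ := fun v =>
    if v = x then 0 else if v = y then K else if v ∈ B then 1 + pB v
    else K + 1 + (MA - pA v) with hp
  have hpx : p x = 0 := by simp [hp]
  have hpy : p y = K := by simp [hp, hxy.symm, Ne.symm hxy]
  have hpB : ∀ v ∈ B, v ≠ x → v ≠ y → p v = 1 + pB v := by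
    intro v hv h1 h2; simp [hp, h1, h2, hv]
  have hpA : ∀ v ∈ A, v ≠ x → v ≠ y → p v = K + 1 + (MA - pA v) := by
    intro v hv h1 h2; simp [hp, h1, h2, hAonly v hv h1 h2]
  have hBle : ∀ v ∈ B, p v ≤ K := by
    intro v hv
    rcases eq_or_ne v x with rfl | h1
    · omega
    rcases eq_or_ne v y with rfl | h2
    · omega
    rw [hpB v hv h1 h2]
    have := hKb v
    omega
  have hAge : ∀ v ∈ A, v ≠ x → K ≤ p v := by
    intro v hv h1
    rcases eq_or_ne v y with rfl | h2
    · omega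
    rw [hpA v hv h1 h2]
    omega
  have hOB : ∀ u ∈ B, ∀ v ∈ B, p u < p v → pB u < pB v := by
    intro u hu v hv huv
    rcases eq_or_ne x v with rfl | hvx
    · rw [hpx] at huv; omega
    rcases eq_or_ne x u with rfl | hux
    · exact hBfs v hv (Ne.symm hvx)
    rcases eq_or_ne y u with rfl | huy
    · rw [hpy] at huv
      rcases eq_or_ne y v with rfl | hvy
      · omega
      · rw [hpB v hv (Ne.symm hvx) (Ne.symm hvy)] at huv
        have := hKb v
        omega
    rcases eq_or_ne y v with rfl | hvy
    · exact hBls u hu (Ne.symm huy)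
    · rw [hpB u hu (Ne.symm hux) (Ne.symm huy), hpB v hv (Ne.symm hvx) (Ne.symm hvy)] at huv
      omega
  refine ⟨p, ?_, ?_⟩
  · intro u hu v hv huv
    by_contra hne
    rcases eq_or_ne x u with rfl | hux
    · rcases eq_or_ne x v with rfl | hvx
      · exact hne rfl
      rcases eq_or_ne y v with rfl | hvy
      · omega
      rcases hv with hv | hv
      · have := hAge v hv (Ne.symm hvx); omega
      · rw [hpB v hv (Ne.symm hvx) (Ne.symm hvy)] at huv; omega
    rcases eq_or_ne x v with rfl | hvx
    · rcases eq_or_ne y u with rfl | huy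
      · omega
      rcases hu with hu | hu
      · have := hAge u hu (Ne.symm hux); omega
      · rw [hpB u hu (Ne.symm hux) (Ne.symm huy)] at huv; omega
    rcases eq_or_ne y u with rfl | huy
    · rcases eq_or_ne y v with rfl | hvy
      · exact hne rfl
      rcases hv with hv | hv
      · rw [hpA v hv (Ne.symm hvx) (Ne.symm hvy)] at huv; omega
      · rw [hpB v hv (Ne.symm hvx) (Ne.symm hvy)] at huv
        have := hKb v; omega
    rcases eq_or_ne y v with rfl | hvy
    · rcases hu with hu | hu
      · rw [hpA u hu (Ne.symm hux) (Ne.symm huy)] at huv; omega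
      · rw [hpB u hu (Ne.symm hux) (Ne.symm huy)] at huv
        have := hKb u; omega
    rcases hu with hu | hu <;> rcases hv with hv | hv
    · rw [hpA u hu (Ne.symm hux) (Ne.symm huy), hpA v hv (Ne.symm hvx) (Ne.symm hvy)] at huv
      have h1 := hMAb u
      have h2 := hMAb v
      exact hne (hiA hu hv (by omega))
    · rw [hpA u hu (Ne.symm hux) (Ne.symm huy), hpB v hv (Ne.symm hvx) (Ne.symm hvy)] at huv
      have := hKb v; omega
    · rw [hpB u hu (Ne.symm hux) (Ne.symm huy), hpA v hv (Ne.symm hvx) (Ne.symm hvy)] at huv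
      have := hKb u; omega
    · rw [hpB u hu (Ne.symm hux) (Ne.symm huy), hpB v hv (Ne.symm hvx) (Ne.symm hvy)] at huv
      exact hne (hiB hu hv (by omega))
  · intro a b c d ha hb hc hd hab hcd hpat
    have hside : ∀ {u v : V}, u ∈ A ∪ B → v ∈ A ∪ B → G.Adj u v →
        (u ∈ A ∧ v ∈ A) ∨ (u ∈ B ∧ v ∈ B) := by
      intro u v hu hv huv
      by_cases huA : u ∈ A <;> by_cases hvA : v ∈ A
      · exact Or.inl ⟨huA, hvA⟩
      · have hvB : v ∈ B := hv.resolve_left hvA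
        by_cases huB : u ∈ B
        · exact Or.inr ⟨huB, hvB⟩
        · exact absurd huv (hnoedge u ⟨huA, huB⟩ v ⟨hvB, hvA⟩)
      · have huB : u ∈ B := hu.resolve_left huA
        by_cases hvB : v ∈ B
        · exact Or.inr ⟨huB, hvB⟩
        · exact absurd huv.symm (hnoedge v ⟨hvA, hvB⟩ u ⟨huB, huA⟩)
      · exact Or.inr ⟨hu.resolve_left huA, hv.resolve_left hvA⟩
    obtain ⟨h1, h2, h3⟩ := hpat
    rcases hside ha hb hab with ⟨ha', hb'⟩ | ⟨ha', hb'⟩ <;>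
      rcases hside hc hd hcd with ⟨hc', hd'⟩ | ⟨hc', hd'⟩
    · -- both edges in A
      have hcx : c ≠ x := by rintro rfl; omega
      have hbx : b ≠ x := by rintro rfl; omega
      have hdx : d ≠ x := by rintro rfl; omega
      have hby : b ≠ y := by
        rintro rfl
        rcases eq_or_ne c b with rfl | hcy
        · omega
        · rw [hpA c hc' hcx hcy, hpy] at h2
          omega
      have hdy : d ≠ y := by
        rintro rfl
        rw [hpA b hb' hbx hby] at h3
        omega
      have hbv := hpA b hb' hbx hby
      have hdv := hpA d hd' hdx hdy
      have hbm := hMAb b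
      have hdm := hMAb d
      rcases eq_or_ne x a with rfl | hax
      · rcases eq_or_ne y c with rfl | hcy
        · refine hnA x b d y hxA hb' hd' hyA (addE_le hab) (addE_le hcd).symm ?_
          refine ⟨hAfs d hd' hdx, ?_, hAls b hb' hby⟩
          rw [hpy] at h2
          omega
        · have hcv := hpA c hc' hcx (Ne.symm hcy)
          have hcm := hMAb c
          refine hnA x b d c hxA hb' hd' hc' (addE_le hab) (addE_le hcd).symm ?_
          exact ⟨hAfs d hd' hdx, by omega, by omega⟩
      rcases eq_or_ne y a with rfl | hay
      · have hcy : c ≠ y := by rintro rfl; omega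
        have hcv := hpA c hc' hcx hcy
        have hcm := hMAb c
        refine hnA d c b y hd' hc' hb' hyA (addE_le hcd).symm (addE_le hab).symm ?_
        rw [hpy] at h1
        exact ⟨by omega, by omega, hAls c hc' hcy⟩
      · have hcy : c ≠ y := by
          rintro rfl
          rw [hpA a ha' (Ne.symm hax) (Ne.symm hay)] at h1
          omega
        have hav := hpA a ha' (Ne.symm hax) (Ne.symm hay)
        have hcv := hpA c hc' hcx hcy
        have ham := hMAb a
        have hcm := hMAb c
        exact hnA d c b a hd' hc' hb' ha' (addE_le hcd).symm (addE_le hab).symm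
          ⟨by omega, by omega, by omega⟩
    · have hcx : c ≠ x := by rintro rfl; omega
      have hbx : b ≠ x := by rintro rfl; omega
      have := hAge b hb' hbx
      have := hBle d hd'
      omega
    · have hcx : c ≠ x := by rintro rfl; omega
      have := hAge c hc' hcx
      have := hBle b hb'
      omega
    · exact hnB a b c d ha' hb' hc' hd' (addE_le hab) (addE_le hcd)
        ⟨hOB a ha' c hc' h1, hOB c hc' b hb' h2, hOB b hb' d hd' h3⟩

/-- Components of a closed region attach to both cut vertices, else there is a
small separation. -/
lemma comp_attach {G : SimpleGraph V} {S : Set V} (hns : ¬Sep1 G S)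
    {x y : V} (hxS : x ∈ S) (hyS : y ∈ S) (hxy : x ≠ y)
    {D : Set V} (hD : D ⊆ S) (hDx : x ∉ D) (hDy : y ∉ D)
    (hclosed : ∀ d ∈ D, ∀ v ∈ S, G.Adj d v → v ∈ D ∨ v = x ∨ v = y)
    {d0 : V} (hd0 : d0 ∈ D) :
    ∃ C, C ⊆ D ∧ d0 ∈ C ∧ RWC G C ∧ (∃ c1 ∈ C, G.Adj c1 x) ∧
      (∃ c2 ∈ C, G.Adj c2 y) ∧
      (∀ c ∈ C, ∀ v ∈ S, G.Adj c v → v ∈ C ∨ v = x ∨ v = y) := by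
  classical
  set C : Set V := {v | RW G D d0 v ∧ v ∈ D} with hC
  have hCD : C ⊆ D := fun v hv => hv.2
  have hd0C : d0 ∈ C := ⟨Relation.ReflTransGen.refl, hd0⟩
  have lift : ∀ v, RW G D d0 v → RW G C d0 v := by
    intro v h
    induction h with
    | refl => exact Relation.ReflTransGen.refl
    | @tail b c hpre hstep ih =>
      exact ih.tail ⟨hstep.1, ⟨hpre, hstep.2.1⟩, ⟨hpre.tail hstep, hstep.2.2⟩⟩
  have hrwc : RWC G C := by
    intro a ha b hb
    exact (lift a ha.1).symm.trans (lift b hb.1)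
  have hclosedC : ∀ c ∈ C, ∀ v ∈ S, G.Adj c v → v ∈ C ∨ v = x ∨ v = y := by
    intro c hc v hv hadj
    rcases hclosed c (hCD hc) v hv hadj with hvD | h | h
    · exact Or.inl ⟨hc.1.tail ⟨hadj, hc.2, hvD⟩, hvD⟩
    · exact Or.inr (Or.inl h)
    · exact Or.inr (Or.inr h)
  have hxC : x ∉ C := fun h => hDx (hCD h)
  have hyC : y ∉ C := fun h => hDy (hCD h)
  have att : ∀ z w : V, z ∈ S → w ∈ S → z ≠ w → z ∉ C → w ∉ C →
      (∀ c ∈ C, ∀ v ∈ S, G.Adj c v → v ∈ C ∨ v = z ∨ v = w) →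
      ∃ c1 ∈ C, G.Adj c1 z := by
    intro z w hzS hwS hzw hzC hwC hcl
    by_contra hatt
    push_neg at hatt
    apply hns
    refine ⟨C ∪ {w}, S \ C, ?_, ?_, ?_, ?_, ?_⟩
    · apply Set.eq_of_subset_of_subset
      · rintro v ((hv | rfl) | hv)
        · exact hD (hCD hv)
        · exact hwS
        · exact hv.1
      · intro v hv
        by_cases h : v ∈ C
        · exact Or.inl (Or.inl h)
        · exact Or.inr ⟨hv, h⟩
    · intro v hv v' hv'
      have h1 : v = w := by
        rcases hv.1 with h | h
        · exact absurd h hv.2.2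
        · exact h
      have h2 : v' = w := by
        rcases hv'.1 with h | h
        · exact absurd h hv'.2.2
        · exact h
      rw [h1, h2]
    · intro a ha b hb hadj
      have haC : a ∈ C := by
        rcases ha.1 with h | h
        · exact h
        · subst h
          exact absurd ⟨hwS, hwC⟩ ha.2
      have hbS : b ∈ S := hb.1.1
      have hbC : b ∉ C := hb.1.2
      have hbw : b ≠ w := fun h => hb.2 (Or.inr h)
      rcases hcl a haC b hbS hadj with h | h | h
      · exact hbC h
      · exact hatt a haC (h ▸ hadj)
      · exact hbw h
    · intro h
      have : z ∈ C ∪ {w} := h ▸ hzS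
      rcases this with h' | h'
      · exact hzC h'
      · exact hzw h'
    · intro h
      have h2 : d0 ∈ S \ C := by rw [h]; exact hD hd0
      exact h2.2 hd0C
  refine ⟨C, hCD, hd0C, hrwc, ?_, ?_, hclosedC⟩
  · exact att x y hxS hyS hxy hxC hyC hclosedC
  · refine att y x hyS hxS hxy.symm hyC hxC ?_
    intro c hc v hv hadj
    rcases hclosedC c hc v hv hadj with h | h | h
    · exact Or.inl h
    · exact Or.inr (Or.inr h)
    · exact Or.inr (Or.inl h)

lemma ham_base {G : SimpleGraph V} {S : Set V} (hns : ¬Sep1 G S) {p : V → ℕ}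
    (hinj : Set.InjOn p S) (hnc : NCon G S p) {u w : V} (hu : u ∈ S) (hw : w ∈ S)
    (huw : u ≠ w) (hmin : ∀ z ∈ S, p u ≤ p z)
    (hcons : ∀ z ∈ S, z ≠ u → z ≠ w → p w < p z) : G.Adj u w := by
  by_contra hadj
  have hpuw : p u < p w := lt_of_le_of_ne (hmin w hw) fun h => huw (hinj hu hw h)
  set N : Set V := {z | z ∈ S ∧ G.Adj u z} with hN
  have hNne : N.Nonempty := by
    by_contra hNe
    rw [Set.not_nonempty_iff_eq_empty] at hNe
    have hnoadj : ∀ z ∈ S, ¬G.Adj u z := by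
      intro z hz hzadj
      have : z ∈ N := ⟨hz, hzadj⟩
      rw [hNe] at this
      exact this
    apply hns
    refine ⟨{u}, S \ {u}, ?_, ?_, ?_, ?_, ?_⟩
    · apply Set.eq_of_subset_of_subset
      · rintro v ((rfl : v = u) | hv)
        · exact hu
        · exact hv.1
      · intro v hv
        by_cases h : v = u
        · exact Or.inl h
        · exact Or.inr ⟨hv, h⟩
    · intro a ha b hb
      exact absurd ha.1 ha.2.2
    · intro a ha b hb hab
      have ha' : a = u := ha.1
      exact hnoadj b hb.1.1 (ha' ▸ hab)
    · intro h
      have : w ∈ ({u} : Set V) := h ▸ hw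
      exact huw (this.symm)
    · intro h
      have h2 : u ∈ S \ {u} := by rw [h]; exact hu
      exact h2.2 rfl
  obtain ⟨z, hzN, hzmin⟩ := Set.exists_min_image N p N.toFinite hNne
  have hzS : z ∈ S := hzN.1
  have huz : G.Adj u z := hzN.2
  have hzu : z ≠ u := fun h => G.loopless.irrefl u (h ▸ huz)
  have hzw : z ≠ w := fun h => hadj (h ▸ huz)
  have hpwz : p w < p z := hcons z hzS hzu hzw
  set S1 : Set V := {s | s ∈ S ∧ p w ≤ p s ∧ p s < p z} with hS1
  have hwS1 : w ∈ S1 := ⟨hw, le_refl _, hpwz⟩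
  have hzS1 : z ∉ S1 := fun h => absurd h.2.2 (lt_irrefl _)
  apply hns
  refine ⟨S1 ∪ {z}, S \ S1, ?_, ?_, ?_, ?_, ?_⟩
  · apply Set.eq_of_subset_of_subset
    · rintro v ((hv | rfl) | hv)
      · exact hv.1
      · exact hzS
      · exact hv.1
    · intro v hv
      by_cases h : v ∈ S1
      · exact Or.inl (Or.inl h)
      · exact Or.inr ⟨hv, h⟩
  · intro a ha b hb
    have ha' : a = z := by
      rcases ha.1 with h | h
      · exact absurd h ha.2.2
      · exact h
    have hb' : b = z := by
      rcases hb.1 with h | h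
      · exact absurd h hb.2.2
      · exact h
    rw [ha', hb']
  · intro a ha b hb hab
    have haS1 : a ∈ S1 := by
      rcases ha.1 with h | rfl
      · exact h
      · exact absurd ⟨hzS, hzS1⟩ ha.2
    have hbS : b ∈ S := hb.1.1
    have hbS1 : b ∉ S1 := hb.1.2
    have hbz : b ≠ z := fun h => hb.2 (Or.inr h)
    rcases eq_or_ne b u with rfl | hbu
    · -- a is a neighbour of u with p a < p z : contradicts minimality of z
      have : a ∈ N := ⟨haS1.1, hab.symm⟩
      exact absurd (hzmin a this) (by have := haS1.2.2; omega)
    · have h1 : ¬(p w ≤ p b ∧ p b < p z) := fun h => hbS1 ⟨hbS, h⟩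
      have h2 : p b ≠ p z := fun h => hbz (hinj hbS hzS h)
      rcases lt_or_ge (p b) (p w) with h3 | h3
      · have hbw : b ≠ w := fun h => absurd (h ▸ h3) (lt_irrefl _)
        exact absurd (hcons b hbS hbu hbw) (by omega)
      · have h4 : p z < p b := by omega
        have h5 : p u < p a := by
          have := haS1.2.1
          omega
        exact hnc u z a b hu hzS haS1.1 hbS huz hab ⟨h5, haS1.2.2, h4⟩
  · intro h
    have : u ∈ S1 ∪ {z} := h ▸ hu
    rcases this with h' | h'
    · have := h'.2.1; omega
    · exact hzu h'.symm
  · intro h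
    have h2 : w ∈ S \ S1 := by rw [h]; exact hw
    exact h2.2 hwS1

lemma ham_cons {G : SimpleGraph V} {S : Set V} (hns : ¬Sep1 G S) {p : V → ℕ}
    (hinj : Set.InjOn p S) (hnc : NCon G S p) {u w : V} (hu : u ∈ S) (hw : w ∈ S)
    (hlt : p u < p w) (hnothing : ∀ z ∈ S, ¬(p u < p z ∧ p z < p w)) : G.Adj u w := by
  set M := Finset.univ.sup p with hM
  have hMb : ∀ v ∈ S, p v ≤ M := fun v _ => Finset.le_sup (Finset.mem_univ v)
  have ht : p u ≤ M := hMb u hu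
  have hqu : rotp (p u) M p u = 0 := by unfold rotp; simp
  refine ham_base hns (rotp_injOn hMb ht hinj) (rotp_nc hMb ht hnc) hu hw
    (fun h => absurd hlt (by rw [h]; exact lt_irrefl _)) (fun z _ => by rw [hqu]; omega) ?_
  intro z hz hzu hzw
  have h1 : p z ≠ p u := fun h => hzu (hinj hz hu h)
  have h2 : p z ≠ p w := fun h => hzw (hinj hz hw h)
  have h3 : ¬(p u < p z ∧ p z < p w) := hnothing z hz
  have h4 := hMb z hz
  have h5 := hMb w hw
  unfold rotp
  split_ifs <;> omega

lemma ham_wrap {G : SimpleGraph V} {S : Set V} (hns : ¬Sep1 G S) {p : V → ℕ}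
    (hinj : Set.InjOn p S) (hnc : NCon G S p) {u w : V} (hu : u ∈ S) (hw : w ∈ S)
    (huw : u ≠ w) (hmax : ∀ z ∈ S, p z ≤ p u) (hmin : ∀ z ∈ S, p w ≤ p z) :
    G.Adj u w := by
  set M := Finset.univ.sup p with hM
  have hMb : ∀ v ∈ S, p v ≤ M := fun v _ => Finset.le_sup (Finset.mem_univ v)
  have ht : p u ≤ M := hMb u hu
  have hqu : rotp (p u) M p u = 0 := by unfold rotp; simp
  refine ham_base hns (rotp_injOn hMb ht hinj) (rotp_nc hMb ht hnc) hu hw huw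
    (fun z _ => by rw [hqu]; omega) ?_
  intro z hz hzu hzw
  have h1 : p z < p u := lt_of_le_of_ne (hmax z hz) fun h => hzu (hinj hz hu h)
  have h2 : p w < p z := lt_of_le_of_ne (hmin z hz) fun h => hzw (hinj hw hz h).symm
  have h3 : p w < p u := lt_of_le_of_ne (hmax w hw) fun h => huw (hinj hw hu h).symm
  have h4 := hMb z hz
  unfold rotp
  split_ifs <;> omega

lemma chain {G : SimpleGraph V} {S : Set V} (hns : ¬Sep1 G S) {p : V → ℕ}
    (hinj : Set.InjOn p S) (hnc : NCon G S p) :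
    ∀ u ∈ S, ∀ w ∈ S, p u ≤ p w →
      RW G {z | z ∈ S ∧ p u ≤ p z ∧ p z ≤ p w} u w := by
  suffices main : ∀ k, ∀ u ∈ S, ∀ w ∈ S, p u ≤ p w → p w - p u = k →
      RW G {z | z ∈ S ∧ p u ≤ p z ∧ p z ≤ p w} u w by
    intro u hu w hw hle
    exact main _ u hu w hw hle rfl
  intro k
  induction k using Nat.strong_induction_on with
  | _ k ih =>
    intro u hu w hw hle hk
    rcases eq_or_lt_of_le hle with heq | hlt
    · have : u = w := hinj hu hw heq
      subst this
      exact Relation.ReflTransGen.refl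
    · set T : Set V := {z | z ∈ S ∧ p u ≤ p z ∧ p z < p w} with hT
      have hTne : T.Nonempty := ⟨u, hu, le_refl _, hlt⟩
      obtain ⟨w', hw'T, hw'max⟩ := Set.exists_max_image T p T.toFinite hTne
      have hadj : G.Adj w' w := by
        refine ham_cons hns hinj hnc hw'T.1 hw hw'T.2.2 ?_
        intro z hz hzpat
        have hzT : z ∈ T := ⟨hz, le_trans hw'T.2.1 (le_of_lt hzpat.1), hzpat.2⟩
        exact absurd (hw'max z hzT) (by omega)
      have hb1 := hw'T.2.1
      have hb2 := hw'T.2.2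
      have hrec : RW G {z | z ∈ S ∧ p u ≤ p z ∧ p z ≤ p w'} u w' := by
        refine ih (p w' - p u) (by omega) u hu w' hw'T.1 hw'T.2.1 rfl
      refine Relation.ReflTransGen.tail (hrec.mono ?_) ⟨hadj, ?_, ?_⟩
      · intro z hz
        exact ⟨hz.1, hz.2.1, le_trans hz.2.2 (le_of_lt hw'T.2.2)⟩
      · exact ⟨hw'T.1, hw'T.2.1, le_of_lt hw'T.2.2⟩
      · exact ⟨hw, hle, le_refl _⟩

lemma sep1_lift {G : SimpleGraph V} {S : Set V} {v : V} (hv : v ∈ S)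
    (h : Sep1 G (S \ {v})) : Sep1 G S ∨ Sep2 G S := by
  obtain ⟨A, B, hU, hsub, hcross, hA, hB⟩ := h
  have hAS : A ⊆ S \ {v} := by rw [← hU]; exact Set.subset_union_left
  have hBS : B ⊆ S \ {v} := by rw [← hU]; exact Set.subset_union_right
  have hvA : v ∉ A := fun h => (hAS h).2 rfl
  have hvB : v ∉ B := fun h => (hBS h).2 rfl
  have hUnion : (A ∪ {v}) ∪ (B ∪ {v}) = S := by
    apply Set.eq_of_subset_of_subset
    · rintro z ((hz | rfl) | (hz | rfl))
      · exact (hAS hz).1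
      · exact hv
      · exact (hBS hz).1
      · exact hv
    · intro z hz
      by_cases h : z = v
      · exact Or.inl (Or.inr h)
      · have : z ∈ A ∪ B := by rw [hU]; exact ⟨hz, h⟩
        rcases this with h' | h'
        · exact Or.inl (Or.inl h')
        · exact Or.inr (Or.inl h')
  have hInter : (A ∪ {v}) ∩ (B ∪ {v}) = (A ∩ B) ∪ {v} := by
    apply Set.eq_of_subset_of_subset
    · rintro z ⟨hz1 | hz1, hz2 | hz2⟩
      · exact Or.inl ⟨hz1, hz2⟩
      · exact Or.inr hz2
      · exact Or.inr hz1
      · exact Or.inr hz1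
    · rintro z (⟨h1, h2⟩ | h1)
      · exact ⟨Or.inl h1, Or.inl h2⟩
      · exact ⟨Or.inr h1, Or.inr h1⟩
  have hCross : ∀ a ∈ (A ∪ {v}) \ (B ∪ {v}), ∀ b ∈ (B ∪ {v}) \ (A ∪ {v}), ¬G.Adj a b := by
    intro a ha b hb
    have ha' : a ∈ A \ B := by
      rcases ha.1 with h | h
      · exact ⟨h, fun hc => ha.2 (Or.inl hc)⟩
      · exact absurd (Or.inr h) ha.2
    have hb' : b ∈ B \ A := by
      rcases hb.1 with h | h
      · exact ⟨h, fun hc => hb.2 (Or.inl hc)⟩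
      · exact absurd (Or.inr h) hb.2
    exact hcross a ha' b hb'
  have hAproper : A ∪ {v} ≠ S := by
    intro h
    apply hA
    apply Set.eq_of_subset_of_subset hAS
    intro z hz
    have : z ∈ A ∪ {v} := by rw [h]; exact hz.1
    rcases this with h' | h'
    · exact h'
    · exact absurd h' hz.2
  have hBproper : B ∪ {v} ≠ S := by
    intro h
    apply hB
    apply Set.eq_of_subset_of_subset hBS
    intro z hz
    have : z ∈ B ∪ {v} := by rw [h]; exact hz.1
    rcases this with h' | h'
    · exact h'
    · exact absurd h' hz.2
  rcases hsub.eq_empty_or_singleton with he | ⟨c, hc⟩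
  · left
    refine ⟨A ∪ {v}, B ∪ {v}, hUnion, ?_, hCross, hAproper, hBproper⟩
    rw [hInter, he]
    intro z hz z' hz'
    simp only [Set.empty_union, Set.mem_singleton_iff] at hz hz'
    rw [hz, hz']
  · right
    refine ⟨A ∪ {v}, B ∪ {v}, c, v, ?_, hUnion, ?_, hCross, hAproper, hBproper⟩
    · intro h
      have : c ∈ A ∩ B := by rw [hc]; rfl
      exact (hAS this.1).2 h
    · rw [hInter, hc]
      apply Set.eq_of_subset_of_subset
      · rintro z (h | h)
        · exact Or.inl h
        · exact Or.inr h
      · rintro z (h | h)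
        · exact Or.inl h
        · exact Or.inr h

lemma deg3 {G : SimpleGraph V} {S : Set V} (hns1 : ¬Sep1 G S) (hns2 : ¬Sep2 G S)
    (hcard : 4 ≤ S.ncard) {v : V} (hv : v ∈ S) :
    ∃ a b c, a ∈ S ∧ b ∈ S ∧ c ∈ S ∧ a ≠ b ∧ a ≠ c ∧ b ≠ c ∧
      G.Adj v a ∧ G.Adj v b ∧ G.Adj v c := by
  by_contra hdeg
  push_neg at hdeg
  -- the neighbourhood of v in S is contained in a 2-element set {x,y} ⊆ S \ {v}
  have hfin : S.Finite := S.toFinite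
  have step : ∀ T : Set V, T ⊆ S → T.ncard ≤ 2 → ∃ z ∈ S, z ∉ T ∧ z ≠ v := by
    intro T hT hT2
    have h3 : (T ∪ {v}).ncard ≤ 3 := by
      have := Set.ncard_union_le T {v}
      have h1 : ({v} : Set V).ncard = 1 := Set.ncard_singleton v
      omega
    by_contra hc
    push_neg at hc
    have hsub : S ⊆ T ∪ {v} := by
      intro z hz
      by_cases h : z ∈ T
      · exact Or.inl h
      · exact Or.inr (hc z hz h)
    have := Set.ncard_le_ncard hsub ((hfin.subset hT).union (Set.finite_singleton v))
    omega
  obtain ⟨x, y, hxS, hyS, hxv, hyv, hxy, hNsub⟩ :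
      ∃ x y, x ∈ S ∧ y ∈ S ∧ x ≠ v ∧ y ≠ v ∧ x ≠ y ∧
        ∀ z ∈ S, G.Adj v z → z = x ∨ z = y := by
    by_cases h1 : ∃ z ∈ S, G.Adj v z
    · obtain ⟨a, haS, hva⟩ := h1
      have hav : a ≠ v := fun h => G.loopless.irrefl v (h ▸ hva)
      by_cases h2 : ∃ z ∈ S, G.Adj v z ∧ z ≠ a
      · obtain ⟨b, hbS, hvb, hba⟩ := h2
        have hbv : b ≠ v := fun h => G.loopless.irrefl v (h ▸ hvb)
        refine ⟨a, b, haS, hbS, hav, hbv, fun h => hba h.symm, ?_⟩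
        intro z hz hvz
        by_contra hzc
        push_neg at hzc
        exact hdeg a b z haS hbS hz (fun h => hba h.symm) (fun h => hzc.1 h.symm)
          (fun h => hzc.2 h.symm) hva hvb hvz
      · push_neg at h2
        obtain ⟨b, hbS, hbT, hbv⟩ := step {a} (by intro z hz; rwa [hz]) (by simp)
        refine ⟨a, b, haS, hbS, hav, hbv, fun h => hbT (h ▸ rfl), ?_⟩
        intro z hz hvz
        exact Or.inl (h2 z hz hvz)
    · push_neg at h1
      obtain ⟨a, haS, -, hav⟩ := step ∅ (Set.empty_subset S) (by simp)
      obtain ⟨b, hbS, hbT, hbv⟩ := step {a} (by intro z hz; rwa [hz]) (by simp)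
      exact ⟨a, b, haS, hbS, hav, hbv, fun h => hbT (h ▸ rfl), fun z hz hvz =>
        absurd hvz (h1 z hz)⟩
  obtain ⟨w, hwS, hwT0, hwv⟩ := step {x, y}
    (by rintro z (rfl | rfl) <;> assumption)
    (by
      have h2 := Set.ncard_insert_le x ({y} : Set V)
      have h3 : ({y} : Set V).ncard = 1 := Set.ncard_singleton y
      omega)
  have hwT : w ∉ ({v, x, y} : Set V) := by
    rintro (rfl | h)
    · exact hwv rfl
    · exact hwT0 h
  apply hns2
  refine ⟨{v, x, y}, S \ {v}, x, y, hxy, ?_, ?_, ?_, ?_, ?_⟩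
  · apply Set.eq_of_subset_of_subset
    · rintro z ((rfl | rfl | rfl) | hz)
      · exact hv
      · exact hxS
      · exact hyS
      · exact hz.1
    · intro z hz
      by_cases h : z = v
      · exact Or.inl (Or.inl h)
      · exact Or.inr ⟨hz, h⟩
  · apply Set.eq_of_subset_of_subset
    · rintro z ⟨(rfl | rfl | rfl), hz2⟩
      · exact absurd rfl hz2.2
      · exact Or.inl rfl
      · exact Or.inr rfl
    · rintro z (rfl | rfl)
      · exact ⟨Or.inr (Or.inl rfl), hxS, hxv⟩
      · exact ⟨Or.inr (Or.inr rfl), hyS, hyv⟩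
  · intro a ha b hb hab
    have ha' : a = v := by
      rcases ha.1 with h | h | h
      · exact h
      · exact absurd ⟨hxS, fun hc : x ∈ ({v} : Set V) => hxv hc⟩ (h ▸ ha.2)
      · exact absurd ⟨hyS, fun hc : y ∈ ({v} : Set V) => hyv hc⟩ (h ▸ ha.2)
    subst ha'
    have hbS : b ∈ S := hb.1.1
    have hbv : b ≠ a := fun h => hb.1.2 h
    have hbx : b ≠ x := fun h => hb.2 (Or.inr (Or.inl h))
    have hby : b ≠ y := fun h => hb.2 (Or.inr (Or.inr h))
    rcases hNsub b hbS hab with h | h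
    · exact hbx h
    · exact hby h
  · intro h
    apply hwT
    rw [h]
    exact hwS
  · intro h
    have h2 : v ∈ S \ {v} := by rw [h]; exact hv
    exact h2.2 rfl

lemma case_d_minor {G : SimpleGraph V} {S : Set V} {v : V} (hvS : v ∈ S)
    (hns1' : ¬Sep1 G (S \ {v}))
    {a b c : V} (haS : a ∈ S) (hbS : b ∈ S) (hcS : c ∈ S)
    (hab : a ≠ b) (hac : a ≠ c) (hbc : b ≠ c)
    (hva : G.Adj v a) (hvb : G.Adj v b) (hvc : G.Adj v c)
    (hop : OPon G (S \ {v})) : MinorOn (⊤ : SimpleGraph (Fin 4)) G S := by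
  obtain ⟨p, hinj, hnc⟩ := hop
  have haS' : a ∈ S \ {v} := ⟨haS, fun h => G.loopless.irrefl v (h ▸ hva)⟩
  have hbS' : b ∈ S \ {v} := ⟨hbS, fun h => G.loopless.irrefl v (h ▸ hvb)⟩
  have hcS' : c ∈ S \ {v} := ⟨hcS, fun h => G.loopless.irrefl v (h ▸ hvc)⟩
  obtain ⟨x1, x2, x3, h1S, h2S, h3S, h1a, h2a, h3a, h12, h23⟩ : ∃ x1 x2 x3,
      x1 ∈ S \ {v} ∧ x2 ∈ S \ {v} ∧ x3 ∈ S \ {v} ∧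
      G.Adj v x1 ∧ G.Adj v x2 ∧ G.Adj v x3 ∧ p x1 < p x2 ∧ p x2 < p x3 := by
    have pab : p a ≠ p b := fun h => hab (hinj haS' hbS' h)
    have pac : p a ≠ p c := fun h => hac (hinj haS' hcS' h)
    have pbc : p b ≠ p c := fun h => hbc (hinj hbS' hcS' h)
    rcases lt_or_gt_of_ne pab with h1 | h1 <;> rcases lt_or_gt_of_ne pac with h2 | h2 <;>
      rcases lt_or_gt_of_ne pbc with h3 | h3
    · exact ⟨a, b, c, haS', hbS', hcS', hva, hvb, hvc, h1, h3⟩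
    · exact ⟨a, c, b, haS', hcS', hbS', hva, hvc, hvb, h2, h3⟩
    · exfalso; omega
    · exact ⟨c, a, b, hcS', haS', hbS', hvc, hva, hvb, h2, h1⟩
    · exact ⟨b, a, c, hbS', haS', hcS', hvb, hva, hvc, h1, h2⟩
    · exfalso; omega
    · exact ⟨b, c, a, hbS', hcS', haS', hvb, hvc, hva, h3, h2⟩
    · exact ⟨c, b, a, hcS', hbS', haS', hvc, hvb, hva, h3, h1⟩
  set S' := S \ {v} with hS'
  set A1 : Set V := {z | z ∈ S' ∧ p x1 ≤ p z ∧ p z < p x2} with hA1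
  set A2 : Set V := {z | z ∈ S' ∧ p x2 ≤ p z ∧ p z < p x3} with hA2
  set A3 : Set V := {z | z ∈ S' ∧ (p z < p x1 ∨ p x3 ≤ p z)} with hA3
  have hx1A1 : x1 ∈ A1 := ⟨h1S, le_refl _, h12⟩
  have hx2A2 : x2 ∈ A2 := ⟨h2S, le_refl _, h23⟩
  have hx3A3 : x3 ∈ A3 := ⟨h3S, Or.inr (le_refl _)⟩
  obtain ⟨Mx, hMxS, hMxmax⟩ := Set.exists_max_image S' p S'.toFinite ⟨x1, h1S⟩
  obtain ⟨mx, hmxS, hmxmin⟩ := Set.exists_min_image S' p S'.toFinite ⟨x1, h1S⟩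
  -- connectivity of the arcs
  have hconn12 : ∀ (x0 : V) (X : Set V), x0 ∈ S' →
      (∀ z, z ∈ X ↔ z ∈ S' ∧ p x0 ≤ p z ∧ p z < (if x0 = x1 then p x2 else p x3)) →
      RWC G X := by
    intro x0 X hx0 hX z1 hz1 z2 hz2
    have key : ∀ z ∈ X, RW G X x0 z := by
      intro z hz
      obtain ⟨hzS, hz1', hz2'⟩ := (hX z).mp hz
      refine (chain hns1' hinj hnc x0 hx0 z hzS hz1').mono ?_
      intro t ht
      exact (hX t).mpr ⟨ht.1, ht.2.1, lt_of_le_of_lt ht.2.2 hz2'⟩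
    exact (key z1 hz1).symm.trans (key z2 hz2)
  have hc1 : RWC G A1 := by
    refine hconn12 x1 A1 h1S ?_
    intro z
    rw [if_pos rfl]
    exact Iff.rfl
  have hc2 : RWC G A2 := by
    refine hconn12 x2 A2 h2S ?_
    intro z
    rw [if_neg (by intro h; subst h; omega)]
    exact Iff.rfl
  have hc3 : RWC G A3 := by
    have key : ∀ z ∈ A3, RW G A3 x3 z := by
      intro z hz
      rcases hz.2 with hzlow | hzhigh
      · -- wrap around through the maximum and minimum
        have hMxA3 : Mx ∈ A3 := ⟨hMxS, Or.inr (hMxmax x3 h3S)⟩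
        have hmxA3 : mx ∈ A3 := ⟨hmxS, Or.inl (lt_of_le_of_lt (hmxmin z hz.1) hzlow)⟩
        have hMm : Mx ≠ mx := by
          intro h
          have h1 := hMxmax x3 h3S
          have h2 := hmxmin z hz.1
          rw [h] at h1
          omega
        have hwrap : G.Adj Mx mx :=
          ham_wrap hns1' hinj hnc hMxS hmxS hMm hMxmax hmxmin
        have part1 : RW G A3 x3 Mx := by
          refine (chain hns1' hinj hnc x3 h3S Mx hMxS (hMxmax x3 h3S)).mono ?_
          intro t ht
          exact ⟨ht.1, Or.inr ht.2.1⟩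
        have part2 : RW G A3 mx z := by
          refine (chain hns1' hinj hnc mx hmxS z hz.1 (hmxmin z hz.1)).mono ?_
          intro t ht
          exact ⟨ht.1, Or.inl (lt_of_le_of_lt ht.2.2 hzlow)⟩
        exact (part1.tail ⟨hwrap, hMxA3, hmxA3⟩).trans part2
      · refine (chain hns1' hinj hnc x3 h3S z hz.1 hzhigh).mono ?_
        intro t ht
        exact ⟨ht.1, Or.inr ht.2.1⟩
    intro z1 hz1 z2 hz2
    exact (key z1 hz1).symm.trans (key z2 hz2)
  -- adjacency between consecutive arcs
  have e12 : ∃ s ∈ A1, ∃ t ∈ A2, G.Adj s t := by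
    obtain ⟨w1, hw1, hw1max⟩ := Set.exists_max_image A1 p A1.toFinite ⟨x1, hx1A1⟩
    refine ⟨w1, hw1, x2, hx2A2, ?_⟩
    refine ham_cons hns1' hinj hnc hw1.1 h2S hw1.2.2 ?_
    intro z hz ⟨hp1, hp2⟩
    have hzA1 : z ∈ A1 := ⟨hz, le_trans hw1.2.1 (le_of_lt hp1), hp2⟩
    exact absurd (hw1max z hzA1) (by omega)
  have e23 : ∃ s ∈ A2, ∃ t ∈ A3, G.Adj s t := by
    obtain ⟨w2, hw2, hw2max⟩ := Set.exists_max_image A2 p A2.toFinite ⟨x2, hx2A2⟩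
    refine ⟨w2, hw2, x3, hx3A3, ?_⟩
    refine ham_cons hns1' hinj hnc hw2.1 h3S hw2.2.2 ?_
    intro z hz ⟨hp1, hp2⟩
    have hzA2 : z ∈ A2 := ⟨hz, le_trans hw2.2.1 (le_of_lt hp1), hp2⟩
    exact absurd (hw2max z hzA2) (by omega)
  have e31 : ∃ s ∈ A3, ∃ t ∈ A1, G.Adj s t := by
    by_cases hlow : ∃ z ∈ S', p z < p x1
    · set L : Set V := {z | z ∈ S' ∧ p z < p x1} with hL
      obtain ⟨z0, hz0⟩ := hlow
      obtain ⟨w3, hw3, hw3max⟩ := Set.exists_max_image L p L.toFinite ⟨z0, hz0⟩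
      refine ⟨w3, ⟨hw3.1, Or.inl hw3.2⟩, x1, hx1A1, ?_⟩
      refine ham_cons hns1' hinj hnc hw3.1 h1S hw3.2 ?_
      intro z hz ⟨hp1, hp2⟩
      exact absurd (hw3max z ⟨hz, hp2⟩) (by omega)
    · push_neg at hlow
      have hMxA3 : Mx ∈ A3 := ⟨hMxS, Or.inr (hMxmax x3 h3S)⟩
      have hMx1 : Mx ≠ x1 := by
        intro h
        have h1 := hMxmax x3 h3S
        rw [h] at h1
        omega
      exact ⟨Mx, hMxA3, x1, hx1A1, ham_wrap hns1' hinj hnc hMxS h1S hMx1 hMxmax hlow⟩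
  -- assemble the K4 minor
  have hvA1 : v ∉ A1 := fun h => h.1.2 rfl
  have hvA2 : v ∉ A2 := fun h => h.1.2 rfl
  have hvA3 : v ∉ A3 := fun h => h.1.2 rfl
  have d12 : Disjoint A1 A2 := by
    rw [Set.disjoint_left]
    intro z hz1 hz2
    have := hz1.2.2
    have := hz2.2.1
    omega
  have d13 : Disjoint A1 A3 := by
    rw [Set.disjoint_left]
    intro z hz1 hz3
    have h1 := hz1.2.1
    have h2 := hz1.2.2
    rcases hz3.2 with h | h <;> omega
  have d23 : Disjoint A2 A3 := by
    rw [Set.disjoint_left]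
    intro z hz2 hz3
    have h1 := hz2.2.1
    have h2 := hz2.2.2
    rcases hz3.2 with h | h <;> omega
  have dv : ∀ {X : Set V}, v ∉ X → Disjoint ({v} : Set V) X := by
    intro X hX
    rw [Set.disjoint_left]
    rintro z rfl
    exact hX
  classical
  refine ⟨fun i => if i = 0 then {v} else if i = 1 then A1 else if i = 2 then A2 else A3,
    ?_, ?_, ?_, ?_, ?_⟩
  · intro w
    dsimp only
    split_ifs
    · rintro z rfl; exact hvS
    · exact fun z hz => hz.1.1
    · exact fun z hz => hz.1.1
    · exact fun z hz => hz.1.1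
  · intro w
    dsimp only
    split_ifs
    · exact ⟨v, rfl⟩
    · exact ⟨x1, hx1A1⟩
    · exact ⟨x2, hx2A2⟩
    · exact ⟨x3, hx3A3⟩
  · intro i j hne
    dsimp only
    split_ifs with g1 g2 g3 g4 g5 g6 g7 g8 g9 g10 g11 g12 <;>
      first
      | (exact absurd rfl (by subst_vars; exact hne rfl))
      | exact dv hvA1
      | exact dv hvA2
      | exact dv hvA3
      | exact (dv hvA1).symm
      | exact (dv hvA2).symm
      | exact (dv hvA3).symm
      | exact d12
      | exact d12.symm
      | exact d13
      | exact d13.symm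
      | exact d23
      | exact d23.symm
      | omega
  · intro w
    dsimp only
    split_ifs
    · intro z hz z' hz'
      rw [hz, hz']
      exact Relation.ReflTransGen.refl
    · exact hc1
    · exact hc2
    · exact hc3
  · intro w w' hadj
    have hne : w ≠ w' := hadj.ne
    have ev : ∀ {X : Set V} {t : V}, t ∈ X → G.Adj v t →
        (∃ s ∈ ({v} : Set V), ∃ t' ∈ X, G.Adj s t') := by
      intro X t ht hvt
      exact ⟨v, rfl, t, ht, hvt⟩
    have esymm : ∀ {X Y : Set V}, (∃ s ∈ X, ∃ t ∈ Y, G.Adj s t) →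
        ∃ s ∈ Y, ∃ t ∈ X, G.Adj s t := by
      rintro X Y ⟨s, hs, t, ht, hst⟩
      exact ⟨t, ht, s, hs, hst.symm⟩
    fin_cases w <;> fin_cases w' <;>
      simp only [if_pos, if_neg, reduceIte] <;>
      first
      | (exact absurd rfl hne)
      | exact ev hx1A1 h1a
      | exact ev hx2A2 h2a
      | exact ev hx3A3 h3a
      | exact esymm (ev hx1A1 h1a)
      | exact esymm (ev hx2A2 h2a)
      | exact esymm (ev hx3A3 h3a)
      | exact e12
      | exact esymm e12
      | exact e23
      | exact esymm e23
      | exact esymm e31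
      | exact e31

section CaseC

variable {G : SimpleGraph V} {S A B : Set V} {x y : V}

/-- In a 2-separation, the far side contains a connected set attached to both
cut vertices. -/
lemma attachT (hns1 : ¬Sep1 G S) (hxy : x ≠ y) (hU : A ∪ B = S) (hI : A ∩ B = {x, y})
    (hcross : ∀ a ∈ A \ B, ∀ b ∈ B \ A, ¬G.Adj a b) (hAne : A ≠ S) :
    ∃ C, C ⊆ B ∧ Disjoint C A ∧ RWC G C ∧
      (∃ c1 ∈ C, G.Adj c1 x) ∧ (∃ c2 ∈ C, G.Adj c2 y) := by
  have hAS : A ⊆ S := by rw [← hU]; exact Set.subset_union_left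
  have hBS : B ⊆ S := by rw [← hU]; exact Set.subset_union_right
  have hxA : x ∈ A ∧ x ∈ B := by
    have : x ∈ A ∩ B := by rw [hI]; exact Or.inl rfl
    exact ⟨this.1, this.2⟩
  have hyA : y ∈ A ∧ y ∈ B := by
    have : y ∈ A ∩ B := by rw [hI]; exact Or.inr rfl
    exact ⟨this.1, this.2⟩
  have hne : (B \ A).Nonempty := by
    rw [Set.nonempty_iff_ne_empty]
    intro h
    apply hAne
    apply Set.eq_of_subset_of_subset hAS
    intro z hz
    have : z ∈ A ∪ B := by rw [hU]; exact hz
    rcases this with h' | h'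
    · exact h'
    · by_contra hzA
      have : z ∈ B \ A := ⟨h', hzA⟩
      rw [h] at this
      exact this
  obtain ⟨d0, hd0⟩ := hne
  have hclosed : ∀ d ∈ B \ A, ∀ w ∈ S, G.Adj d w → w ∈ B \ A ∨ w = x ∨ w = y := by
    intro d hd w hw hadj
    have hwAB : w ∈ A ∪ B := by rw [hU]; exact hw
    by_cases hwB : w ∈ B
    · by_cases hwA : w ∈ A
      · have : w ∈ A ∩ B := ⟨hwA, hwB⟩
        rw [hI] at this
        rcases this with h | h
        · exact Or.inr (Or.inl h)
        · exact Or.inr (Or.inr h)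
      · exact Or.inl ⟨hwB, hwA⟩
    · have hwA : w ∈ A := hwAB.resolve_right hwB
      exact absurd hadj.symm (hcross w ⟨hwA, hwB⟩ d hd)
  obtain ⟨C, hCD, hd0C, hrwc, hc1, hc2, -⟩ := comp_attach hns1 (hAS hxA.1) (hAS hyA.1)
    hxy (fun z hz => hBS hz.1) (fun h => h.2 hxA.1) (fun h => h.2 hyA.1) hclosed hd0
  refine ⟨C, fun z hz => (hCD hz).1, ?_, hrwc, hc1, hc2⟩
  rw [Set.disjoint_left]
  intro z hz
  exact (hCD hz).2

/-- Minor-freeness transfers to the sides of a 2-separation with a virtual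
edge. -/
lemma side_minor_free {H : SimpleGraph W} (hns1 : ¬Sep1 G S) (hxy : x ≠ y)
    (hU : A ∪ B = S) (hI : A ∩ B = {x, y})
    (hcross : ∀ a ∈ A \ B, ∀ b ∈ B \ A, ¬G.Adj a b) (hAne : A ≠ S)
    (h : MinorOn H (addE G x y) A) : MinorOn H G S := by
  obtain ⟨C, hCB, hCA, hrwc, ⟨c1, hc1, he1⟩, ⟨c2, hc2, he2⟩⟩ :=
    attachT hns1 hxy hU hI hcross hAne
  have hAS : A ⊆ S := by rw [← hU]; exact Set.subset_union_left
  have hBS : B ⊆ S := by rw [← hU]; exact Set.subset_union_right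
  exact minorOn_addE hAS (fun z hz => hBS (hCB hz)) hCA hrwc hc1 hc2 he1 he2 h

/-- If a good-form ordering is impossible on one side, we extract a `K₂,₃`
minor. -/
lemma obstructed_k23 (hns1 : ¬Sep1 G S) (hxy : x ≠ y) (hU : A ∪ B = S)
    (hI : A ∩ B = {x, y})
    (hcross : ∀ a ∈ A \ B, ∀ b ∈ B \ A, ¬G.Adj a b)
    (hAne : A ≠ S) (hBne : B ≠ S)
    (hobs : ∃ p, Set.InjOn p A ∧ NCon (addE G x y) A p ∧ p x < p y ∧
      (∃ u ∈ A, u ≠ x ∧ u ≠ y ∧ p x < p u ∧ p u < p y) ∧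
      (∃ u ∈ A, u ≠ x ∧ u ≠ y ∧ (p u < p x ∨ p y < p u))) :
    MinorOn (completeBipartiteGraph (Fin 2) (Fin 3)) G S := by
  obtain ⟨p, hinj, hnc, hpxy, ⟨uin, huinA, huinx, huiny, huin1, huin2⟩,
    ⟨uout, huoutA, huoutx, huouty, huout⟩⟩ := hobs
  have hAS : A ⊆ S := by rw [← hU]; exact Set.subset_union_left
  have hBS : B ⊆ S := by rw [← hU]; exact Set.subset_union_right
  have hxA : x ∈ A := by
    have : x ∈ A ∩ B := by rw [hI]; exact Or.inl rfl
    exact this.1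
  have hyA : y ∈ A := by
    have : y ∈ A ∩ B := by rw [hI]; exact Or.inr rfl
    exact this.1
  have hAonly : ∀ z ∈ A, z ≠ x → z ≠ y → z ∉ B := by
    intro z hz h1 h2 hzB
    have : z ∈ A ∩ B := ⟨hz, hzB⟩
    rw [hI] at this
    rcases this with h | h
    · exact h1 h
    · exact h2 h
  have hchord : (addE G x y).Adj x y := Or.inr ⟨hxy, Or.inl ⟨rfl, rfl⟩⟩
  -- any G-edge from A \ {x,y} stays in A
  have hstay : ∀ d ∈ A, d ≠ x → d ≠ y → ∀ w ∈ S, G.Adj d w → w ∈ A := by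
    intro d hd h1 h2 w hw hadj
    have hwAB : w ∈ A ∪ B := by rw [hU]; exact hw
    rcases hwAB with h | h
    · exact h
    · by_cases hwA : w ∈ A
      · exact hwA
      · exact absurd hadj (hcross d ⟨hd, hAonly d hd h1 h2⟩ w ⟨h, hwA⟩)
  -- inside-arc region
  set Din : Set V := {z | z ∈ A ∧ z ≠ x ∧ z ≠ y ∧ p x < p z ∧ p z < p y} with hDin
  have hclosedin : ∀ d ∈ Din, ∀ w ∈ S, G.Adj d w → w ∈ Din ∨ w = x ∨ w = y := by
    intro d hd w hw hadj
    have hwA : w ∈ A := hstay d hd.1 hd.2.1 hd.2.2.1 w hw hadj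
    rcases eq_or_ne w x with rfl | hwx
    · exact Or.inr (Or.inl rfl)
    rcases eq_or_ne w y with rfl | hwy
    · exact Or.inr (Or.inr rfl)
    left
    refine ⟨hwA, hwx, hwy, ?_, ?_⟩
    · by_contra hlt
      push_neg at hlt
      have hwlt : p w < p x := lt_of_le_of_ne hlt fun h => hwx (hinj hwA hxA h)
      exact hnc w d x y hwA hd.1 hxA hyA (Or.inl hadj.symm) hchord
        ⟨hwlt, hd.2.2.2.1, hd.2.2.2.2⟩
    · by_contra hlt
      push_neg at hlt
      have hwlt : p y < p w := lt_of_le_of_ne hlt fun h => hwy (hinj hyA hwA h).symm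
      exact hnc x y d w hxA hyA hd.1 hwA hchord (Or.inl hadj)
        ⟨hd.2.2.2.1, hd.2.2.2.2, hwlt⟩
  -- outside-arc region
  set Dout : Set V := {z | z ∈ A ∧ z ≠ x ∧ z ≠ y ∧ (p z < p x ∨ p y < p z)} with hDout
  have hclosedout : ∀ d ∈ Dout, ∀ w ∈ S, G.Adj d w → w ∈ Dout ∨ w = x ∨ w = y := by
    intro d hd w hw hadj
    have hwA : w ∈ A := hstay d hd.1 hd.2.1 hd.2.2.1 w hw hadj
    rcases eq_or_ne w x with rfl | hwx
    · exact Or.inr (Or.inl rfl)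
    rcases eq_or_ne w y with rfl | hwy
    · exact Or.inr (Or.inr rfl)
    left
    refine ⟨hwA, hwx, hwy, ?_⟩
    by_contra hmid
    push_neg at hmid
    have hw1 : p x < p w := lt_of_le_of_ne hmid.1 fun h => hwx (hinj hwA hxA h.symm)
    have hw2 : p w < p y := lt_of_le_of_ne hmid.2 fun h => hwy (hinj hwA hyA h)
    rcases hd.2.2.2 with h | h
    · exact hnc d w x y hd.1 hwA hxA hyA (Or.inl hadj) hchord ⟨h, hw1, hw2⟩
    · exact hnc x y w d hxA hyA hwA hd.1 hchord (Or.inl hadj.symm) ⟨hw1, hw2, h⟩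
  have hxDin : x ∉ Din := fun h => h.2.1 rfl
  have hyDin : y ∉ Din := fun h => h.2.2.1 rfl
  have hxDout : x ∉ Dout := fun h => h.2.1 rfl
  have hyDout : y ∉ Dout := fun h => h.2.2.1 rfl
  obtain ⟨Cin, hCinD, huinC, hrwcin, ⟨ci1, hci1, hei1⟩, ⟨ci2, hci2, hei2⟩, -⟩ :=
    comp_attach hns1 (hAS hxA) (hAS hyA) hxy (fun z hz => hAS hz.1) hxDin hyDin
      hclosedin (d0 := uin) ⟨huinA, huinx, huiny, huin1, huin2⟩
  obtain ⟨Cout, hCoutD, huoutC, hrwcout, ⟨co1, hco1, heo1⟩, ⟨co2, hco2, heo2⟩, -⟩ :=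
    comp_attach hns1 (hAS hxA) (hAS hyA) hxy (fun z hz => hAS hz.1) hxDout hyDout
      hclosedout (d0 := uout) ⟨huoutA, huoutx, huouty, huout⟩
  obtain ⟨T, hTB, hTA, hrwcT, ⟨t1, ht1, het1⟩, ⟨t2, ht2, het2⟩⟩ :=
    attachT hns1 hxy hU hI hcross hAne
  -- disjointness facts
  have dIO : Disjoint Cin Cout := by
    rw [Set.disjoint_left]
    intro z hz1 hz2
    have h1 := (hCinD hz1).2.2.2
    have h2 := (hCoutD hz2).2.2.2
    rcases h2 with h | h <;> omega
  have dIT : Disjoint Cin T := by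
    rw [Set.disjoint_left]
    intro z hz1 hz2
    exact (hTA.ne_of_mem hz2 (hCinD hz1).1) rfl
  have dOT : Disjoint Cout T := by
    rw [Set.disjoint_left]
    intro z hz1 hz2
    exact (hTA.ne_of_mem hz2 (hCoutD hz1).1) rfl
  have hxT : x ∉ T := fun h => (hTA.ne_of_mem h hxA) rfl
  have hyT : y ∉ T := fun h => (hTA.ne_of_mem h hyA) rfl
  have dsing : ∀ {z : V} {X : Set V}, z ∉ X → Disjoint ({z} : Set V) X := by
    intro z X hz
    rw [Set.disjoint_left]
    rintro w rfl
    exact hz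
  classical
  set BB : Fin 2 ⊕ Fin 3 → Set V := fun w => match w with
    | Sum.inl i => if i = 0 then {x} else {y}
    | Sum.inr j => if j = 0 then Cin else if j = 1 then Cout else T with hBB
  have hBL : ∀ i : Fin 2, BB (Sum.inl i) = if i = 0 then {x} else {y} := fun i => rfl
  have hBR : ∀ j : Fin 3, BB (Sum.inr j) = if j = 0 then Cin else if j = 1 then Cout else T :=
    fun j => rfl
  have fin2eq : ∀ i j : Fin 2, i ≠ 0 → j ≠ 0 → i = j := by decide
  have fin3eq : ∀ i j : Fin 3, i ≠ 0 → j ≠ 0 → i ≠ 1 → j ≠ 1 → i = j := by decide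
  have hsing : ∀ z : V, z ∈ S → RWC G {z} := by
    intro z hz w hw w' hw'
    rw [hw, hw']
    exact Relation.ReflTransGen.refl
  refine ⟨BB, ?_, ?_, ?_, ?_, ?_⟩
  · rintro (i | j)
    · rw [hBL i]
      split_ifs
      · rintro z rfl; exact hAS hxA
      · rintro z rfl; exact hAS hyA
    · rw [hBR j]
      split_ifs
      · exact fun z hz => hAS (hCinD hz).1
      · exact fun z hz => hAS (hCoutD hz).1
      · exact fun z hz => hBS (hTB hz)
  · rintro (i | j)
    · rw [hBL i]
      split_ifs
      · exact ⟨x, rfl⟩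
      · exact ⟨y, rfl⟩
    · rw [hBR j]
      split_ifs
      · exact ⟨uin, huinC⟩
      · exact ⟨uout, huoutC⟩
      · exact ⟨t1, ht1⟩
  · have dxy : Disjoint ({x} : Set V) ({y} : Set V) := dsing (fun h => hxy h)
    have dxin : Disjoint ({x} : Set V) Cin := dsing (fun h => hxDin (hCinD h))
    have dxout : Disjoint ({x} : Set V) Cout := dsing (fun h => hxDout (hCoutD h))
    have dxT : Disjoint ({x} : Set V) T := dsing hxT
    have dyin : Disjoint ({y} : Set V) Cin := dsing (fun h => hyDin (hCinD h))
    have dyout : Disjoint ({y} : Set V) Cout := dsing (fun h => hyDout (hCoutD h))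
    have dyT : Disjoint ({y} : Set V) T := dsing hyT
    rintro (i | i) (j | j) hne
    · rw [hBL i, hBL j]
      split_ifs with h1 h2 h2
      · exact absurd (by rw [h1, h2]) hne
      · exact dxy
      · exact dxy.symm
      · exact absurd (by rw [fin2eq i j h1 h2]) hne
    · rw [hBL i, hBR j]
      split_ifs <;>
        first
          | exact dxin
          | exact dxout
          | exact dxT
          | exact dyin
          | exact dyout
          | exact dyT
    · rw [hBR i, hBL j]
      split_ifs <;>
        first
          | exact dxin.symm
          | exact dxout.symm
          | exact dxT.symm
          | exact dyin.symm
          | exact dyout.symm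
          | exact dyT.symm
    · have hij : i ≠ j := fun h => hne (by rw [h])
      rw [hBR i, hBR j]
      rcases eq_or_ne i 0 with rfl | h1
      · rw [if_pos rfl]
        rcases eq_or_ne j 0 with rfl | h2
        · exact absurd rfl hij
        rw [if_neg h2]
        rcases eq_or_ne j 1 with rfl | h3
        · rw [if_pos rfl]; exact dIO
        · rw [if_neg h3]; exact dIT
      rw [if_neg h1]
      rcases eq_or_ne i 1 with rfl | h4
      · rw [if_pos rfl]
        rcases eq_or_ne j 0 with rfl | h2
        · rw [if_pos rfl]; exact dIO.symm
        rw [if_neg h2]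
        rcases eq_or_ne j 1 with rfl | h3
        · exact absurd rfl hij
        · rw [if_neg h3]; exact dOT
      rw [if_neg h4]
      rcases eq_or_ne j 0 with rfl | h2
      · rw [if_pos rfl]; exact dIT.symm
      rw [if_neg h2]
      rcases eq_or_ne j 1 with rfl | h3
      · rw [if_pos rfl]; exact dOT.symm
      · rw [if_neg h3]
        exact absurd (fin3eq i j h1 h2 h4 h3) hij
  · rintro (i | j)
    · rw [hBL i]
      split_ifs
      · exact hsing x (hAS hxA)
      · exact hsing y (hAS hyA)
    · rw [hBR j]
      split_ifs
      · exact hrwcin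
      · exact hrwcout
      · exact hrwcT
  · have exin : ∃ s ∈ ({x} : Set V), ∃ t ∈ Cin, G.Adj s t := ⟨x, rfl, ci1, hci1, hei1.symm⟩
    have eyin : ∃ s ∈ ({y} : Set V), ∃ t ∈ Cin, G.Adj s t := ⟨y, rfl, ci2, hci2, hei2.symm⟩
    have exout : ∃ s ∈ ({x} : Set V), ∃ t ∈ Cout, G.Adj s t := ⟨x, rfl, co1, hco1, heo1.symm⟩
    have eyout : ∃ s ∈ ({y} : Set V), ∃ t ∈ Cout, G.Adj s t := ⟨y, rfl, co2, hco2, heo2.symm⟩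
    have exT : ∃ s ∈ ({x} : Set V), ∃ t ∈ T, G.Adj s t := ⟨x, rfl, t1, ht1, het1.symm⟩
    have eyT : ∃ s ∈ ({y} : Set V), ∃ t ∈ T, G.Adj s t := ⟨y, rfl, t2, ht2, het2.symm⟩
    have esymm : ∀ {X Y : Set V}, (∃ s ∈ X, ∃ t ∈ Y, G.Adj s t) →
        ∃ s ∈ Y, ∃ t ∈ X, G.Adj s t := by
      rintro X Y ⟨s, hs, t, ht, hst⟩
      exact ⟨t, ht, s, hs, hst.symm⟩
    rintro (i | i) (j | j) hadj
    · exfalso; simp [completeBipartiteGraph] at hadj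
    · rw [hBL i, hBR j]
      split_ifs <;>
        first
          | exact exin
          | exact eyin
          | exact exout
          | exact eyout
          | exact exT
          | exact eyT
    · rw [hBR i, hBL j]
      split_ifs <;>
        first
          | exact esymm exin
          | exact esymm eyin
          | exact esymm exout
          | exact esymm eyout
          | exact esymm exT
          | exact esymm eyT
    · exfalso; simp [completeBipartiteGraph] at hadj

lemma case_c (hns1 : ¬Sep1 G S) (hxy : x ≠ y) (hU : A ∪ B = S) (hI : A ∩ B = {x, y})
    (hcross : ∀ a ∈ A \ B, ∀ b ∈ B \ A, ¬G.Adj a b) (hAne : A ≠ S) (hBne : B ≠ S)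
    (hopA : ∃ p, Set.InjOn p A ∧ NCon (addE G x y) A p)
    (hopB : ∃ p, Set.InjOn p B ∧ NCon (addE G x y) B p)
    (h23 : ¬MinorOn (completeBipartiteGraph (Fin 2) (Fin 3)) G S) : OPon G S := by
  have hxA : x ∈ A ∧ x ∈ B := by
    have : x ∈ A ∩ B := by rw [hI]; exact Or.inl rfl
    exact ⟨this.1, this.2⟩
  have hyA : y ∈ A ∧ y ∈ B := by
    have : y ∈ A ∩ B := by rw [hI]; exact Or.inr rfl
    exact ⟨this.1, this.2⟩
  have hcross' : ∀ a ∈ B \ A, ∀ b ∈ A \ B, ¬G.Adj a b :=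
    fun a ha b hb h => hcross b hb a ha h.symm
  rcases normAux (G' := addE G x y) hxA.1 hyA.1 hxy hopA with hgoodA | hobsA
  · rcases normAux (G' := addE G x y) hxA.2 hyA.2 hxy hopB with hgoodB | hobsB
    · have := glue_c hxy hI hcross hgoodA hgoodB
      rwa [hU] at this
    · exact absurd (obstructed_k23 hns1 hxy (by rw [Set.union_comm]; exact hU)
        (by rw [Set.inter_comm]; exact hI) hcross' hBne hAne hobsB) h23
  · exact absurd (obstructed_k23 hns1 hxy hU hI hcross hAne hBne hobsA) h23

end CaseC

theorem conv (n : ℕ) : ∀ (G : SimpleGraph V) (S : Set V), S.ncard ≤ n →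
    ¬MinorOn (⊤ : SimpleGraph (Fin 4)) G S →
    ¬MinorOn (completeBipartiteGraph (Fin 2) (Fin 3)) G S → OPon G S := by
  induction n with
  | zero => exact fun G S h _ _ => op_small (by omega)
  | succ n ih =>
    intro G S hcard h4 h23
    by_cases hsmall : S.ncard ≤ 3
    · exact op_small hsmall
    push_neg at hsmall
    by_cases hs1 : Sep1 G S
    · obtain ⟨A, B, hU, hsub, hcross, hAne, hBne⟩ := hs1
      have hAS : A ⊆ S := by rw [← hU]; exact Set.subset_union_left
      have hBS : B ⊆ S := by rw [← hU]; exact Set.subset_union_right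
      have hAcard : A.ncard ≤ n := by
        have := Set.ncard_lt_ncard (Set.ssubset_iff_subset_ne.mpr ⟨hAS, hAne⟩) S.toFinite
        omega
      have hBcard : B.ncard ≤ n := by
        have := Set.ncard_lt_ncard (Set.ssubset_iff_subset_ne.mpr ⟨hBS, hBne⟩) S.toFinite
        omega
      have hopA := ih G A hAcard (fun h => h4 (h.mono hAS)) (fun h => h23 (h.mono hAS))
      have hopB := ih G B hBcard (fun h => h4 (h.mono hBS)) (fun h => h23 (h.mono hBS))
      rcases hsub.eq_empty_or_singleton with he | ⟨c, hc⟩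
      · have hd : Disjoint A B := by rw [Set.disjoint_iff_inter_eq_empty]; exact he
        have hnoe : ∀ a ∈ A, ∀ b ∈ B, ¬G.Adj a b := by
          intro a ha b hb
          exact hcross a ⟨ha, Set.disjoint_left.mp hd ha⟩ b ⟨hb, Set.disjoint_right.mp hd hb⟩
        have := glue_disjoint hd hnoe hopA hopB
        rwa [hU] at this
      · have := glue_cut (c := c) hc hcross hopA hopB
        rwa [hU] at this
    by_cases hs2 : Sep2 G S
    · obtain ⟨A, B, x, y, hxy, hU, hI, hcross, hAne, hBne⟩ := hs2
      have hAS : A ⊆ S := by rw [← hU]; exact Set.subset_union_left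
      have hBS : B ⊆ S := by rw [← hU]; exact Set.subset_union_right
      have hAcard : A.ncard ≤ n := by
        have := Set.ncard_lt_ncard (Set.ssubset_iff_subset_ne.mpr ⟨hAS, hAne⟩) S.toFinite
        omega
      have hBcard : B.ncard ≤ n := by
        have := Set.ncard_lt_ncard (Set.ssubset_iff_subset_ne.mpr ⟨hBS, hBne⟩) S.toFinite
        omega
      have hcross' : ∀ a ∈ B \ A, ∀ b ∈ A \ B, ¬G.Adj a b :=
        fun a ha b hb h => hcross b hb a ha h.symm
      have hopA : ∃ p, Set.InjOn p A ∧ NCon (addE G x y) A p :=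
        ih (addE G x y) A hAcard
          (fun h => h4 (side_minor_free hs1 hxy hU hI hcross hAne h))
          (fun h => h23 (side_minor_free hs1 hxy hU hI hcross hAne h))
      have hopB : ∃ p, Set.InjOn p B ∧ NCon (addE G x y) B p :=
        ih (addE G x y) B hBcard
          (fun h => h4 (side_minor_free hs1 hxy (by rw [Set.union_comm]; exact hU)
            (by rw [Set.inter_comm]; exact hI) hcross' hBne h))
          (fun h => h23 (side_minor_free hs1 hxy (by rw [Set.union_comm]; exact hU)
            (by rw [Set.inter_comm]; exact hI) hcross' hBne h))
      exact case_c hs1 hxy hU hI hcross hAne hBne hopA hopB h23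
    · -- no small separation: extract a K4 minor, contradiction
      have hSne : S.Nonempty := by
        rw [← Set.ncard_pos S.toFinite]
        omega
      obtain ⟨v, hv⟩ := hSne
      obtain ⟨a, b, c, haS, hbS, hcS, hab, hac, hbc, hva, hvb, hvc⟩ :=
        deg3 hs1 hs2 (by omega) hv
      have hns1' : ¬Sep1 G (S \ {v}) := by
        intro h
        rcases sep1_lift hv h with h' | h'
        · exact hs1 h'
        · exact hs2 h'
      have hScard : (S \ {v}).ncard ≤ n := by
        have h1 : (S \ {v}).ncard = S.ncard - 1 :=
          Set.ncard_diff_singleton_of_mem hv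
        omega
      have hop' := ih G (S \ {v}) hScard
        (fun h => h4 (h.mono Set.diff_subset)) (fun h => h23 (h.mono Set.diff_subset))
      exact absurd (case_d_minor hv hns1' haS hbS hcS hab hac hbc hva hvb hvc hop') h4

end Converse

end OPF

/-- A finite graph is outerplanar if and only if it contains neither `K₄` nor
`K_{2,3}` as a minor. -/
theorem outerplanar_iff_no_K4_K23_minor {V : Type} [Fintype V] (G : SimpleGraph V) :
    IsOuterplanar G ↔
      ¬ IsMinorOf (⊤ : SimpleGraph (Fin 4)) G ∧
      ¬ IsMinorOf (completeBipartiteGraph (Fin 2) (Fin 3)) G := by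
  constructor
  · intro hop
    have hop' : OPF.OPon G Set.univ := by
      obtain ⟨p, hinj, hnc⟩ := hop
      exact ⟨p, fun u _ v _ h => hinj h,
        fun a b c d _ _ _ _ hab hcd => hnc a b c d hab hcd⟩
    constructor <;> intro hm
    · exact OPF.not_op_K4
        (OPF.minorOn_isOuterplanar (OPF.minorOn_of_isMinorOf hm) hop')
    · exact OPF.not_op_K23
        (OPF.minorOn_isOuterplanar (OPF.minorOn_of_isMinorOf hm) hop')
  · rintro ⟨h4, h23⟩
    have hcard : (Set.univ : Set V).ncard ≤ Fintype.card V := by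
      rw [Set.ncard_univ, Nat.card_eq_fintype_card]
    obtain ⟨p, hinj, hnc⟩ := OPF.conv (Fintype.card V) G Set.univ hcard
      (fun h => h4 (OPF.isMinorOf_of_minorOn h))
      (fun h => h23 (OPF.isMinorOf_of_minorOn h))
    exact ⟨p, fun u v h => hinj trivial trivial h,
      fun a b c d hab hcd => hnc a b c d trivial trivial trivial trivial hab hcd⟩
end

section
/- A dissection of a convex polygon that has an inner edge fixed (as a set of two vertices) by some nontrivial automorphism has at most one such edge; i.e., a dissection has at most one symmetry-edge. -/
namespace DissectionAux

open Fin.NatCast Fin.CommRing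

variable {n : ℕ}

lemma one_val [NeZero n] (hn : 2 ≤ n) : ((1 : Fin n) : ℕ) = 1 := by
  have h : ((1 : ℕ) : Fin n) = (1 : Fin n) := Nat.cast_one
  rw [← h, Fin.val_natCast, Nat.mod_eq_of_lt (by omega)]

lemma val_sub [NeZero n] (a b : Fin n) (h : b ≤ a) :
    ((a - b : Fin n) : ℕ) = (a : ℕ) - (b : ℕ) := by
  have ha := a.isLt
  have hb := b.isLt
  have hle : (b : ℕ) ≤ (a : ℕ) := Fin.le_def.mp h
  rw [Fin.sub_def]
  simp only
  have : n - (b : ℕ) + (a : ℕ) = n + ((a : ℕ) - (b : ℕ)) := by omega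
  rw [this, Nat.add_mod_left, Nat.mod_eq_of_lt (by omega)]

lemma adj_succ [NeZero n] (hn : 2 ≤ n) {G : SimpleGraph (Fin n)}
    (hcyc : ∀ i j : Fin n, ((i : ℕ) + 1) % n = (j : ℕ) → G.Adj i j) (i : Fin n) :
    G.Adj i (i + 1) := by
  apply hcyc
  rw [Fin.val_add, one_val hn]

/-- Core separation lemma: the image of the boundary cycle under an automorphism
cannot use an inner chord. -/
lemma no_chord [NeZero n] (hn : 4 ≤ n) {G : SimpleGraph (Fin n)}
    (hcyc : ∀ i j : Fin n, ((i : ℕ) + 1) % n = (j : ℕ) → G.Adj i j)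
    (hnc : ∀ a b c d : Fin n, G.Adj a b → G.Adj c d → ¬(a < c ∧ c < b ∧ b < d))
    (φ : G ≃g G) (i : Fin n) (x y : Fin n) (hxy : x < y)
    (hmem : (x = φ i ∧ y = φ (i + 1)) ∨ (x = φ (i + 1) ∧ y = φ i))
    (hin : (x : ℕ) + 2 ≤ (y : ℕ)) (hout : ¬((x : ℕ) = 0 ∧ (y : ℕ) = n - 1)) :
    False := by
  have hylt := y.isLt
  have hxlt := x.isLt
  have hxyv : (x : ℕ) < (y : ℕ) := Fin.lt_def.mp hxy
  have hadjsucc : ∀ k : Fin n, G.Adj k (k + 1) := adj_succ (by omega) hcyc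
  have hadjxy : G.Adj x y := by
    rcases hmem with ⟨hx', hy'⟩ | ⟨hx', hy'⟩
    · rw [hx', hy']; exact φ.map_adj_iff.mpr (hadjsucc i)
    · rw [hx', hy']; exact (φ.map_adj_iff.mpr (hadjsucc i)).symm
  have sep : ∀ p q : Fin n, G.Adj p q → x < p → p < y → ¬(q < x ∨ y < q) := by
    intro p q hpq h1 h2 h
    rcases h with h | h
    · exact hnc q p x y hpq.symm hadjxy ⟨h, h1, h2⟩
    · exact hnc x y p q hadjxy hpq ⟨h1, h2, h⟩
  let p : ℕ → Fin n := fun j => φ (i + 1 + (j : Fin n))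
  have hpdef : ∀ j : ℕ, p j = φ (i + 1 + (j : Fin n)) := fun _ => rfl
  have hp0 : p 0 = φ (i + 1) := by rw [hpdef]; norm_num
  have hcastlast : ((n - 1 : ℕ) : Fin n) = -1 := by
    rw [Nat.cast_sub (by omega : 1 ≤ n), Fin.natCast_self, Nat.cast_one]
    ring
  have hplast : p (n - 1) = φ i := by
    rw [hpdef, hcastlast]
    congr 1
    ring
  have hadjp : ∀ j : ℕ, G.Adj (p j) (p (j + 1)) := by
    intro j
    have hc : ((j + 1 : ℕ) : Fin n) = (j : Fin n) + 1 := by push_cast; ring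
    have h2 : p (j + 1) = φ (i + 1 + (j : Fin n) + 1) := by
      rw [hpdef, hc]; congr 1; ring
    rw [h2, hpdef]
    exact φ.map_adj_iff.mpr (hadjsucc _)
  have hinj : ∀ j k : ℕ, j < n → k < n → p j = p k → j = k := by
    intro j k hj hk he
    rw [hpdef, hpdef] at he
    have h1 := φ.injective he
    have h2 : ((j : ℕ) : Fin n) = ((k : ℕ) : Fin n) := add_left_cancel h1
    have h3 := congrArg Fin.val h2
    rwa [Fin.val_natCast, Fin.val_natCast, Nat.mod_eq_of_lt hj, Nat.mod_eq_of_lt hk] at h3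
  have hsurj : ∀ w : Fin n, ∃ j : ℕ, j < n ∧ p j = w := by
    intro w
    refine ⟨(φ.symm w - (i + 1)).val, (φ.symm w - (i + 1)).isLt, ?_⟩
    rw [hpdef, Fin.cast_val_eq_self]
    have : i + 1 + (φ.symm w - (i + 1)) = φ.symm w := by ring
    rw [this]
    exact φ.apply_symm_apply w
  -- internal vertices avoid the endpoints x, y
  have hnotend : ∀ w : Fin n, w ≠ x → w ≠ y → ∀ j, j < n → p j = w →
      0 < j ∧ j < n - 1 := by
    intro w hwx hwy j hjn hpj
    constructor
    · rcases Nat.eq_zero_or_pos j with h | h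
      · exfalso
        subst h
        rw [hp0] at hpj
        rcases hmem with ⟨hx', hy'⟩ | ⟨hx', hy'⟩
        · exact hwy (hy'.trans hpj).symm
        · exact hwx (hx'.trans hpj).symm
      · exact h
    · by_contra hj
      have hj' : j = n - 1 := by omega
      subst hj'
      rw [hplast] at hpj
      rcases hmem with ⟨hx', hy'⟩ | ⟨hx', hy'⟩
      · exact hwx (hx'.trans hpj).symm
      · exact hwy (hy'.trans hpj).symm
  have hends : ∀ j : ℕ, 0 < j → j < n - 1 → p j ≠ x ∧ p j ≠ y := by
    intro j h1 h2
    constructor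
    · intro he
      rcases hmem with ⟨hx', hy'⟩ | ⟨hx', hy'⟩
      · have : j = n - 1 := hinj j (n - 1) (by omega) (by omega) (by rw [he, hplast, ← hx'])
        omega
      · have : j = 0 := hinj j 0 (by omega) (by omega) (by rw [he, hp0, ← hx'])
        omega
    · intro he
      rcases hmem with ⟨hx', hy'⟩ | ⟨hx', hy'⟩
      · have : j = 0 := hinj j 0 (by omega) (by omega) (by rw [he, hp0, ← hy'])
        omega
      · have : j = n - 1 := hinj j (n - 1) (by omega) (by omega) (by rw [he, hplast, ← hy'])
        omega
  have htri : ∀ j : ℕ, 0 < j → j < n - 1 →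
      ((x < p j ∧ p j < y) ∨ (p j < x ∨ y < p j)) := by
    intro j h1 h2
    obtain ⟨hne1, hne2⟩ := hends j h1 h2
    rcases lt_trichotomy (p j) x with h | h | h
    · exact Or.inr (Or.inl h)
    · exact absurd h hne1
    · rcases lt_trichotomy (p j) y with h' | h' | h'
      · exact Or.inl ⟨h, h'⟩
      · exact absurd h' hne2
      · exact Or.inr (Or.inr h')
  have hstepiff : ∀ j : ℕ, 0 < j → j + 1 < n - 1 →
      ((x < p j ∧ p j < y) ↔ (x < p (j + 1) ∧ p (j + 1) < y)) := by
    intro j h1 h2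
    constructor
    · intro hS
      rcases htri (j + 1) (by omega) h2 with h | h
      · exact h
      · exact absurd h (sep (p j) (p (j + 1)) (hadjp j) hS.1 hS.2)
    · intro hS
      rcases htri j h1 (by omega) with h | h
      · exact h
      · exact absurd h (sep (p (j + 1)) (p j) (hadjp j).symm hS.1 hS.2)
  have huni : ∀ j : ℕ, 1 ≤ j → j < n - 1 →
      ((x < p j ∧ p j < y) ↔ (x < p 1 ∧ p 1 < y)) := by
    intro j hj
    induction j, hj using Nat.le_induction with
    | base => intro _; exact Iff.rfl
    | succ j hj ih =>
      intro h2
      rw [← hstepiff j (by omega) (by omega)]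
      exact ih (by omega)
  -- a vertex strictly inside (x, y)
  have hwslt : (x : ℕ) + 1 < n := by omega
  set ws : Fin n := ⟨(x : ℕ) + 1, hwslt⟩ with hws
  have hwsS : x < ws ∧ ws < y := by
    constructor
    · rw [Fin.lt_def]; simp [hws]
    · rw [Fin.lt_def]; simp [hws]; omega
  -- a vertex strictly outside [x, y]
  obtain ⟨wt, hwtT⟩ : ∃ wt : Fin n, wt < x ∨ y < wt := by
    by_cases hx0 : (x : ℕ) = 0
    · have hy' : (y : ℕ) < n - 1 := by
        rcases Nat.lt_or_ge (y : ℕ) (n - 1) with h | h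
        · exact h
        · exact absurd ⟨hx0, by omega⟩ hout
      exact ⟨⟨n - 1, by omega⟩, Or.inr (by rw [Fin.lt_def]; simpa using hy')⟩
    · exact ⟨⟨0, by omega⟩, Or.inl (by rw [Fin.lt_def]; show (0 : ℕ) < (x : ℕ); omega)⟩
  obtain ⟨j1, hj1n, hj1⟩ := hsurj ws
  obtain ⟨j2, hj2n, hj2⟩ := hsurj wt
  have hj1int := hnotend ws (by exact fun h => absurd (h ▸ hwsS.1) (lt_irrefl x))
    (by exact fun h => absurd (h ▸ hwsS.2) (lt_irrefl y)) j1 hj1n hj1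
  have hwtnx : wt ≠ x := by
    rcases hwtT with h | h
    · exact ne_of_lt h
    · intro he; subst he; exact absurd (hxy.trans h) (lt_irrefl _)
  have hwtny : wt ≠ y := by
    rcases hwtT with h | h
    · intro he; subst he; exact absurd (h.trans hxy) (lt_irrefl _)
    · exact (ne_of_lt h).symm
  have hj2int := hnotend wt hwtnx hwtny j2 hj2n hj2
  have hS1 : x < p 1 ∧ p 1 < y := by
    rw [← huni j1 hj1int.1 hj1int.2, hj1]
    exact hwsS
  have hS2 : ¬(x < p 1 ∧ p 1 < y) := by
    rw [← huni j2 hj2int.1 hj2int.2, hj2]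
    rintro ⟨ha, hb⟩
    rcases hwtT with h | h
    · exact absurd (h.trans ha) (lt_irrefl _)
    · exact absurd (hb.trans h) (lt_irrefl _)
  exact hS2 hS1

/-- Each boundary step is mapped by an automorphism to a boundary step. -/
lemma step_pm [NeZero n] (hn : 4 ≤ n) {G : SimpleGraph (Fin n)}
    (hcyc : ∀ i j : Fin n, ((i : ℕ) + 1) % n = (j : ℕ) → G.Adj i j)
    (hnc : ∀ a b c d : Fin n, G.Adj a b → G.Adj c d → ¬(a < c ∧ c < b ∧ b < d))
    (φ : G ≃g G) (i : Fin n) :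
    φ (i + 1) = φ i + 1 ∨ φ i = φ (i + 1) + 1 := by
  have hone : ((1 : Fin n) : ℕ) = 1 := one_val (by omega)
  have hne : φ i ≠ φ (i + 1) := by
    intro h
    have h1 := φ.injective h
    have h0 : (0 : Fin n) = 1 := add_left_cancel (a := i) (by rw [add_zero]; exact h1)
    have h2 := congrArg Fin.val h0
    rw [hone] at h2
    simp at h2
  by_contra hcon
  push_neg at hcon
  obtain ⟨hc1, hc2⟩ := hcon
  have hia := (φ i).isLt
  have hib := (φ (i + 1)).isLt
  rcases hne.lt_or_gt with hlt | hlt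
  · refine no_chord hn hcyc hnc φ i (φ i) (φ (i + 1)) hlt (Or.inl ⟨rfl, rfl⟩) ?_ ?_
    · by_contra hc
      apply hc1
      apply Fin.ext
      rw [Fin.val_add, hone, Nat.mod_eq_of_lt (by omega)]
      have := Fin.lt_def.mp hlt
      omega
    · rintro ⟨ha, hb⟩
      apply hc2
      apply Fin.ext
      rw [Fin.val_add, hone, hb, ha]
      have h3 : n - 1 + 1 = n := by omega
      rw [h3, Nat.mod_self]
  · refine no_chord hn hcyc hnc φ i (φ (i + 1)) (φ i) hlt (Or.inr ⟨rfl, rfl⟩) ?_ ?_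
    · by_contra hc
      apply hc2
      apply Fin.ext
      rw [Fin.val_add, hone, Nat.mod_eq_of_lt (by omega)]
      have := Fin.lt_def.mp hlt
      omega
    · rintro ⟨ha, hb⟩
      apply hc1
      apply Fin.ext
      rw [Fin.val_add, hone, hb, ha]
      have h3 : n - 1 + 1 = n := by omega
      rw [h3, Nat.mod_self]

/-- An automorphism is a rotation or a reflection of the boundary cycle. -/
lemma sign [NeZero n] (hn : 4 ≤ n) {G : SimpleGraph (Fin n)}
    (hcyc : ∀ i j : Fin n, ((i : ℕ) + 1) % n = (j : ℕ) → G.Adj i j)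
    (hnc : ∀ a b c d : Fin n, G.Adj a b → G.Adj c d → ¬(a < c ∧ c < b ∧ b < d))
    (φ : G ≃g G) :
    (∀ i : Fin n, φ (i + 1) = φ i + 1) ∨ (∀ i : Fin n, φ i = φ (i + 1) + 1) := by
  have hone : ((1 : Fin n) : ℕ) = 1 := one_val (by omega)
  have two_ne : ∀ i : Fin n, i + 1 + 1 ≠ i := by
    intro i h
    have h2 := congrArg Fin.val h
    rw [Fin.val_add, Fin.val_add, hone] at h2
    have hi := i.isLt
    rcases Nat.lt_or_ge (i.val + 1) n with hc | hc
    · rw [Nat.mod_eq_of_lt hc] at h2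
      rcases Nat.lt_or_ge (i.val + 1 + 1) n with hc2 | hc2
      · rw [Nat.mod_eq_of_lt hc2] at h2; omega
      · have h3 : i.val + 1 + 1 = n := by omega
        rw [h3, Nat.mod_self] at h2; omega
    · have h3 : i.val + 1 = n := by omega
      rw [h3, Nat.mod_self, Nat.mod_eq_of_lt (by omega)] at h2
      omega
  have key : ∀ i : Fin n, φ (i + 1) = φ i + 1 → φ (i + 1 + 1) = φ (i + 1) + 1 := by
    intro i h
    rcases step_pm hn hcyc hnc φ (i + 1) with h' | h'
    · exact h'
    · exfalso
      have h3 : φ (i + 1 + 1) = φ i := add_right_cancel (h'.symm.trans h)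
      exact two_ne i (φ.injective h3)
  have key' : ∀ i : Fin n, φ i = φ (i + 1) + 1 → φ (i + 1) = φ (i + 1 + 1) + 1 := by
    intro i h
    rcases step_pm hn hcyc hnc φ (i + 1) with h' | h'
    · exfalso
      have h3 : φ (i + 1 + 1) = φ i := by rw [h', ← h]
      exact two_ne i (φ.injective h3)
    · exact h'
  rcases step_pm hn hcyc hnc φ 0 with h0 | h0
  · left
    have hall : ∀ j : ℕ, φ ((j : Fin n) + 1) = φ (j : Fin n) + 1 := by
      intro j
      induction j with
      | zero => simpa using h0
      | succ j ih =>
        have hc : ((j + 1 : ℕ) : Fin n) = (j : Fin n) + 1 := by push_cast; ring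
        rw [hc]
        exact key _ ih
    intro i
    have := hall i.val
    rwa [Fin.cast_val_eq_self] at this
  · right
    have hall : ∀ j : ℕ, φ (j : Fin n) = φ ((j : Fin n) + 1) + 1 := by
      intro j
      induction j with
      | zero => simpa using h0
      | succ j ih =>
        have hc : ((j + 1 : ℕ) : Fin n) = (j : Fin n) + 1 := by push_cast; ring
        rw [hc]
        exact key' _ ih
    intro i
    have := hall i.val
    rwa [Fin.cast_val_eq_self] at this

lemma rot_form [NeZero n] {G : SimpleGraph (Fin n)} (φ : G ≃g G)
    (h : ∀ i : Fin n, φ (i + 1) = φ i + 1) : ∀ i : Fin n, φ i = φ 0 + i := by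
  have hall : ∀ j : ℕ, φ (j : Fin n) = φ 0 + (j : Fin n) := by
    intro j
    induction j with
    | zero => simp
    | succ j ih =>
      have hc : ((j + 1 : ℕ) : Fin n) = (j : Fin n) + 1 := by push_cast; ring
      rw [hc, h, ih, add_assoc]
  intro i
  have := hall i.val
  rwa [Fin.cast_val_eq_self] at this

lemma refl_form [NeZero n] {G : SimpleGraph (Fin n)} (φ : G ≃g G)
    (h : ∀ i : Fin n, φ i = φ (i + 1) + 1) : ∀ i : Fin n, φ i = φ 0 - i := by
  have hall : ∀ j : ℕ, φ (j : Fin n) = φ 0 - (j : Fin n) := by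
    intro j
    induction j with
    | zero => simp
    | succ j ih =>
      have hc : ((j + 1 : ℕ) : Fin n) = (j : Fin n) + 1 := by push_cast; ring
      have hstep : φ ((j : Fin n) + 1) = φ (j : Fin n) - 1 :=
        eq_sub_of_add_eq (h (j : Fin n)).symm
      rw [hc, hstep, ih, sub_sub]
  intro i
  have := hall i.val
  rwa [Fin.cast_val_eq_self] at this

/-- A symmetry-edge is a diameter: `2 * (v - u) = n`. -/
lemma diam [NeZero n] (hn : 4 ≤ n) {G : SimpleGraph (Fin n)}
    (hcyc : ∀ i j : Fin n, ((i : ℕ) + 1) % n = (j : ℕ) → G.Adj i j)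
    (hnc : ∀ a b c d : Fin n, G.Adj a b → G.Adj c d → ¬(a < c ∧ c < b ∧ b < d))
    (u v : Fin n) (huv : u < v) (hin : (u : ℕ) + 2 ≤ (v : ℕ))
    (sym : ∃ φ : G ≃g G,
      ((φ u = u ∧ φ v = v) ∨ (φ u = v ∧ φ v = u)) ∧
      ∀ w : Fin n, u < w → w < v → (φ w < u ∨ v < φ w)) :
    2 * ((v : ℕ) - (u : ℕ)) = n := by
  obtain ⟨φ, hfix, hside⟩ := sym
  have hone : ((1 : Fin n) : ℕ) = 1 := one_val (by omega)
  have hvlt := v.isLt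
  have hult := u.isLt
  have hdd : (v - u) + (v - u) = (0 : Fin n) → 2 * ((v : ℕ) - (u : ℕ)) = n := by
    intro h
    have hsub : ((v - u : Fin n) : ℕ) = (v : ℕ) - (u : ℕ) := val_sub v u huv.le
    have h2 := congrArg Fin.val h
    rw [Fin.val_add, hsub, Fin.val_zero] at h2
    rcases Nat.lt_or_ge (((v : ℕ) - (u : ℕ)) + ((v : ℕ) - (u : ℕ))) n with hc | hc
    · rw [Nat.mod_eq_of_lt hc] at h2; omega
    · rw [Nat.mod_eq_sub_mod hc, Nat.mod_eq_of_lt (by omega)] at h2; omega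
  rcases sign hn hcyc hnc φ with hsgn | hsgn
  · have hform := rot_form φ hsgn
    rcases hfix with ⟨hu, hv⟩ | ⟨hu, hv⟩
    · exfalso
      have h0 : φ 0 = 0 := by
        have h1 := hform u
        rw [hu] at h1
        have h2 : φ 0 + u = 0 + u := by rw [← h1, zero_add]
        exact add_right_cancel h2
      set w : Fin n := ⟨(u : ℕ) + 1, by omega⟩ with hwdef
      have hw1 : u < w := by rw [Fin.lt_def]; simp [hwdef]
      have hw2 : w < v := by rw [Fin.lt_def]; simp [hwdef]; omega
      have hww : φ w = w := by rw [hform w, h0, zero_add]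
      rcases hside w hw1 hw2 with h | h
      · rw [hww] at h; exact absurd hw1 (lt_asymm h)
      · rw [hww] at h; exact absurd hw2 (lt_asymm h)
    · apply hdd
      have hfu := hform u
      rw [hu] at hfu
      have hfv := hform v
      rw [hv] at hfv
      have e1 : φ 0 = v - u := by rw [eq_sub_iff_add_eq]; exact hfu.symm
      have e2 : φ 0 = u - v := by rw [eq_sub_iff_add_eq]; exact hfv.symm
      calc (v - u) + (v - u) = (u - v) + (v - u) := by rw [← e1, ← e2]
        _ = 0 := by ring
  · have hform := refl_form φ hsgn
    rcases hfix with ⟨hu, hv⟩ | ⟨hu, hv⟩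
    · apply hdd
      have hfu := hform u
      rw [hu] at hfu
      have hfv := hform v
      rw [hv] at hfv
      rw [eq_sub_iff_add_eq] at hfu hfv
      calc (v - u) + (v - u) = (v + v) - (u + u) := by ring
        _ = 0 := by rw [hfv, ← hfu, sub_self]
    · exfalso
      have hfu := hform u
      rw [hu] at hfu
      rw [eq_sub_iff_add_eq] at hfu
      set w : Fin n := ⟨(v : ℕ) - 1, by omega⟩ with hwdef
      have hw1 : u < w := by rw [Fin.lt_def]; simp [hwdef]; omega
      have hw2 : w < v := by rw [Fin.lt_def]; show (v : ℕ) - 1 < (v : ℕ); omega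
      have hvw : v - w = 1 := by
        apply Fin.ext
        rw [val_sub v w hw2.le, hone]
        simp [hwdef]
        omega
      have hww : φ w = u + 1 := by
        rw [hform w, ← hfu]
        have h3 : v + u - w = u + (v - w) := by ring
        rw [h3, hvw]
      have hwwv : ((φ w : Fin n) : ℕ) = (u : ℕ) + 1 := by
        rw [hww, Fin.val_add, hone, Nat.mod_eq_of_lt (by omega)]
      rcases hside w hw1 hw2 with h | h
      · rw [Fin.lt_def, hwwv] at h; omega
      · rw [Fin.lt_def, hwwv] at h; omega

end DissectionAux

/-- A dissection of a convex polygon has at most one symmetry-edge.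

A dissection is modelled as a graph `G` on the vertices `0, …, n−1` of a convex
polygon which contains the boundary cycle (`hcyc`) and whose edges, drawn as
chords in the given circular order, are pairwise noncrossing (`hnc`).  An
inner edge (chord) `{u,v}` with `u < v` is a symmetry-edge when some graph
automorphism `φ` fixes `{u,v}` setwise and exchanges the two sides of the
chord (every vertex strictly between `u` and `v` is sent to the other side).
Any two symmetry-edges coincide. -/
theorem dissection_at_most_one_symmetry_edge (n : ℕ) (G : SimpleGraph (Fin n))
    (hcyc : ∀ i j : Fin n, ((i : ℕ) + 1) % n = (j : ℕ) → G.Adj i j)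
    (hnc : ∀ a b c d : Fin n, G.Adj a b → G.Adj c d → ¬(a < c ∧ c < b ∧ b < d))
    (u₁ v₁ u₂ v₂ : Fin n) (h₁ : u₁ < v₁) (h₂ : u₂ < v₂)
    (e₁ : G.Adj u₁ v₁) (e₂ : G.Adj u₂ v₂)
    (inner₁ : ((u₁ : ℕ) + 1) % n ≠ (v₁ : ℕ) ∧ ((v₁ : ℕ) + 1) % n ≠ (u₁ : ℕ))
    (inner₂ : ((u₂ : ℕ) + 1) % n ≠ (v₂ : ℕ) ∧ ((v₂ : ℕ) + 1) % n ≠ (u₂ : ℕ))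
    (sym₁ : ∃ φ : G ≃g G,
      ((φ u₁ = u₁ ∧ φ v₁ = v₁) ∨ (φ u₁ = v₁ ∧ φ v₁ = u₁)) ∧
      ∀ w : Fin n, u₁ < w → w < v₁ → (φ w < u₁ ∨ v₁ < φ w))
    (sym₂ : ∃ φ : G ≃g G,
      ((φ u₂ = u₂ ∧ φ v₂ = v₂) ∨ (φ u₂ = v₂ ∧ φ v₂ = u₂)) ∧
      ∀ w : Fin n, u₂ < w → w < v₂ → (φ w < u₂ ∨ v₂ < φ w)) :
    u₁ = u₂ ∧ v₁ = v₂ := by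
  have hu1 := u₁.isLt
  have hv1 := v₁.isLt
  have hu2 := u₂.isLt
  have hv2 := v₂.isLt
  have h₁' : (u₁ : ℕ) < (v₁ : ℕ) := Fin.lt_def.mp h₁
  have h₂' : (u₂ : ℕ) < (v₂ : ℕ) := Fin.lt_def.mp h₂
  have hin1 : (u₁ : ℕ) + 2 ≤ (v₁ : ℕ) := by
    have h := inner₁.1
    rw [Nat.mod_eq_of_lt (by omega)] at h
    omega
  have hin2 : (u₂ : ℕ) + 2 ≤ (v₂ : ℕ) := by
    have h := inner₂.1
    rw [Nat.mod_eq_of_lt (by omega)] at h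
    omega
  have hn4 : 4 ≤ n := by
    by_contra hcon
    have hsp : (u₁ : ℕ) = 0 ∧ (v₁ : ℕ) = 2 ∧ n = 3 := by omega
    obtain ⟨e0, e2', e3⟩ := hsp
    have h := inner₁.2
    rw [e0, e2', e3] at h
    norm_num at h
  haveI : NeZero n := ⟨by omega⟩
  have d1 := DissectionAux.diam hn4 hcyc hnc u₁ v₁ h₁ hin1 sym₁
  have d2 := DissectionAux.diam hn4 hcyc hnc u₂ v₂ h₂ hin2 sym₂
  rcases lt_trichotomy (u₁ : ℕ) (u₂ : ℕ) with hlt | heq | hlt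
  · exfalso
    exact hnc u₁ v₁ u₂ v₂ e₁ e₂
      ⟨Fin.lt_def.mpr hlt, Fin.lt_def.mpr (by omega), Fin.lt_def.mpr (by omega)⟩
  · refine ⟨Fin.ext heq, Fin.ext ?_⟩
    omega
  · exfalso
    exact hnc u₂ v₂ u₁ v₁ e₂ e₁
      ⟨Fin.lt_def.mpr hlt, Fin.lt_def.mpr (by omega), Fin.lt_def.mpr (by omega)⟩
end
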